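/- arXiv:1811.04978 — 10 statements merged into one kernel-verified Lean document; each statement's English description precedes it below -/
import Mathlib

section
/- Let p ≥ 1 and ω a primitive p-th root of unity. Then 1 - ∏_{j=1}^{p} (1 - ω^j x + ω^{j(p-1)} y) = x^p + (-1)^p y^p - ∑_{j=1}^{⌊p/2⌋} k_j x^j y^j for some positive real coefficients k_j. -/
/-!
Put `u_j = ω ^ j * x`. Since `u_j * (ω ^ (j * (p - 1)) * y) = x * y`, each factor satisfies
`-u_j * (1 - u_j + ω ^ (j * (p - 1)) * y) = (a - u_j) * (b - u_j)`, where `a, b` are the roots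
of `T ^ 2 - T - x * y` in an algebraic closure of the fraction field. As
`∏ j, (T - u_j) = T ^ p - x ^ p`, the product over `j` gives
`-x ^ p * ∏ = (a ^ p - x ^ p) * (b ^ p - x ^ p)`, so `∏ = a ^ p + b ^ p - x ^ p - (-1) ^ p * y ^ p`.
Finally `a ^ n + b ^ n = L_n(x * y)` for the Lucas polynomials `L_n`, whose coefficients are
positive integers in degrees `0, …, n / 2`, with constant term `1` for `n ≥ 1`.
-/

open Finset

section Lucas

open Polynomial

noncomputable def lucas : ℕ → ℕ[X]
  | 0 => 2
  | 1 => 1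
  | n + 2 => lucas (n + 1) + X * lucas n

theorem lucas_add_two (n : ℕ) : lucas (n + 2) = lucas (n + 1) + X * lucas n := rfl

theorem coeff_lucas_add_two_succ (n j : ℕ) :
    (lucas (n + 2)).coeff (j + 1) = (lucas (n + 1)).coeff (j + 1) + (lucas n).coeff j := by
  simp [lucas_add_two, coeff_X_mul]

theorem coeff_lucas_add_two_zero (n : ℕ) :
    (lucas (n + 2)).coeff 0 = (lucas (n + 1)).coeff 0 := by
  simp [lucas_add_two]

theorem coeff_lucas_zero : ∀ {n : ℕ}, n ≠ 0 → (lucas n).coeff 0 = 1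
  | 1, _ => by simp [lucas]
  | n + 2, _ => by rw [coeff_lucas_add_two_zero, coeff_lucas_zero n.succ_ne_zero]

theorem coeff_lucas_pos : ∀ {n j : ℕ}, 2 * j ≤ n → 0 < (lucas n).coeff j
  | 0, 0, _ => by simp [lucas]
  | 1, 0, _ => by simp [lucas]
  | n + 2, 0, _ => by
      rw [coeff_lucas_add_two_zero]
      exact coeff_lucas_pos (by omega)
  | n + 2, j + 1, _ => by
      rw [coeff_lucas_add_two_succ]
      exact Nat.add_pos_right _ (coeff_lucas_pos (by omega))

theorem natDegree_lucas_le : ∀ n : ℕ, (lucas n).natDegree ≤ n / 2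
  | 0 => by simp [lucas]
  | 1 => by simp [lucas]
  | n + 2 => by
      have ih := natDegree_lucas_le n
      rw [lucas_add_two]
      refine natDegree_add_le_of_degree_le ((natDegree_lucas_le (n + 1)).trans (by omega)) ?_
      exact natDegree_mul_le.trans (by rw [natDegree_X]; omega)

theorem pow_add_pow_eq_eval₂_lucas {R : Type*} [CommRing R] {a b t : R} (hsum : a + b = 1)
    (hprod : a * b = -t) : ∀ n : ℕ, a ^ n + b ^ n = (lucas n).eval₂ (Nat.castRingHom R) t
  | 0 => by norm_num [lucas]
  | 1 => by simp [lucas, hsum]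
  | n + 2 => by
      rw [lucas_add_two, eval₂_add, eval₂_mul, eval₂_X, ← pow_add_pow_eq_eval₂_lucas hsum hprod n,
        ← pow_add_pow_eq_eval₂_lucas hsum hprod (n + 1)]
      linear_combination (a ^ (n + 1) + b ^ (n + 1)) * hsum - (a ^ n + b ^ n) * hprod

theorem eval₂_lucas_eq_one_add_sum {R : Type*} [Semiring R] {n : ℕ} (hn : n ≠ 0) (t : R) :
    (lucas n).eval₂ (Nat.castRingHom R) t
      = 1 + ∑ j ∈ Icc 1 (n / 2), ((lucas n).coeff j : R) * t ^ j := by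
  rw [eval₂_eq_sum_range' _ (Nat.lt_add_one_iff.mpr (natDegree_lucas_le n)),
    Nat.range_succ_eq_Icc_zero, ← add_sum_Ioc_eq_sum_Icc (Nat.zero_le _),
    ← Icc_add_one_left_eq_Ioc, zero_add, coeff_lucas_zero hn]
  simp

end Lucas

theorem Finset.prod_Icc_one_eq_prod_range {M : Type*} [CommMonoid M] {f : ℕ → M} {n : ℕ}
    (h : f n = f 0) : ∏ j ∈ Icc 1 n, f j = ∏ j ∈ range n, f j := by
  rcases n with _ | n
  · simp
  rw [prod_range_succ', ← h, prod_Icc_succ_top (by omega), range_eq_Ico, prod_Ico_add', zero_add,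
    Ico_add_one_right_eq_Icc]

namespace IsPrimitiveRoot

variable {R : Type*} [CommRing R] [IsDomain R] {p : ℕ} {ω : R}

theorem prod_Icc_sub_pow_mul_eq_pow_sub_pow (hω : IsPrimitiveRoot ω p) (hp : 0 < p) (a x : R) :
    ∏ j ∈ Icc 1 p, (a - ω ^ j * x) = a ^ p - x ^ p := by
  rw [Finset.prod_Icc_one_eq_prod_range (by simp [hω.pow_eq_one])]
  simpa [Polynomial.eval_prod] using
    congr_arg (Polynomial.eval a) (X_pow_sub_C_eq_prod hω hp rfl).symm

theorem prod_one_sub_mul_add_mul_eq_pow_add_pow (hω : IsPrimitiveRoot ω p) (hp : 0 < p)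
    {x y a b : R} (hx : x ≠ 0) (hsum : a + b = 1) (hprod : a * b = -(x * y)) :
    ∏ j ∈ Icc 1 p, (1 - ω ^ j * x + ω ^ (j * (p - 1)) * y)
      = a ^ p + b ^ p - x ^ p - (-1) ^ p * y ^ p := by
  have hfactor (j : ℕ) : -(ω ^ j * x) * (1 - ω ^ j * x + ω ^ (j * (p - 1)) * y)
      = (a - ω ^ j * x) * (b - ω ^ j * x) := by
    have hunit : ω ^ j * ω ^ (j * (p - 1)) = 1 := by
      rw [← pow_add, add_comm, ← mul_add_one, Nat.sub_one_add_one hp.ne', mul_comm, pow_mul,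
        hω.pow_eq_one, one_pow]
    linear_combination ω ^ j * x * hsum - hprod - x * y * hunit
  have hmul : -x ^ p * ∏ j ∈ Icc 1 p, (1 - ω ^ j * x + ω ^ (j * (p - 1)) * y)
      = (a ^ p - x ^ p) * (b ^ p - x ^ p) := by
    have hzero := hω.prod_Icc_sub_pow_mul_eq_pow_sub_pow hp 0 x
    simp only [zero_sub, zero_pow hp.ne'] at hzero
    rw [← hzero, ← hω.prod_Icc_sub_pow_mul_eq_pow_sub_pow hp a x,
      ← hω.prod_Icc_sub_pow_mul_eq_pow_sub_pow hp b x, ← prod_mul_distrib, ← prod_mul_distrib]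
    exact prod_congr rfl fun j _ ↦ hfactor j
  have hprod_pow : a ^ p * b ^ p = (-1) ^ p * x ^ p * y ^ p := by
    rw [← mul_pow, hprod, neg_eq_neg_one_mul, mul_pow, mul_pow, mul_assoc]
  apply mul_left_cancel₀ (pow_ne_zero p hx)
  linear_combination -hmul - hprod_pow

open Polynomial in
theorem prod_one_sub_mul_add_mul_eq_eval₂_lucas (hω : IsPrimitiveRoot ω p) (hp : 0 < p) {x : R}
    (hx : x ≠ 0) (y : R) :
    ∏ j ∈ Icc 1 p, (1 - ω ^ j * x + ω ^ (j * (p - 1)) * y)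
      = (lucas p).eval₂ (Nat.castRingHom R) (x * y) - x ^ p - (-1) ^ p * y ^ p := by
  let K := AlgebraicClosure (FractionRing R)
  let φ : R →+* K := (algebraMap (FractionRing R) K).comp (algebraMap R (FractionRing R))
  have hφ : Function.Injective φ :=
    (algebraMap (FractionRing R) K).injective.comp (IsFractionRing.injective R (FractionRing R))
  have hdeg : (X ^ 2 - X - C (φ x * φ y) : K[X]).natDegree = 2 := by compute_degree!
  obtain ⟨a, ha⟩ := IsAlgClosed.exists_root (X ^ 2 - X - C (φ x * φ y))
    (natDegree_pos_iff_degree_pos.mp (by omega)).ne'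
  have hprod : a * (1 - a) = -(φ x * φ y) := by
    simp only [IsRoot.def, eval_sub, eval_pow, eval_X, eval_C] at ha
    linear_combination -ha
  have hsum : a + (1 - a) = 1 := add_sub_cancel a 1
  apply hφ
  simp only [map_prod, map_sub, map_add, map_mul, map_pow, map_one, map_neg]
  rw [(hω.map_of_injective hφ).prod_one_sub_mul_add_mul_eq_pow_add_pow hp
      ((map_ne_zero_iff _ hφ).mpr hx) hsum hprod,
    pow_add_pow_eq_eval₂_lucas hsum hprod, hom_eval₂, map_mul, RingHom.eq_natCast' (φ.comp _)]

end IsPrimitiveRoot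

open MvPolynomial

theorem stmt_0 (p : ℕ) (hp : 1 ≤ p) (ω : ℂ) (hω : IsPrimitiveRoot ω p) :
    ∃ k : ℕ → ℝ, (∀ j ∈ Finset.Icc 1 (p / 2), 0 < k j) ∧
      (1 - ∏ j ∈ Finset.Icc 1 p,
          (1 - C (ω ^ j) * X 0 + C (ω ^ (j * (p - 1))) * X 1) :
            MvPolynomial (Fin 2) ℂ)
        = X 0 ^ p + C ((-1 : ℂ) ^ p) * X 1 ^ p
            - ∑ j ∈ Finset.Icc 1 (p / 2), C ((k j : ℂ)) * X 0 ^ j * X 1 ^ j := by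
  refine ⟨fun j ↦ ((lucas p).coeff j : ℝ), fun j hj ↦ ?_, ?_⟩
  · have hj_le : j ≤ p / 2 := (mem_Icc.mp hj).2
    exact Nat.cast_pos.mpr (coeff_lucas_pos (by omega))
  simp only [map_pow]
  rw [(hω.map_of_injective (C_injective _ _)).prod_one_sub_mul_add_mul_eq_eval₂_lucas hp
    (X_ne_zero 0), eval₂_lucas_eq_one_add_sum (by omega)]
  simp only [map_neg, map_one, Complex.ofReal_natCast, map_natCast, mul_pow, mul_assoc]
  ring
end

section
/- Let p, q_1, q_2, r, s, a, b be integers with gcd(p, q_1, q_2) = 1, gcd(q_1, q_2) = 1, q_1, q_2 ≥ 1, such that p divides a q_1 + b q_2 and p divides r q_1 + s q_2. Then either s·a - r·b = 0 or |s·a - r·b| ≥ p. -/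
theorem stmt_6 (p q₁ q₂ : ℤ) (a b r s : ℤ)
    (hp : 1 ≤ p) (hq₁ : 1 ≤ q₁) (hq₂ : 1 ≤ q₂)
    (hgcd : Int.gcd p (Int.gcd q₁ q₂) = 1) (hq : Int.gcd q₁ q₂ = 1)
    (hab : p ∣ a * q₁ + b * q₂) (hrs : p ∣ r * q₁ + s * q₂) :
    s * a - r * b = 0 ∨ p ≤ |s * a - r * b| := by
  set D := s * a - r * b with hD
  have h1 : p ∣ D * q₁ := by
    have := hab.mul_left s
    have := hrs.mul_left b
    have : p ∣ s * (a * q₁ + b * q₂) - b * (r * q₁ + s * q₂) :=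
      dvd_sub (hab.mul_left s) (hrs.mul_left b)
    convert this using 1; ring
  have h2 : p ∣ D * q₂ := by
    have : p ∣ a * (r * q₁ + s * q₂) - r * (a * q₁ + b * q₂) :=
      dvd_sub (hrs.mul_left a) (hab.mul_left r)
    convert this using 1; ring
  have hcop : IsCoprime q₁ q₂ := Int.isCoprime_iff_gcd_eq_one.mpr hq
  obtain ⟨u, v, huv⟩ := hcop
  have hpD : p ∣ D := by
    have : p ∣ u * (D * q₁) + v * (D * q₂) := dvd_add (h1.mul_left u) (h2.mul_left v)
    have h3 : u * (D * q₁) + v * (D * q₂) = D := by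
      have : (u * q₁ + v * q₂) * D = 1 * D := by rw [huv]
      linarith [this]
    rwa [h3] at this
  rcases eq_or_ne D 0 with h | h
  · left; exact h
  · right
    exact Int.le_of_dvd (abs_pos.mpr h) ((dvd_abs p D).mpr hpD)
end

section
/- Let σ be a permutation of {1,...,p} with gcd(p, q_1, q_2) = 1, 0 < q_1 < q_2 < p, such that every j satisfies σ(j) - j ≡ 0, q_1, or q_2 (mod p). Let r and s be the total numbers of q_1-steps and q_2-steps of σ, let l = (r q_1 + s q_2)/p, and let k = gcd(r, s, l). Then σ has exactly k non-trivial cycles, each containing exactly r/k q_1-steps and s/k q_2-steps, and sgn(σ) = (-1)^{r + s + k}. -/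
/-!
Positions are read in an abelian group through an injective `φ`, and every point moved by `σ`
moves by `a` or by `b`. After `z` steps the orbit of `x` sits at `φ x + A z • a + (z - A z) • b`,
where the number `A z` of `a`-steps rises by `0` or `1` per step and by the number `r` of
`a`-steps of the cycle over each period. Shift a second orbit, with count `A'`, by `u + v` steps,
where `u • a + v • b` is the difference of the starting points: then `A z - A' (z - u - v) - u`
vanishes exactly where the two orbits meet, so if they never meet it has constant sign (discrete
intermediate value theorem). For two different cycles this excludes a linear drift, so all cycles
have the same proportion of `a`-steps. For one cycle with counts `d • (κ₁, κ₂)` and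
`κ₁ • a + κ₂ • b = 0`, shifting by `κ₁ + κ₂` and summing over `d` shifts telescopes to `0`, which
forces `d = 1`. Hence all cycles carry the same counts `(r₀, s₀)`, with `gcd (r₀, s₀, l₀) = 1`
for `r₀ q₁ + s₀ q₂ = l₀ p`, and `k` is the number of cycles; the sign is
`(-1) ^ (#support + #cycles)`.
-/

open Finset Function

namespace Int

variable {M : Type*} [AddCommGroup M]

lemma apply_eq_apply_zero_of_periodic_one {β : Type*} {f : ℤ → β} (h : Periodic f 1) (z : ℤ) :
    f z = f 0 := by
  simpa using h.int_mul_eq z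

/-- The partial sums of `e` over `[0, z)`, continued to `z < 0` so that
`partialSum e (z + 1) = partialSum e z + e z` holds for every integer `z`. -/
noncomputable def partialSum (e : ℤ → M) (z : ℤ) : M := ∑ i ∈ Ico 0 z, e i - ∑ i ∈ Ico z 0, e i

@[simp]
lemma partialSum_zero (e : ℤ → M) : partialSum e 0 = 0 := by
  simp [partialSum]

lemma partialSum_add_one (e : ℤ → M) (z : ℤ) : partialSum e (z + 1) = partialSum e z + e z := by
  rcases le_or_gt 0 z with hz | hz
  · rw [partialSum, partialSum, ← insert_Ico_right_eq_Ico_add_one hz, sum_insert right_notMem_Ico,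
      Ico_eq_empty_of_le (show (0 : ℤ) ≤ z + 1 by omega), Ico_eq_empty_of_le hz]
    abel
  · rw [partialSum, partialSum, ← insert_Ico_add_one_left_eq_Ico hz, sum_insert (by simp),
      Ico_eq_empty_of_le (show z + 1 ≤ 0 by omega), Ico_eq_empty_of_le hz.le]
    abel

lemma partialSum_natCast (e : ℤ → M) (n : ℕ) : partialSum e n = ∑ i ∈ Finset.range n, e i := by
  induction n with
  | zero => simp
  | succ n ih => rw [Nat.cast_succ, partialSum_add_one, ih, sum_range_succ]

lemma partialSum_add_mul_of_periodic {e : ℤ → M} {n : ℤ} (he : Periodic e n) (z t : ℤ) :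
    partialSum e (z + t * n) = partialSum e z + t • partialSum e n := by
  have hn : ∀ w, partialSum e (w + n) = partialSum e w + partialSum e n := by
    have h : Periodic (fun w => partialSum e (w + n) - partialSum e w) 1 := fun w => by
      simp only [add_right_comm w 1 n, partialSum_add_one, he w]
      abel
    intro w
    simpa [sub_eq_iff_eq_add'] using apply_eq_apply_zero_of_periodic_one h w
  have h : Periodic (fun t : ℤ => partialSum e (z + t * n) - t • partialSum e n) 1 := fun t => by
    simp only [add_mul, one_mul, ← add_assoc, hn, add_zsmul, one_zsmul]
    abel
  simpa [sub_eq_iff_eq_add', add_comm] using apply_eq_apply_zero_of_periodic_one h t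

lemma pos_of_pos_of_forall_ne_zero {D : ℤ → ℤ} (hD : ∀ z, |D (z + 1) - D z| ≤ 1)
    (hne : ∀ z, D z ≠ 0) (h0 : 0 < D 0) (z : ℤ) : 0 < D z := by
  induction z using Int.induction_on with
  | zero => exact h0
  | succ i ih =>
    have := abs_le.1 (hD i)
    have := hne (i + 1)
    omega
  | pred i ih =>
    have := abs_le.1 (hD (-i - 1))
    have := hne (-i - 1)
    rw [sub_add_cancel] at *
    omega

lemma forall_pos_or_forall_neg {D : ℤ → ℤ} (hD : ∀ z, |D (z + 1) - D z| ≤ 1)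
    (hne : ∀ z, D z ≠ 0) : (∀ z, 0 < D z) ∨ ∀ z, D z < 0 := by
  rcases (hne 0).lt_or_gt with h0 | h0
  · refine Or.inr fun z => neg_pos.1 (pos_of_pos_of_forall_ne_zero (D := -D) (fun z => ?_)
      (fun z => neg_ne_zero.2 (hne z)) (neg_pos.2 h0) z)
    rw [Pi.neg_apply, Pi.neg_apply, neg_sub_neg, abs_sub_comm]
    exact hD z
  · exact Or.inl (pos_of_pos_of_forall_ne_zero hD hne h0)

lemma eq_zero_of_forall_add_eq_add {D : ℤ → ℤ} (hD : (∀ z, 0 < D z) ∨ ∀ z, D z < 0) {M Δ : ℤ}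
    (hdrift : ∀ z, D (z + M) = D z + Δ) : Δ = 0 := by
  have h : Periodic (fun t : ℤ => D (t * M) - t * Δ) 1 := fun t => by
    simp only [add_mul, one_mul, hdrift]
    ring
  have hlin := apply_eq_apply_zero_of_periodic_one h (-(D 0 * Δ))
  have key : D (-(D 0 * Δ) * M) = D 0 * (1 - Δ * Δ) := by
    simp only [zero_mul, sub_zero] at hlin
    linarith
  have hΔ : 0 < 1 - Δ * Δ := by
    rcases hD with hD | hD
    · exact pos_of_mul_pos_right (key ▸ hD _) (hD 0).le
    · exact pos_of_mul_neg_right (key ▸ hD _) (hD 0).le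
  nlinarith

end Int

lemma Nat.exists_coprime_mul_of_mul_eq {r s r' s' : ℕ} (hn : 0 < r + s)
    (h : r * (r' + s') = r' * (r + s)) :
    ∃ m m' ρ τ : ℕ, m.Coprime m' ∧ r = m * ρ ∧ s = m * τ ∧ r' = m' * ρ ∧ s' = m' * τ := by
  obtain ⟨g, m, m', hg, hcop, hm, hm'⟩ :=
    Nat.exists_coprime' (Nat.gcd_pos_of_pos_left (r' + s') hn)
  have hm0 : 0 < m := Nat.pos_of_mul_pos_right (hm ▸ hn)
  have key : ∀ {t t' : ℕ}, t * m' = t' * m → ∃ ρ, t = m * ρ ∧ t' = m' * ρ := by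
    intro t t' ht
    obtain ⟨ρ, rfl⟩ := hcop.dvd_of_dvd_mul_right (ht ▸ dvd_mul_left m t')
    exact ⟨ρ, rfl, Nat.eq_of_mul_eq_mul_left hm0 (by rw [mul_comm m t', ← ht]; ring)⟩
  have hr : r * m' = r' * m :=
    Nat.eq_of_mul_eq_mul_right hg (by rw [mul_assoc, mul_assoc, ← hm', ← hm, h])
  have hs : s * m' = s' * m := by linear_combination m' * hm - m * hm' - hr
  obtain ⟨ρ, h₁, h₂⟩ := key hr
  obtain ⟨τ, h₃, h₄⟩ := key hs
  exact ⟨m, m', ρ, τ, hcop, h₁, h₃, h₂, h₄⟩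

lemma Nat.gcd_gcd_eq_one_of_forall {p q₁ q₂ r s l : ℕ}
    (hl : r * q₁ + s * q₂ = l * p)
    (hprim : ∀ d κ₁ κ₂ : ℕ, d * κ₁ = r → d * κ₂ = s →
      κ₁ • (q₁ : ZMod p) + κ₂ • (q₂ : ZMod p) = 0 → d = 1) :
    r.gcd (s.gcd l) = 1 := by
  set e := r.gcd (s.gcd l)
  obtain ⟨κ₁, hκ₁⟩ : e ∣ r := Nat.gcd_dvd_left _ _
  obtain ⟨κ₂, hκ₂⟩ : e ∣ s := (Nat.gcd_dvd_right _ _).trans (Nat.gcd_dvd_left _ _)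
  obtain ⟨t, ht⟩ : e ∣ l := (Nat.gcd_dvd_right _ _).trans (Nat.gcd_dvd_right _ _)
  rcases Nat.eq_zero_or_pos e with he | he
  · exact absurd (hprim 0 0 0 (by simp [hκ₁, he]) (by simp [hκ₂, he]) (by simp)) zero_ne_one
  refine hprim e κ₁ κ₂ hκ₁.symm hκ₂.symm ?_
  have : κ₁ * q₁ + κ₂ * q₂ = t * p :=
    Nat.eq_of_mul_eq_mul_left he (by rw [hκ₁, hκ₂, ht] at hl; linear_combination hl)
  rw [nsmul_eq_mul, nsmul_eq_mul]
  exact_mod_cast (ZMod.natCast_eq_zero_iff _ p).2 (this ▸ dvd_mul_left p t)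

namespace ZMod

lemma natCast_eq_natCast_iff_of_lt {p a b : ℕ} (ha : a < p) (hb : b < p) :
    (a : ZMod p) = b ↔ a = b := by
  rw [natCast_eq_natCast_iff', Nat.mod_eq_of_lt ha, Nat.mod_eq_of_lt hb]

lemma exists_zsmul_add_zsmul_eq {p a b : ℕ} (h : p.gcd (a.gcd b) = 1) (g : ZMod p) :
    ∃ u v : ℤ, u • (a : ZMod p) + v • (b : ZMod p) = g := by
  obtain ⟨g, rfl⟩ := intCast_surjective g
  have h₁ := congrArg (Int.cast : ℤ → ZMod p) (Nat.gcd_eq_gcd_ab p (a.gcd b))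
  have h₂ := congrArg (Int.cast : ℤ → ZMod p) (Nat.gcd_eq_gcd_ab a b)
  push_cast [h, natCast_self, zero_mul, zero_add] at h₁ h₂
  refine ⟨g * a.gcdA b * p.gcdB (a.gcd b), g * a.gcdB b * p.gcdB (a.gcd b), ?_⟩
  simp only [zsmul_eq_mul]
  push_cast
  linear_combination (-(g : ZMod p) * p.gcdB (a.gcd b)) * h₂ - g * h₁

end ZMod

namespace Equiv.Perm

lemma IsCycleOn.sum_range_pow_apply {α M : Type*} [AddCommMonoid M] {σ : Perm α} {s : Finset α}
    (hσ : σ.IsCycleOn s) {x : α} (hx : x ∈ s) (f : α → M) :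
    ∑ i ∈ range #s, f ((σ ^ i) x) = ∑ y ∈ s, f y :=
  sum_nbij (fun i => (σ ^ i) x) (fun i _ => hσ.1.mapsTo.perm_pow i hx)
    (fun _ hi _ hj h => ((hσ.pow_apply_eq_pow_apply hx).1 h).eq_of_lt_of_lt
      (mem_range.1 hi) (mem_range.1 hj))
    (fun _ hy => let ⟨i, hi, h⟩ := hσ.exists_pow_eq hx hy; ⟨i, mem_range.2 hi, h⟩)
    (fun _ _ => rfl)

lemma support_eq_biUnion_cycleFactorsFinset {α : Type*} [Fintype α] [DecidableEq α]
    (σ : Perm α) : σ.support = σ.cycleFactorsFinset.biUnion support := by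
  ext x
  simp only [mem_biUnion]
  refine ⟨fun hx => ⟨σ.cycleOf x, cycleOf_mem_cycleFactorsFinset_iff.2 hx,
    mem_support_cycleOf_iff.2 ⟨SameCycle.refl _ _, hx⟩⟩, ?_⟩
  rintro ⟨c, hc, hx⟩
  exact mem_cycleFactorsFinset_support_le hc hx

variable {α G : Type*} [AddCommGroup G] [DecidableEq G] (φ : α → G) (σ : Perm α) (a b : G)

def stepCount (s : Finset α) : ℕ := #{y ∈ s | φ (σ y) - φ y = a}

/-- The number of `a`-steps among the first `z` steps of the `σ`-orbit of `x`
(for `z < 0`, minus the number among the `-z` steps leading to `x`). -/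
noncomputable def orbitStepCount (x : α) : ℤ → ℤ :=
  Int.partialSum fun i => if φ (σ ((σ ^ i) x)) - φ ((σ ^ i) x) = a then 1 else 0

def TwoStep [Fintype α] [DecidableEq α] : Prop :=
  ∀ y ∈ σ.support, φ (σ y) - φ y = a ∨ φ (σ y) - φ y = b

variable {φ σ a b}

@[simp]
lemma orbitStepCount_zero (x : α) : orbitStepCount φ σ a x 0 = 0 :=
  Int.partialSum_zero _

lemma orbitStepCount_add_one (x : α) (z : ℤ) :
    orbitStepCount φ σ a x (z + 1) =
      orbitStepCount φ σ a x z + if φ (σ ((σ ^ z) x)) - φ ((σ ^ z) x) = a then 1 else 0 :=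
  Int.partialSum_add_one _ _

lemma orbitStepCount_add_one_sub_mem_Icc (x : α) (z : ℤ) :
    orbitStepCount φ σ a x (z + 1) - orbitStepCount φ σ a x z ∈ Set.Icc 0 1 := by
  rw [orbitStepCount_add_one, Set.mem_Icc]
  split_ifs <;> omega

variable [Fintype α] [DecidableEq α] {c c' : Perm α} {x x' : α}

lemma stepCount_univ (ha : a ≠ 0) : stepCount φ σ a univ = stepCount φ σ a σ.support := by
  refine congrArg card (Finset.ext fun y => ?_)
  simp only [mem_filter, mem_univ, true_and, mem_support]
  exact ⟨fun hy => ⟨fun hfix => ha (by rw [← hy, hfix, sub_self]), hy⟩, And.right⟩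

lemma stepCount_support_eq_sum :
    stepCount φ σ a σ.support = ∑ c ∈ σ.cycleFactorsFinset, stepCount φ σ a c.support := by
  rw [stepCount, support_eq_biUnion_cycleFactorsFinset, filter_biUnion, card_biUnion]
  · rfl
  · exact fun c hc c' hc' hcc' => disjoint_filter_filter
      (σ.cycleFactorsFinset_pairwise_disjoint hc hc' hcc').disjoint_support

lemma stepCount_add_stepCount (hσ : TwoStep φ σ a b) (hab : a ≠ b) {s : Finset α}
    (hs : s ⊆ σ.support) : stepCount φ σ a s + stepCount φ σ b s = #s := by
  have hb : {y ∈ s | φ (σ y) - φ y = b} = {y ∈ s | ¬φ (σ y) - φ y = a} :=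
    filter_congr fun y hy =>
      ⟨fun h h' => hab (h'.symm.trans h), fun h => (hσ y (hs hy)).resolve_left h⟩
  rw [stepCount, stepCount, hb, card_filter_add_card_filter_not]

theorem apply_zpow_eq (hσ : TwoStep φ σ a b) (hx : x ∈ σ.support) (z : ℤ) :
    φ ((σ ^ z) x) =
      φ x + orbitStepCount φ σ a x z • a + (z - orbitStepCount φ σ a x z) • b := by
  set A := orbitStepCount φ σ a x
  have h : Periodic (fun z => φ ((σ ^ z) x) - (A z • a + (z - A z) • b)) 1 := fun z => by
    have hy : (σ ^ z) x ∈ σ.support := zpow_apply_mem_support.2 hx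
    have hsucc : (σ ^ (z + 1)) x = σ ((σ ^ z) x) := by rw [add_comm, zpow_one_add, mul_apply]
    simp only [A, orbitStepCount_add_one, hsucc]
    split_ifs with hstep
    · rw [eq_add_of_sub_eq' hstep, show z + 1 - (A z + 1) = z - A z by ring, add_zsmul, one_zsmul]
      abel
    · rw [eq_add_of_sub_eq' ((hσ _ hy).resolve_left hstep), add_zero,
        show z + 1 - A z = z - A z + 1 by ring, add_zsmul, one_zsmul]
      abel
  have := Int.apply_eq_apply_zero_of_periodic_one h z
  simp only [A, orbitStepCount_zero, zpow_zero, one_apply, zero_smul, sub_zero, add_zero] at this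
  rw [← this]
  abel

lemma zpow_apply_mem_support_of_mem_cycleFactorsFinset (hc : c ∈ σ.cycleFactorsFinset)
    (hx : x ∈ c.support) (z : ℤ) :
    (σ ^ z) x ∈ c.support :=
  ((isCycleOn_support_of_mem_cycleFactorsFinset hc).1.perm_zpow z).mapsTo hx

lemma orbitStepCount_add_mul_card (hc : c ∈ σ.cycleFactorsFinset) (hx : x ∈ c.support)
    (z t : ℤ) :
    orbitStepCount φ σ a x (z + t * #c.support) =
      orbitStepCount φ σ a x z + t * stepCount φ σ a c.support := by
  have hcyc := isCycleOn_support_of_mem_cycleFactorsFinset hc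
  have hper : Periodic (fun i : ℤ => if φ (σ ((σ ^ i) x)) - φ ((σ ^ i) x) = a then (1 : ℤ) else 0)
      #c.support := fun i => by
    simp only [zpow_add, zpow_natCast, mul_apply, hcyc.pow_card_apply hx]
  rw [orbitStepCount, Int.partialSum_add_mul_of_periodic hper, Int.partialSum_natCast, smul_eq_mul]
  simp only [zpow_natCast]
  rw [hcyc.sum_range_pow_apply hx (fun y => if φ (σ y) - φ y = a then (1 : ℤ) else 0), sum_boole]
  rfl

theorem stepCount_nsmul_add_stepCount_nsmul (hσ : TwoStep φ σ a b) (hab : a ≠ b)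
    (hc : c ∈ σ.cycleFactorsFinset) :
    stepCount φ σ a c.support • a + stepCount φ σ b c.support • b = 0 := by
  obtain ⟨x, hx⟩ := (mem_cycleFactorsFinset_iff.1 hc).1.nonempty_support
  have hn := stepCount_add_stepCount hσ hab (mem_cycleFactorsFinset_support_le hc)
  have hA : orbitStepCount φ σ a x #c.support = stepCount φ σ a c.support := by
    simpa using orbitStepCount_add_mul_card hc hx 0 1
  have h := apply_zpow_eq hσ (mem_cycleFactorsFinset_support_le hc hx) #c.support
  rwa [zpow_natCast, (isCycleOn_support_of_mem_cycleFactorsFinset hc).pow_card_apply hx, hA, ← hn,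
    Nat.cast_add, add_sub_cancel_left, natCast_zsmul, natCast_zsmul, add_assoc, left_eq_add] at h

lemma zpow_apply_eq_zpow_apply_of_orbitStepCount (hφ : Injective φ) (hσ : TwoStep φ σ a b)
    (hx : x ∈ σ.support) (hx' : x' ∈ σ.support) {u v z : ℤ} (huv : u • a + v • b = φ x' - φ x)
    (h : orbitStepCount φ σ a x z = orbitStepCount φ σ a x' (z - (u + v)) + u) :
    (σ ^ z) x = (σ ^ (z - (u + v))) x' := by
  apply hφ
  rw [apply_zpow_eq hσ hx, apply_zpow_eq hσ hx', h, eq_add_of_sub_eq' huv.symm]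
  simp only [add_zsmul, sub_zsmul]
  abel

theorem forall_pos_or_forall_neg_of_forall_ne (hφ : Injective φ) (hσ : TwoStep φ σ a b)
    (hx : x ∈ σ.support) (hx' : x' ∈ σ.support) {u v : ℤ} (huv : u • a + v • b = φ x' - φ x)
    (hne : ∀ z, (σ ^ z) x ≠ (σ ^ (z - (u + v))) x') :
    (∀ z, 0 < orbitStepCount φ σ a x z - orbitStepCount φ σ a x' (z - (u + v)) - u) ∨
      ∀ z, orbitStepCount φ σ a x z - orbitStepCount φ σ a x' (z - (u + v)) - u < 0 := by
  refine Int.forall_pos_or_forall_neg (fun z => ?_) (fun z hz => hne z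
    (zpow_apply_eq_zpow_apply_of_orbitStepCount hφ hσ hx hx' huv (by omega)))
  have h := Set.mem_Icc.1 (orbitStepCount_add_one_sub_mem_Icc (φ := φ) (σ := σ) (a := a) x z)
  have h' := Set.mem_Icc.1
    (orbitStepCount_add_one_sub_mem_Icc (φ := φ) (σ := σ) (a := a) x' (z - (u + v)))
  rw [sub_add_eq_add_sub] at h'
  rw [abs_le]
  omega

theorem stepCount_mul_card_eq_of_ne (hφ : Injective φ) (hσ : TwoStep φ σ a b)
    (hgen : ∀ g : G, ∃ u v : ℤ, u • a + v • b = g) (hc : c ∈ σ.cycleFactorsFinset)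
    (hc' : c' ∈ σ.cycleFactorsFinset) (hcc' : c ≠ c') :
    stepCount φ σ a c.support * #c'.support = stepCount φ σ a c'.support * #c.support := by
  obtain ⟨x, hx⟩ := (mem_cycleFactorsFinset_iff.1 hc).1.nonempty_support
  obtain ⟨x', hx'⟩ := (mem_cycleFactorsFinset_iff.1 hc').1.nonempty_support
  obtain ⟨u, v, huv⟩ := hgen (φ x' - φ x)
  have hdisj := (σ.cycleFactorsFinset_pairwise_disjoint hc hc' hcc').disjoint_support
  have hsign := forall_pos_or_forall_neg_of_forall_ne hφ hσ
    (mem_cycleFactorsFinset_support_le hc hx) (mem_cycleFactorsFinset_support_le hc' hx') huv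
    fun z h => disjoint_left.1 hdisj
      (zpow_apply_mem_support_of_mem_cycleFactorsFinset hc hx z)
      (h ▸ zpow_apply_mem_support_of_mem_cycleFactorsFinset hc' hx' (z - (u + v)))
  -- over `#c.support * #c'.support` steps both orbits close up, and the excess drifts linearly
  have hdrift := Int.eq_zero_of_forall_add_eq_add hsign (M := #c'.support * #c.support)
    (Δ := #c'.support * stepCount φ σ a c.support - #c.support * stepCount φ σ a c'.support)
    fun z => by
      rw [orbitStepCount_add_mul_card hc hx, show z + #c'.support * #c.support - (u + v) =
        z - (u + v) + #c.support * #c'.support by ring, orbitStepCount_add_mul_card hc' hx']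
      ring
  have : (stepCount φ σ a c.support * #c'.support : ℤ) =
      stepCount φ σ a c'.support * #c.support := by
    linarith
  exact_mod_cast this

theorem eq_one_of_mul_eq_stepCount (hφ : Injective φ) (hσ : TwoStep φ σ a b) (hab : a ≠ b)
    (hc : c ∈ σ.cycleFactorsFinset) {d κ₁ κ₂ : ℕ} (h₁ : d * κ₁ = stepCount φ σ a c.support)
    (h₂ : d * κ₂ = stepCount φ σ b c.support) (hκ : κ₁ • a + κ₂ • b = 0) : d = 1 := by
  obtain ⟨x, hx⟩ := (mem_cycleFactorsFinset_iff.1 hc).1.nonempty_support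
  have hcyc := isCycleOn_support_of_mem_cycleFactorsFinset hc
  have hn : #c.support = d * (κ₁ + κ₂) := by
    rw [← stepCount_add_stepCount hσ hab (mem_cycleFactorsFinset_support_le hc), ← h₁, ← h₂]
    ring
  have hn2 := (mem_cycleFactorsFinset_iff.1 hc).1.two_le_card_support
  by_contra hd
  have hd2 : 2 ≤ d := by
    have : d ≠ 0 := by
      rintro rfl
      rw [zero_mul] at hn
      omega
    omega
  have hK : 0 < κ₁ + κ₂ := by nlinarith
  have hKn : κ₁ + κ₂ < #c.support := by nlinarith
  have hper : orbitStepCount φ σ a x (-(d * (κ₁ + κ₂))) = orbitStepCount φ σ a x 0 - d * κ₁ := by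
    have := orbitStepCount_add_mul_card (φ := φ) (a := a) hc hx 0 (-1)
    rw [hn, ← h₁] at this
    push_cast at this
    rw [show -((d : ℤ) * (κ₁ + κ₂)) = 0 + -1 * (d * (κ₁ + κ₂)) by ring, this]
    ring
  set A := orbitStepCount φ σ a x
  -- the orbit of `x` does not meet its own shift by `κ₁ + κ₂`, a non-multiple of the period
  have hsign := forall_pos_or_forall_neg_of_forall_ne (u := κ₁) (v := κ₂) hφ hσ
    (mem_cycleFactorsFinset_support_le hc hx) (mem_cycleFactorsFinset_support_le hc hx)
    (by rw [natCast_zsmul, natCast_zsmul, hκ, sub_self]) fun z h => by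
      have := Int.ModEq.dvd ((hcyc.zpow_apply_eq_zpow_apply hx).1 h)
      rw [show z - (κ₁ + κ₂ : ℤ) - z = -(κ₁ + κ₂ : ℤ) by ring, dvd_neg] at this
      have := Int.le_of_dvd (by omega) this
      omega
  -- summed over `d` consecutive shifts, the excess telescopes to `0`
  have hsum :
      ∑ i ∈ range d, (A (-(i * (κ₁ + κ₂))) - A (-(i * (κ₁ + κ₂)) - (κ₁ + κ₂)) - κ₁) = 0 := by
    calc ∑ i ∈ range d, (A (-(i * (κ₁ + κ₂))) - A (-(i * (κ₁ + κ₂)) - (κ₁ + κ₂)) - κ₁)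
        = ∑ i ∈ range d, (A (-(i * (κ₁ + κ₂))) - A (-((i + 1 : ℕ) * (κ₁ + κ₂)))) - d * κ₁ := by
          rw [sum_sub_distrib, sum_const, card_range, nsmul_eq_mul]
          congr 1
          refine sum_congr rfl fun i _ => ?_
          rw [show -(i * (κ₁ + κ₂) : ℤ) - (κ₁ + κ₂) = -((i + 1 : ℕ) * (κ₁ + κ₂)) by
            push_cast; ring]
      _ = 0 := by
          rw [sum_range_sub' (fun i : ℕ => A (-(i * (κ₁ + κ₂)))), hper]
          simp
  rcases hsign with hpos | hneg
  · exact (sum_pos (fun i _ => hpos _) (nonempty_range_iff.2 (by omega))).ne' hsum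
  · exact (sum_neg (fun i _ => hneg _) (nonempty_range_iff.2 (by omega))).ne hsum

theorem stepCount_eq_of_mem_cycleFactorsFinset (hφ : Injective φ) (hσ : TwoStep φ σ a b)
    (hab : a ≠ b) (hgen : ∀ g : G, ∃ u v : ℤ, u • a + v • b = g) (hc : c ∈ σ.cycleFactorsFinset)
    (hc' : c' ∈ σ.cycleFactorsFinset) :
    stepCount φ σ a c.support = stepCount φ σ a c'.support ∧
      stepCount φ σ b c.support = stepCount φ σ b c'.support := by
  rcases eq_or_ne c c' with rfl | hcc'
  · exact ⟨rfl, rfl⟩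
  have hn := stepCount_add_stepCount hσ hab (mem_cycleFactorsFinset_support_le hc)
  have hn' := stepCount_add_stepCount hσ hab (mem_cycleFactorsFinset_support_le hc')
  have h := stepCount_mul_card_eq_of_ne hφ hσ hgen hc hc' hcc'
  rw [← hn, ← hn'] at h
  have hpos := (mem_cycleFactorsFinset_iff.1 hc).1.two_le_card_support
  obtain ⟨m, m', ρ, τ, hcop, hr, hs, hr', hs'⟩ := Nat.exists_coprime_mul_of_mul_eq (by omega) h
  have hw : ρ • a + τ • b = 0 := by
    have hdvd : ∀ {k : ℕ} {e : Perm α}, e ∈ σ.cycleFactorsFinset →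
        stepCount φ σ a e.support = k * ρ → stepCount φ σ b e.support = k * τ →
        addOrderOf (ρ • a + τ • b) ∣ k := fun he h₁ h₂ => addOrderOf_dvd_of_nsmul_eq_zero (by
      rw [smul_add, smul_smul, smul_smul, ← h₁, ← h₂]
      exact stepCount_nsmul_add_stepCount_nsmul hσ hab he)
    exact AddMonoid.addOrderOf_eq_one_iff.1
      (Nat.eq_one_of_dvd_coprimes hcop (hdvd hc hr hs) (hdvd hc' hr' hs'))
  have hm := eq_one_of_mul_eq_stepCount hφ hσ hab hc hr.symm hs.symm hw
  have hm' := eq_one_of_mul_eq_stepCount hφ hσ hab hc' hr'.symm hs'.symm hw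
  simp [hr, hs, hr', hs', hm, hm']

theorem stepCount_support_eq_card_mul (hφ : Injective φ) (hσ : TwoStep φ σ a b) (hab : a ≠ b)
    (hgen : ∀ g : G, ∃ u v : ℤ, u • a + v • b = g) (hc : c ∈ σ.cycleFactorsFinset) :
    stepCount φ σ a σ.support = #σ.cycleFactorsFinset * stepCount φ σ a c.support ∧
      stepCount φ σ b σ.support = #σ.cycleFactorsFinset * stepCount φ σ b c.support := by
  have h := fun c' (hc' : c' ∈ σ.cycleFactorsFinset) =>
    stepCount_eq_of_mem_cycleFactorsFinset hφ hσ hab hgen hc' hc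
  rw [stepCount_support_eq_sum, stepCount_support_eq_sum, sum_congr rfl fun c' hc' => (h c' hc').1,
    sum_congr rfl fun c' hc' => (h c' hc').2, sum_const, sum_const, smul_eq_mul, smul_eq_mul]
  exact ⟨rfl, rfl⟩

theorem sign_eq_neg_one_pow (hσ : TwoStep φ σ a b) (hab : a ≠ b) :
    sign σ = (-1) ^ (stepCount φ σ a σ.support + stepCount φ σ b σ.support +
      #σ.cycleFactorsFinset) := by
  rw [sign_of_cycleType, sum_cycleType, stepCount_add_stepCount hσ hab subset_rfl, cycleType_def,
    Multiset.card_map]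
  rfl

theorem card_cycleFactorsFinset_eq_gcd {p q₁ q₂ l : ℕ} [NeZero p]
    {φ : α → ZMod p} (hφ : Injective φ) (hσ : TwoStep φ σ q₁ q₂)
    (hab : (q₁ : ZMod p) ≠ q₂) (hgcd : p.gcd (q₁.gcd q₂) = 1)
    (hl : stepCount φ σ q₁ σ.support * q₁ + stepCount φ σ q₂ σ.support * q₂ = l * p) :
    #σ.cycleFactorsFinset =
      (stepCount φ σ q₁ σ.support).gcd ((stepCount φ σ q₂ σ.support).gcd l) := by
  have hp : 0 < p := Nat.pos_of_ne_zero (NeZero.ne p)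
  rcases σ.cycleFactorsFinset.eq_empty_or_nonempty with hσ1 | ⟨c, hc⟩
  · rw [stepCount_support_eq_sum, stepCount_support_eq_sum, hσ1] at hl ⊢
    simp only [sum_empty, zero_mul, add_zero, zero_eq_mul, hp.ne', or_false] at hl
    simp [hl]
  obtain ⟨hr, hs⟩ :=
    stepCount_support_eq_card_mul hφ hσ hab (ZMod.exists_zsmul_add_zsmul_eq hgcd) hc
  obtain ⟨l₀, hl₀⟩ : p ∣ stepCount φ σ q₁ c.support * q₁ + stepCount φ σ q₂ c.support * q₂ := by
    rw [← ZMod.natCast_eq_zero_iff]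
    push_cast
    simpa only [nsmul_eq_mul] using stepCount_nsmul_add_stepCount_nsmul hσ hab hc
  have hl' : l = #σ.cycleFactorsFinset * l₀ :=
    Nat.eq_of_mul_eq_mul_right hp (by
      rw [← hl, hr, hs]
      linear_combination #σ.cycleFactorsFinset * hl₀)
  rw [hr, hs, hl', Nat.gcd_mul_left, Nat.gcd_mul_left,
    Nat.gcd_gcd_eq_one_of_forall (by rw [hl₀]; ring) fun d κ₁ κ₂ h₁ h₂ hκ =>
      eq_one_of_mul_eq_stepCount hφ hσ hab hc h₁ h₂ hκ, mul_one]

end Equiv.Perm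

theorem stmt_8 (p q₁ q₂ : ℕ) (h₁ : 0 < q₁) (h₁₂ : q₁ < q₂) (h₂p : q₂ < p)
    (hgcd : Nat.gcd p (Nat.gcd q₁ q₂) = 1)
    (σ : Equiv.Perm (Fin p))
    (hσ : ∀ j : Fin p,
      (((σ j : ℕ) : ZMod p) - ((j : ℕ) : ZMod p) = 0) ∨
      (((σ j : ℕ) : ZMod p) - ((j : ℕ) : ZMod p) = (q₁ : ZMod p)) ∨
      (((σ j : ℕ) : ZMod p) - ((j : ℕ) : ZMod p) = (q₂ : ZMod p)))
    (r s l k : ℕ)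
    (hr : r = (Finset.univ.filter fun j : Fin p =>
        ((σ j : ℕ) : ZMod p) - ((j : ℕ) : ZMod p) = (q₁ : ZMod p)).card)
    (hs : s = (Finset.univ.filter fun j : Fin p =>
        ((σ j : ℕ) : ZMod p) - ((j : ℕ) : ZMod p) = (q₂ : ZMod p)).card)
    (hl : r * q₁ + s * q₂ = l * p)
    (hk : k = Nat.gcd r (Nat.gcd s l)) :
    σ.cycleFactorsFinset.card = k ∧
    (∀ c ∈ σ.cycleFactorsFinset,
      (c.support.filter fun j : Fin p =>
        ((σ j : ℕ) : ZMod p) - ((j : ℕ) : ZMod p) = (q₁ : ZMod p)).card = r / k ∧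
      (c.support.filter fun j : Fin p =>
        ((σ j : ℕ) : ZMod p) - ((j : ℕ) : ZMod p) = (q₂ : ZMod p)).card = s / k) ∧
    Equiv.Perm.sign σ = (-1 : ℤˣ) ^ (r + s + k) := by
  have : NeZero p := ⟨by omega⟩
  set φ : Fin p → ZMod p := fun j => ((j : ℕ) : ZMod p)
  have hφ : Injective φ := fun i j h => Fin.ext ((ZMod.natCast_eq_natCast_iff_of_lt i.2 j.2).1 h)
  have hne : ∀ {x y : ℕ}, x < y → y < p → (x : ZMod p) ≠ y := fun hxy hy h =>
    hxy.ne ((ZMod.natCast_eq_natCast_iff_of_lt (hxy.trans hy) hy).1 h)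
  have hab : (q₁ : ZMod p) ≠ q₂ := hne h₁₂ h₂p
  have hσ' : Equiv.Perm.TwoStep φ σ q₁ q₂ := fun j hj =>
    (hσ j).resolve_left fun h => Equiv.Perm.mem_support.1 hj (hφ (sub_eq_zero.1 h))
  have hr' : r = Equiv.Perm.stepCount φ σ q₁ σ.support :=
    hr.trans (Equiv.Perm.stepCount_univ (φ := φ) (by simpa using (hne h₁ (by omega)).symm))
  have hs' : s = Equiv.Perm.stepCount φ σ q₂ σ.support :=
    hs.trans (Equiv.Perm.stepCount_univ (φ := φ) (by simpa using (hne (h₁.trans h₁₂) h₂p).symm))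
  have hk' : k = #σ.cycleFactorsFinset := by
    rw [hk, hr', hs', Equiv.Perm.card_cycleFactorsFinset_eq_gcd hφ hσ' hab hgcd (hr' ▸ hs' ▸ hl)]
  refine ⟨hk'.symm, fun c hc => ?_, ?_⟩
  · obtain ⟨hrc, hsc⟩ := Equiv.Perm.stepCount_support_eq_card_mul hφ hσ' hab
      (ZMod.exists_zsmul_add_zsmul_eq hgcd) hc
    have hm : 0 < #σ.cycleFactorsFinset := card_pos.2 ⟨c, hc⟩
    rw [hr', hs', hrc, hsc, hk', Nat.mul_div_cancel_left _ hm, Nat.mul_div_cancel_left _ hm]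
    exact ⟨rfl, rfl⟩
  · rw [Equiv.Perm.sign_eq_neg_one_pow hσ' hab, hr', hs', hk']
end

section
/- Let σ be a permutation of {1,...,p} with gcd(p, q_1, q_2) = 1, 0 < q_1 < q_2 < p, whose steps σ(j) - j mod p all lie in {0, q_1, q_2}. For each non-trivial cycle C_i of σ, let r_i and s_i be its numbers of q_1-steps and q_2-steps, and l_i = (r_i q_1 + s_i q_2)/p. Then gcd(r_i, s_i, l_i) = 1 for each i. -/
/-!
Follow a cycle of length `n = r + s` from a point `x`: after `k` steps its position is
`x + A k • q₁ + (k - A k) • q₂` in `ZMod p`, where `A k` counts the `q₁`-steps among the first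
`k` steps. If `d` divides `r`, `s` and `l`, put `m = n / d`. The `d` consecutive windows of
length `m` contain `r = d * (r / d)` `q₁`-steps in total, and sliding a window by one step changes
its count by at most one, so some window of length `m` contains exactly `r / d` of them. Across
that window the position moves by `(r / d) q₁ + (s / d) q₂ = (l / d) p ≡ 0`, so `σ ^ m` fixes a
point of the cycle. Hence `n ∣ m`, i.e. `d = 1`.
-/

open Finset

theorem Int.exists_eq_zero_of_abs_sub_le_one {g : ℕ → ℤ} (hg : ∀ k, |g (k + 1) - g k| ≤ 1)
    {i j : ℕ} (hi : g i ≤ 0) (hj : 0 ≤ g j) : ∃ k, g k = 0 := by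
  wlog hij : i ≤ j generalizing g i j
  · have hneg : ∀ k, |-g (k + 1) - -g k| ≤ 1 := fun k => by
      have := abs_le.1 (hg k)
      rw [abs_le]
      omega
    obtain ⟨k, hk⟩ := this (g := fun k => -g k) hneg (neg_nonpos.2 hj) (neg_nonneg.2 hi) (by omega)
    exact ⟨k, neg_eq_zero.1 hk⟩
  have hex : ∃ k, 0 ≤ g (i + k) := ⟨j - i, by rwa [Nat.add_sub_cancel' hij]⟩
  refine ⟨i + Nat.find hex, le_antisymm ?_ (Nat.find_spec hex)⟩
  rcases h : Nat.find hex with _ | k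
  · simpa using hi
  · have hk : g (i + k) < 0 := not_le.1 (Nat.find_min hex (by omega))
    have := (abs_le.1 (hg (i + k))).2
    rw [← add_assoc]
    omega

theorem Nat.count_add_count_of_xor {P Q : ℕ → Prop} [DecidablePred P] [DecidablePred Q] {n : ℕ}
    (h : ∀ k < n, Xor (P k) (Q k)) : count P n + count Q n = n := by
  induction n with
  | zero => simp
  | succ n ih =>
    have := ih fun k hk => h k (by omega)
    rw [count_succ, count_succ]
    rcases h n (by omega) with ⟨hP, hQ⟩ | ⟨hQ, hP⟩ <;>
      simp only [hP, hQ, if_true, if_false] <;> omega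

theorem Nat.exists_count_add_eq (P : ℕ → Prop) [DecidablePred P] {d m a : ℕ} (hd : 0 < d)
    (h : count P (d * m) = d * a) : ∃ k, count P (k + m) = count P k + a := by
  set g : ℕ → ℤ := fun k => count P (k + m) - count P k - a
  have hstep : ∀ k, |g (k + 1) - g k| ≤ 1 := by
    intro k
    simp only [g, add_right_comm k 1 m, count_succ]
    split_ifs <;> rw [abs_le] <;> push_cast <;> constructor <;> linarith
  have hsum : ∑ i ∈ range d, g (i * m) = 0 := by
    have := Finset.sum_range_sub (fun i => (count P (i * m) : ℤ)) d
    simp only [g, sum_sub_distrib, sum_const, card_range, ← succ_mul, h, zero_mul,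
      count_zero] at this ⊢
    rw [this]
    push_cast
    ring
  have hne : (range d).Nonempty := nonempty_range_iff.2 hd.ne'
  obtain ⟨i, -, hi⟩ := exists_le_of_sum_le hne (f := fun i => g (i * m)) (g := 0) (by simp [hsum])
  obtain ⟨j, -, hj⟩ := exists_le_of_sum_le hne (f := 0) (g := fun i => g (i * m)) (by simp [hsum])
  obtain ⟨k, hk⟩ := Int.exists_eq_zero_of_abs_sub_le_one hstep hi hj
  exact ⟨k, by simp only [g] at hk; omega⟩

namespace Equiv.Perm

variable {α G : Type*}

theorem IsCycleOn.card_filter_eq_count {f : Perm α} {s : Finset α} (hf : f.IsCycleOn s) {a : α}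
    (ha : a ∈ s) (P : α → Prop) [DecidablePred P] :
    #{y ∈ s | P y} = Nat.count (fun k => P ((f ^ k) a)) #s := by
  rw [Nat.count_eq_card_filter_range]
  refine (card_nbij (fun k => (f ^ k) a) ?_ ?_ ?_).symm
  · intro k hk
    simp only [coe_filter, mem_range, Set.mem_ofPred_eq] at hk ⊢
    exact ⟨hf.1.mapsTo.perm_pow k ha, hk.2⟩
  · intro i hi j hj hij
    simp only [coe_filter, mem_range, Set.mem_ofPred_eq] at hi hj
    have : i % #s = j % #s := (hf.pow_apply_eq_pow_apply ha).1 hij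
    rwa [Nat.mod_eq_of_lt hi.1, Nat.mod_eq_of_lt hj.1] at this
  · intro y hy
    simp only [coe_filter, Set.mem_ofPred_eq] at hy
    obtain ⟨k, hk, rfl⟩ := hf.exists_pow_eq ha hy.1
    exact ⟨k, by simpa [hk] using hy.2, rfl⟩

variable [AddCommGroup G]

def displacement (σ : Perm α) (v : α → G) (y : α) : G := v (σ y) - v y

variable [DecidableEq G] {σ : Perm α} {v : α → G} {g₁ g₂ : G}

theorem apply_pow_eq_add_count_smul (hα : g₁ ≠ g₂) {y : α}
    (hδ : ∀ i, displacement σ v ((σ ^ i) y) = g₁ ∨ displacement σ v ((σ ^ i) y) = g₂) (m : ℕ) :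
    v ((σ ^ m) y) = v y + Nat.count (fun i => displacement σ v ((σ ^ i) y) = g₁) m • g₁
      + Nat.count (fun i => displacement σ v ((σ ^ i) y) = g₂) m • g₂ := by
  induction m with
  | zero => simp
  | succ m ih =>
    have hstep : v ((σ ^ (m + 1)) y) = v ((σ ^ m) y) + displacement σ v ((σ ^ m) y) := by
      rw [_root_.pow_succ', mul_apply, displacement, add_sub_cancel]
    rw [hstep, ih, Nat.count_succ, Nat.count_succ]
    rcases hδ m with h | h <;> simp [h, hα, hα.symm, add_smul] <;> abel

variable {s : Finset α}

theorem IsCycleOn.card_filter_smul_add_card_filter_smul_eq_zero (hσ : σ.IsCycleOn s)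
    (hα : g₁ ≠ g₂) (hδ : ∀ y ∈ s, displacement σ v y = g₁ ∨ displacement σ v y = g₂) :
    #{y ∈ s | displacement σ v y = g₁} • g₁ + #{y ∈ s | displacement σ v y = g₂} • g₂ = 0 := by
  obtain rfl | ⟨x, hx⟩ := s.eq_empty_or_nonempty
  · simp
  have horbit : ∀ i, (σ ^ i) x ∈ s := fun i => hσ.1.mapsTo.perm_pow i hx
  have hclosed := apply_pow_eq_add_count_smul hα (fun i => hδ _ (horbit i)) #s
  rw [hσ.pow_card_apply hx, add_assoc, left_eq_add] at hclosed
  rwa [hσ.card_filter_eq_count hx, hσ.card_filter_eq_count hx]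

theorem IsCycleOn.eq_one_of_card_filter_eq_mul (hv : Function.Injective v) (hσ : σ.IsCycleOn s)
    (hs : s.Nonempty) (hα : g₁ ≠ g₂)
    (hδ : ∀ y ∈ s, displacement σ v y = g₁ ∨ displacement σ v y = g₂) {d a b : ℕ}
    (ha : #{y ∈ s | displacement σ v y = g₁} = d * a)
    (hb : #{y ∈ s | displacement σ v y = g₂} = d * b) (hab : a • g₁ + b • g₂ = 0) : d = 1 := by
  obtain ⟨x, hx⟩ := hs
  have horbit : ∀ i, (σ ^ i) x ∈ s := fun i => hσ.1.mapsTo.perm_pow i hx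
  have hxor : ∀ {y}, y ∈ s → Xor (displacement σ v y = g₁) (displacement σ v y = g₂) := by
    intro y hy
    rcases hδ y hy with h | h
    · exact Or.inl ⟨h, h ▸ hα⟩
    · exact Or.inr ⟨h, h ▸ hα.symm⟩
  have hcard : #s = d * (a + b) := by
    rw [mul_add, ← ha, ← hb, hσ.card_filter_eq_count hx, hσ.card_filter_eq_count hx,
      Nat.count_add_count_of_xor fun k _ => hxor (horbit k)]
  have hpos : 0 < d * (a + b) := hcard ▸ card_pos.2 ⟨x, hx⟩
  have hcount : Nat.count (fun i => displacement σ v ((σ ^ i) x) = g₁) (d * (a + b)) = d * a := by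
    rw [← hcard, ← ha, hσ.card_filter_eq_count hx]
  obtain ⟨k, hk⟩ := Nat.exists_count_add_eq _ (Nat.pos_of_mul_pos_right hpos) hcount
  set y := (σ ^ k) x
  have hshift : ∀ i, (σ ^ (k + i)) x = (σ ^ i) y := fun i => by
    rw [add_comm, pow_add, mul_apply]
  have h₁ : Nat.count (fun i => displacement σ v ((σ ^ i) y) = g₁) (a + b) = a := by
    have := Nat.count_add (fun i => displacement σ v ((σ ^ i) x) = g₁) k (a + b)
    simp only [hshift] at this
    omega
  have h₂ : Nat.count (fun i => displacement σ v ((σ ^ i) y) = g₂) (a + b) = b := by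
    have := Nat.count_add_count_of_xor fun i (_ : i < a + b) => hxor (horbit (k + i))
    simp only [hshift] at this
    omega
  have hfix : (σ ^ (a + b)) y = y := hv <| by
    rw [apply_pow_eq_add_count_smul hα (fun i => hδ _ (hshift i ▸ horbit (k + i))), h₁, h₂,
      add_assoc, hab, add_zero]
  have hdvd := (hσ.pow_apply_eq (horbit k)).1 hfix
  rw [hcard] at hdvd
  exact Nat.dvd_one.1 <|
    (Nat.mul_dvd_mul_iff_right (Nat.pos_of_mul_pos_left hpos)).1 (by rwa [one_mul])

end Equiv.Perm

theorem Nat.gcd_gcd_add_div_eq_one {r t q₁ q₂ p : ℕ} (hp : p ∣ r * q₁ + t * q₂)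
    (h : ∀ d a b, r = d * a → t = d * b → p ∣ a * q₁ + b * q₂ → d = 1) :
    Nat.gcd r (Nat.gcd t ((r * q₁ + t * q₂) / p)) = 1 := by
  set d := Nat.gcd r (Nat.gcd t ((r * q₁ + t * q₂) / p))
  obtain ⟨a, ha⟩ : d ∣ r := Nat.gcd_dvd_left _ _
  obtain ⟨b, hb⟩ : d ∣ t := (Nat.gcd_dvd_right _ _).trans (Nat.gcd_dvd_left _ _)
  obtain ⟨l, hl⟩ : d ∣ (r * q₁ + t * q₂) / p :=
    (Nat.gcd_dvd_right _ _).trans (Nat.gcd_dvd_right _ _)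
  rcases Nat.eq_zero_or_pos d with hd | hd
  · rw [hd] at ha hb ⊢
    exact h 0 0 0 (by simpa using ha) (by simpa using hb) (by simp)
  refine h d a b ha hb ⟨l, Nat.eq_of_mul_eq_mul_left hd ?_⟩
  calc d * (a * q₁ + b * q₂) = r * q₁ + t * q₂ := by rw [ha, hb]; ring
    _ = p * ((r * q₁ + t * q₂) / p) := (Nat.mul_div_cancel' hp).symm
    _ = d * (p * l) := by rw [hl]; ring

theorem stmt_9_general (p q₁ q₂ : ℕ) (h₁₂ : q₁ < q₂) (h₂p : q₂ < p)
    (σ : Equiv.Perm (Fin p))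
    (hσ : ∀ j : Fin p,
      (((σ j : ℕ) : ZMod p) - ((j : ℕ) : ZMod p) = 0) ∨
      (((σ j : ℕ) : ZMod p) - ((j : ℕ) : ZMod p) = (q₁ : ZMod p)) ∨
      (((σ j : ℕ) : ZMod p) - ((j : ℕ) : ZMod p) = (q₂ : ZMod p))) :
    ∀ c ∈ σ.cycleFactorsFinset,
      Nat.gcd
        ((c.support.filter fun j : Fin p =>
          ((σ j : ℕ) : ZMod p) - ((j : ℕ) : ZMod p) = (q₁ : ZMod p)).card)
        (Nat.gcd
          ((c.support.filter fun j : Fin p =>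
            ((σ j : ℕ) : ZMod p) - ((j : ℕ) : ZMod p) = (q₂ : ZMod p)).card)
          (((c.support.filter fun j : Fin p =>
              ((σ j : ℕ) : ZMod p) - ((j : ℕ) : ZMod p) = (q₁ : ZMod p)).card * q₁
            + (c.support.filter fun j : Fin p =>
              ((σ j : ℕ) : ZMod p) - ((j : ℕ) : ZMod p) = (q₂ : ZMod p)).card * q₂) / p))
      = 1 := by
  intro c hc
  set v : Fin p → ZMod p := fun j => ((j : ℕ) : ZMod p)
  have hv : Function.Injective v := fun i j h => Fin.ext <| by
    simpa [v, ZMod.natCast_eq_natCast_iff', Nat.mod_eq_of_lt i.2, Nat.mod_eq_of_lt j.2] using h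
  have hq : (q₁ : ZMod p) ≠ q₂ := by
    rw [Ne, ZMod.natCast_eq_natCast_iff', Nat.mod_eq_of_lt (h₁₂.trans h₂p), Nat.mod_eq_of_lt h₂p]
    exact h₁₂.ne
  have hcyc := Equiv.Perm.isCycleOn_support_of_mem_cycleFactorsFinset hc
  have hne := (Equiv.Perm.mem_cycleFactorsFinset_iff.1 hc).1.nonempty_support
  have hδ : ∀ j ∈ c.support, σ.displacement v j = q₁ ∨ σ.displacement v j = q₂ := fun j hj =>
    (hσ j).resolve_left fun h => Equiv.Perm.mem_support.1
      (Equiv.Perm.mem_cycleFactorsFinset_support_le hc hj) (hv (sub_eq_zero.1 h))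
  have hclosed := hcyc.card_filter_smul_add_card_filter_smul_eq_zero hq hδ
  refine Nat.gcd_gcd_add_div_eq_one ((ZMod.natCast_eq_zero_iff _ _).1 ?_)
    fun d a b ha hb hab => hcyc.eq_one_of_card_filter_eq_mul hv hne hq hδ ha hb ?_
  · rw [nsmul_eq_mul, nsmul_eq_mul] at hclosed
    push_cast
    exact hclosed
  · simpa [nsmul_eq_mul, mul_comm] using (ZMod.natCast_eq_zero_iff _ p).2 hab

theorem stmt_9 (p q₁ q₂ : ℕ) (h₁ : 0 < q₁) (h₁₂ : q₁ < q₂) (h₂p : q₂ < p)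
    (hgcd : Nat.gcd p (Nat.gcd q₁ q₂) = 1)
    (σ : Equiv.Perm (Fin p))
    (hσ : ∀ j : Fin p,
      (((σ j : ℕ) : ZMod p) - ((j : ℕ) : ZMod p) = 0) ∨
      (((σ j : ℕ) : ZMod p) - ((j : ℕ) : ZMod p) = (q₁ : ZMod p)) ∨
      (((σ j : ℕ) : ZMod p) - ((j : ℕ) : ZMod p) = (q₂ : ZMod p))) :
    ∀ c ∈ σ.cycleFactorsFinset,
      Nat.gcd
        ((c.support.filter fun j : Fin p =>
          ((σ j : ℕ) : ZMod p) - ((j : ℕ) : ZMod p) = (q₁ : ZMod p)).card)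
        (Nat.gcd
          ((c.support.filter fun j : Fin p =>
            ((σ j : ℕ) : ZMod p) - ((j : ℕ) : ZMod p) = (q₂ : ZMod p)).card)
          (((c.support.filter fun j : Fin p =>
              ((σ j : ℕ) : ZMod p) - ((j : ℕ) : ZMod p) = (q₁ : ZMod p)).card * q₁
            + (c.support.filter fun j : Fin p =>
              ((σ j : ℕ) : ZMod p) - ((j : ℕ) : ZMod p) = (q₂ : ZMod p)).card * q₂) / p))
      = 1 :=
  stmt_9_general p q₁ q₂ h₁₂ h₂p σ hσ
end

section
/- Let σ be a permutation of {1,...,p} with gcd(p, q_1, q_2) = 1, 0 < q_1 < q_2 < p, whose steps σ(j) - j mod p all lie in {0, q_1, q_2}. If C and C' are two non-trivial cycles of σ with r, s (resp. r', s') counting their q_1-steps and q_2-steps, then r = r' and s = s'. -/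
open Finset

private lemma small_dvd_zero {p : ℕ} {z : ℤ} (h : (p : ℤ) ∣ z)
    (h1 : -(p : ℤ) < z) (h2 : z < p) : z = 0 := by
  rcases h with ⟨e, rfl⟩
  rcases Nat.eq_zero_or_pos p with hp | hp
  · subst hp; simp
  · have hp' : (0 : ℤ) < p := by exact_mod_cast hp
    have h3 : e < 1 := by nlinarith
    have h4 : -1 < e := by nlinarith
    have : e = 0 := by omega
    simp [this]

private lemma ivt_up (t : ℤ) (ht : 0 < t) (D : ℕ → ℤ) (V : ℤ)
    (hstep : ∀ k, D (k + 1) ≤ D k + t)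
    (hdiv : ∀ k, t ∣ D k - V)
    (h0 : D 0 ≤ V) :
    ∀ K, V ≤ D K → ∃ k, D k = V := by
  intro K
  induction K with
  | zero => exact fun h => ⟨0, le_antisymm h0 h⟩
  | succ n ih =>
    intro h
    by_cases hn : V ≤ D n
    · exact ih hn
    · push_neg at hn
      refine ⟨n + 1, ?_⟩
      obtain ⟨e, he⟩ := hdiv (n + 1)
      have h1 := hstep n
      have e0 : 0 ≤ e := by nlinarith
      have e1 : e < 1 := by nlinarith
      have : e = 0 := by omega
      rw [this, mul_zero] at he
      linarith

private lemma steps_sub (q₁ q₂ : ℕ) (a : ℕ → ℤ)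
    (ha : ∀ k, a (k + 1) = a k + q₁ ∨ a (k + 1) = a k + q₂) :
    ∀ k j : ℕ, ((q₂ : ℤ) - q₁) ∣ a (k + j) - a k - j * q₁ := by
  intro k j
  induction j with
  | zero => simp
  | succ n ih =>
    have hkn : k + (n + 1) = (k + n) + 1 := by omega
    rcases ha (k + n) with h | h
    · have he : a (k + (n + 1)) - a k - (n + 1 : ℕ) * q₁
          = a (k + n) - a k - n * q₁ := by
        rw [hkn, h]; push_cast; ring
      rw [he]; exact ih
    · have he : a (k + (n + 1)) - a k - (n + 1 : ℕ) * q₁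
          = (a (k + n) - a k - n * q₁) + ((q₂ : ℤ) - q₁) := by
        rw [hkn, h]; push_cast; ring
      rw [he]; exact dvd_add ih dvd_rfl

private lemma period_iter (a : ℕ → ℤ) (L : ℕ) (P : ℤ)
    (hp : ∀ k, a (k + L) = a k + P) :
    ∀ j k, a (k + j * L) = a k + j * P := by
  intro j
  induction j with
  | zero => simp
  | succ n ih =>
    intro k
    have h1 : k + (n + 1) * L = (k + n * L) + L := by ring
    rw [h1, hp, ih]; push_cast; ring

private lemma sum_head (b : ℕ → ℤ) (m : ℕ) :
    ∀ n, ∑ k ∈ Finset.range n, b (k + m)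
      = (∑ k ∈ Finset.range (n + m), b k) - ∑ k ∈ Finset.range m, b k := by
  intro n
  induction n with
  | zero => simp
  | succ n ih =>
    have h1 : n + 1 + m = (n + m) + 1 := by omega
    rw [Finset.sum_range_succ, ih, h1, Finset.sum_range_succ]
    ring

private lemma sum_steps (q₁ q₂ : ℕ) (hne : q₁ ≠ q₂) (a : ℕ → ℤ)
    (ha : ∀ k, a (k + 1) = a k + q₁ ∨ a (k + 1) = a k + q₂) (L : ℕ) :
    a L - a 0 = q₁ * (((Finset.range L).filter fun k => a (k + 1) = a k + q₁).card : ℤ)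
      + q₂ * ((L : ℤ) - (((Finset.range L).filter fun k => a (k + 1) = a k + q₁).card : ℤ)) := by
  have hq : (q₁ : ℤ) ≠ (q₂ : ℤ) := by exact_mod_cast hne
  induction L with
  | zero => simp
  | succ n ih =>
    rw [Finset.range_add_one, Finset.filter_insert]
    rcases ha n with h | h
    · rw [if_pos h, Finset.card_insert_of_notMem (by simp)]
      push_cast
      rw [h]
      push_cast at ih
      linarith
    · have hnp : ¬ (a (n + 1) = a n + q₁) := by rw [h]; intro hh; exact hq (by linarith)
      rw [if_neg hnp]
      push_cast
      rw [h]
      push_cast at ih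
      linarith
set_option maxHeartbeats 1000000 in
private lemma core1 (p q₁ q₂ : ℕ) (h₁ : 0 < q₁) (h₁₂ : q₁ < q₂) (h₂p : q₂ < p)
    (hgcd : Nat.gcd p (Nat.gcd q₁ q₂) = 1)
    (a b : ℕ → ℤ) (La Lb : ℕ) (hLa : 0 < La) (hLb : 0 < Lb)
    (ha : ∀ k, a (k + 1) = a k + q₁ ∨ a (k + 1) = a k + q₂)
    (hb : ∀ k, b (k + 1) = b k + q₁ ∨ b (k + 1) = b k + q₂)
    (hpa : ∀ k, a (k + La) = a k + (a La - a 0))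
    (hpb : ∀ k, b (k + Lb) = b k + (b Lb - b 0))
    (hdisj : ∀ k m, ¬ ((p : ℤ) ∣ a k - b m)) :
    (a La - a 0) * Lb ≤ (b Lb - b 0) * La := by
  by_contra hlt
  push_neg at hlt
  set t : ℕ := q₂ - q₁ with ht'
  have htpos : 0 < t := by omega
  have htz : ((q₂ : ℤ) - q₁) = (t : ℤ) := by push_cast; omega
  have htz0 : (0 : ℤ) < ((q₂ : ℤ) - q₁) := by push_cast; omega
  set d : ℕ := Nat.gcd t p with hd'
  have hdpos : 0 < d := Nat.gcd_pos_of_pos_right _ (by omega)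
  haveI : NeZero d := ⟨by omega⟩
  -- coprimality of q₁ with d
  have hcop : Nat.Coprime q₁ d := by
    have h1' : Nat.gcd q₁ d ∣ q₁ := Nat.gcd_dvd_left _ _
    have h2' : Nat.gcd q₁ d ∣ t := dvd_trans (Nat.gcd_dvd_right _ _) (Nat.gcd_dvd_left _ _)
    have h3' : Nat.gcd q₁ d ∣ p := dvd_trans (Nat.gcd_dvd_right _ _) (Nat.gcd_dvd_right _ _)
    have h4' : Nat.gcd q₁ d ∣ q₂ := by
      have hq : q₂ = q₁ + t := by omega
      rw [hq]; exact dvd_add h1' h2'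
    have : Nat.gcd q₁ d ∣ 1 := hgcd ▸ Nat.dvd_gcd h3' (Nat.dvd_gcd h1' h4')
    exact Nat.dvd_one.mp this
  have hunit : IsUnit ((q₁ : ZMod d)) := (ZMod.isUnit_iff_coprime q₁ d).mpr hcop
  set u : ZMod d := ((a 0 - b 0 : ℤ) : ZMod d) * (q₁ : ZMod d)⁻¹ with hu
  set c : ℕ := u.val with hc
  have hcu : ((c : ℕ) : ZMod d) = u := ZMod.natCast_rightInverse u
  have hdD0' : (d : ℤ) ∣ (a 0 - b 0 - (c : ℤ) * q₁) := by
    rw [← ZMod.intCast_zmod_eq_zero_iff_dvd]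
    push_cast
    rw [hcu, hu, mul_assoc, ZMod.inv_mul_of_unit _ hunit, mul_one]
    push_cast
    ring
  -- D sequence
  set D : ℕ → ℤ := fun k => a k - b (k + c) with hD
  have hq12z : (q₁ : ℤ) < q₂ := by exact_mod_cast h₁₂
  have hDstep : ∀ k, D (k + 1) ≤ D k + ((q₂ : ℤ) - q₁) := by
    intro k
    have e : k + 1 + c = (k + c) + 1 := by omega
    show a (k + 1) - b (k + 1 + c) ≤ a k - b (k + c) + _
    rw [e]
    rcases ha k with h | h <;> rcases hb (k + c) with h' | h' <;> rw [h, h'] <;> linarith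
  have hDstepdvd : ∀ k, ((q₂ : ℤ) - q₁) ∣ D (k + 1) - D k := by
    intro k
    have e : k + 1 + c = (k + c) + 1 := by omega
    show ((q₂ : ℤ) - q₁) ∣ (a (k + 1) - b (k + 1 + c)) - (a k - b (k + c))
    rw [e]
    rcases ha k with h | h <;> rcases hb (k + c) with h' | h' <;> rw [h, h']
    · exact ⟨0, by ring⟩
    · exact ⟨-1, by ring⟩
    · exact ⟨1, by ring⟩
    · exact ⟨0, by ring⟩
  have hDmod : ∀ k, ((q₂ : ℤ) - q₁) ∣ D k - D 0 := by
    intro k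
    induction k with
    | zero => simp
    | succ n ih =>
      have : D (n + 1) - D 0 = (D (n + 1) - D n) + (D n - D 0) := by ring
      rw [this]; exact dvd_add (hDstepdvd n) ih
  -- d divides D 0
  have hdt : (d : ℤ) ∣ ((q₂ : ℤ) - q₁) := by
    rw [htz]; exact_mod_cast Nat.gcd_dvd_left t p
  have hbc : ((q₂ : ℤ) - q₁) ∣ b c - b 0 - (c : ℤ) * q₁ := by
    have := steps_sub q₁ q₂ b hb 0 c
    simpa using this
  have hdD0 : (d : ℤ) ∣ D 0 := by
    have he : D 0 = (a 0 - b 0 - (c : ℤ) * q₁) - (b c - b 0 - (c : ℤ) * q₁) := by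
      show a 0 - b (0 + c) = _
      rw [Nat.zero_add]; ring
    rw [he]
    exact dvd_sub hdD0' (dvd_trans hdt hbc)
  -- Bezout : construct V
  obtain ⟨w, hw⟩ := hdD0
  have hbez : (d : ℤ) = t * Nat.gcdA t p + p * Nat.gcdB t p := Nat.gcd_eq_gcd_ab t p
  set V0 : ℤ := D 0 - ((q₂ : ℤ) - q₁) * (Nat.gcdA t p * w) with hV0'
  have hpV0 : (p : ℤ) ∣ V0 := by
    refine ⟨Nat.gcdB t p * w, ?_⟩
    rw [hV0', hw, htz]
    linear_combination w * hbez
  set M : ℕ := (D 0 - V0).toNat with hM'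
  set V : ℤ := V0 + ((q₂ : ℤ) - q₁) * p * M with hV'
  have hpV : (p : ℤ) ∣ V := by
    refine dvd_add hpV0 ⟨((q₂ : ℤ) - q₁) * M, by ring⟩
  have htV : ((q₂ : ℤ) - q₁) ∣ V - D 0 := by
    refine ⟨-(Nat.gcdA t p * w) + p * M, ?_⟩
    rw [hV', hV0']; ring
  have hDV : D 0 ≤ V := by
    have hm1 := Int.self_le_toNat (D 0 - V0)
    have hm0 : (0 : ℤ) ≤ (M : ℤ) := Int.natCast_nonneg _
    have hp1 : (1 : ℤ) ≤ (p : ℤ) := by exact_mod_cast (by omega : 1 ≤ p)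
    have ht1 : (1 : ℤ) ≤ ((q₂ : ℤ) - q₁) := by push_cast; omega
    have htp : (1 : ℤ) ≤ ((q₂ : ℤ) - q₁) * p := by nlinarith
    have hmm := mul_le_mul_of_nonneg_right htp hm0
    rw [hV']
    linarith
  -- drift
  set Pa : ℤ := a La - a 0 with hPa'
  set Pb : ℤ := b Lb - b 0 with hPb'
  set E : ℤ := (Lb : ℤ) * Pa - (La : ℤ) * Pb with hE'
  have hE1 : 1 ≤ E := by
    have : Pb * (La : ℤ) < Pa * (Lb : ℤ) := hlt
    have : 0 < E := by rw [hE']; linarith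
    omega
  have hdrift : ∀ j k, D (k + j * (La * Lb)) = D k + (j : ℤ) * E := by
    intro j k
    have h1 := period_iter a La Pa hpa (j * Lb) k
    have h2 := period_iter b Lb Pb hpb (j * La) (k + c)
    have e1 : k + j * (La * Lb) = k + (j * Lb) * La := by ring
    have e2 : (k + (j * Lb) * La) + c = (k + c) + (j * La) * Lb := by ring
    show a (k + j * (La * Lb)) - b ((k + j * (La * Lb)) + c) = _
    rw [e1, e2, h1, h2]
    show a k + ((j * Lb : ℕ) : ℤ) * Pa - (b (k + c) + ((j * La : ℕ) : ℤ) * Pb) = _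
    push_cast
    ring
  -- find K with V ≤ D K
  set j0 : ℕ := (V - D 0).toNat with hj0'
  have hK : V ≤ D (0 + j0 * (La * Lb)) := by
    rw [hdrift j0 0]
    have hm1 := Int.self_le_toNat (V - D 0)
    have hm0 : (0 : ℤ) ≤ (j0 : ℤ) := Int.natCast_nonneg _
    have hmm : (j0 : ℤ) * 1 ≤ (j0 : ℤ) * E := mul_le_mul_of_nonneg_left hE1 hm0
    linarith
  obtain ⟨k, hk⟩ := ivt_up ((q₂ : ℤ) - q₁) htz0 D V hDstep
    (fun k => by
      have : D k - V = (D k - D 0) - (V - D 0) := by ring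
      rw [this]; exact dvd_sub (hDmod k) htV)
    hDV (0 + j0 * (La * Lb)) hK
  exact hdisj k (k + c) (by rw [show a k - b (k + c) = D k from rfl, hk]; exact hpV)
set_option maxHeartbeats 1000000 in
private lemma core2 (p q₁ q₂ : ℕ) (h₁ : 0 < q₁) (h₁₂ : q₁ < q₂) (h₂p : q₂ < p)
    (b : ℕ → ℤ) (La Lb : ℕ) (hLa : 0 < La) (hLb : 0 < Lb)
    (hb : ∀ k, b (k + 1) = b k + q₁ ∨ b (k + 1) = b k + q₂)
    (hpb : ∀ k, b (k + Lb) = b k + (b Lb - b 0))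
    (Pa : ℤ)
    (hprop : Pa * Lb = (b Lb - b 0) * La)
    (hPa : (p : ℤ) ∣ Pa) (hPb : (p : ℤ) ∣ (b Lb - b 0))
    (hPamod : ((q₂ : ℤ) - q₁) ∣ (Pa - q₁ * La))
    (hbinj : ∀ k m, k < Lb → m < Lb → ((p : ℤ) ∣ b k - b m) → k = m) :
    Lb ≤ La := by
  by_contra hLL
  push_neg at hLL   -- La < Lb
  set Pb : ℤ := b Lb - b 0 with hPb'
  have htz0 : (0 : ℤ) < ((q₂ : ℤ) - q₁) := by push_cast; omega
  set G : ℕ → ℤ := fun k => b (k + La) - b k - Pa with hG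
  have hGmod : ∀ k, ((q₂ : ℤ) - q₁) ∣ G k := by
    intro k
    have h1 := steps_sub q₁ q₂ b hb k La
    have he : G k = (b (k + La) - b k - (La : ℤ) * q₁) - (Pa - (q₁ : ℤ) * La) := by
      rw [hG]; ring
    rw [he]
    exact dvd_sub h1 hPamod
  have hGstepup : ∀ k, G (k + 1) ≤ G k + ((q₂ : ℤ) - q₁) := by
    intro k
    have e : k + 1 + La = (k + La) + 1 := by omega
    show b (k + 1 + La) - b (k + 1) - Pa ≤ b (k + La) - b k - Pa + _
    rw [e]
    rcases hb (k + La) with h | h <;> rcases hb k with h' | h' <;> rw [h, h'] <;> push_cast <;> linarith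
  have hGper : ∀ k, G (k + Lb) = G k := by
    intro k
    have e : k + Lb + La = (k + La) + Lb := by omega
    show b (k + Lb + La) - b (k + Lb) - Pa = b (k + La) - b k - Pa
    rw [e, hpb, hpb]
    ring
  have hGperN : ∀ n k, G (k + n * Lb) = G k := by
    intro n
    induction n with
    | zero => simp
    | succ m ih =>
      intro k
      have e : k + (m + 1) * Lb = (k + m * Lb) + Lb := by ring
      rw [e, hGper, ih]
  -- sum of G over a period is zero
  have hsplit : ∀ m n : ℕ, ∑ k ∈ Finset.range n, (b (k + m) - b k)
      = (∑ k ∈ Finset.range (n + m), b k) - (∑ k ∈ Finset.range m, b k)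
        - (∑ k ∈ Finset.range n, b k) := by
    intro m n
    rw [Finset.sum_sub_distrib, sum_head]
  have h3 : ∑ k ∈ Finset.range La, (b (k + Lb) - b k) = (La : ℤ) * Pb := by
    have hcg : ∀ k ∈ Finset.range La, b (k + Lb) - b k = Pb := fun k _ => by rw [hpb k]; ring
    rw [Finset.sum_congr rfl hcg, Finset.sum_const, Finset.card_range, nsmul_eq_mul]
  have hSG : ∑ k ∈ Finset.range Lb, G k = 0 := by
    have e1 := hsplit La Lb
    have e2 := hsplit Lb La
    have e3 : ∑ k ∈ Finset.range Lb, G k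
        = (∑ k ∈ Finset.range Lb, (b (k + La) - b k)) - (Lb : ℤ) * Pa := by
      rw [hG]
      rw [show (fun k => b (k + La) - b k - Pa) = (fun k => (b (k + La) - b k) - Pa) from rfl]
      rw [Finset.sum_sub_distrib]
      simp [Finset.sum_const, Finset.card_range, mul_comm]
    have e4 : Lb + La = La + Lb := by omega
    have e5 : (∑ k ∈ Finset.range (La + Lb), b k) - (∑ k ∈ Finset.range Lb, b k)
        - (∑ k ∈ Finset.range La, b k) = (La : ℤ) * Pb := by rw [← e2, h3]
    rw [e3, e1, e4]
    linarith [hprop, e5]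
  -- find k with G k = 0
  have hGzero : ∃ k, G k = 0 := by
    by_cases hpos : ∀ k ∈ Finset.range Lb, 0 < G k
    · exfalso
      have := Finset.sum_pos hpos ⟨0, Finset.mem_range.mpr hLb⟩
      omega
    · push_neg at hpos
      obtain ⟨i, hiR, hi⟩ := hpos
      by_cases hneg : ∀ k ∈ Finset.range Lb, G k < 0
      · exfalso
        have h5 : ∀ k ∈ Finset.range Lb, 0 < -G k := fun k hk => by
          have := hneg k hk; linarith
        have := Finset.sum_pos h5 ⟨0, Finset.mem_range.mpr hLb⟩
        rw [Finset.sum_neg_distrib] at this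
        omega
      · push_neg at hneg
        obtain ⟨j, hjR, hj⟩ := hneg
        -- apply ivt to D k := G (i + k), target 0
        have hij : i ≤ i * Lb := Nat.le_mul_of_pos_right i hLb
        set K : ℕ := j + i * Lb - i with hK'
        have hiK : i + K = j + i * Lb := by omega
        have hDK : (0 : ℤ) ≤ G (i + K) := by rw [hiK, hGperN i j]; exact hj
        obtain ⟨k, hk⟩ := ivt_up ((q₂ : ℤ) - q₁) htz0 (fun k => G (i + k)) 0
          (fun k => by
            have e : i + (k + 1) = (i + k) + 1 := by omega
            simpa [e] using hGstepup (i + k))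
          (fun k => by simpa using hGmod (i + k))
          (by simpa using hi) K hDK
        exact ⟨i + k, hk⟩
  obtain ⟨k0, hk0⟩ := hGzero
  -- collision
  have hcol : (p : ℤ) ∣ b (k0 + La) - b k0 := by
    have : b (k0 + La) - b k0 = Pa := by
      have := hk0
      rw [hG] at this
      simp only at this
      linarith
    rw [this]; exact hPa
  set k1 : ℕ := k0 % Lb with hk1'
  set k2 : ℕ := (k0 + La) % Lb with hk2'
  have hred : ∀ m : ℕ, (p : ℤ) ∣ b m - b (m % Lb) := by
    intro m
    have h6 := period_iter b Lb Pb hpb (m / Lb) (m % Lb)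
    have e : m % Lb + m / Lb * Lb = m := Nat.mod_add_div' m Lb
    rw [e] at h6
    rw [h6]
    have e2 : b (m % Lb) + ((m / Lb : ℕ) : ℤ) * Pb - b (m % Lb) = ((m / Lb : ℕ) : ℤ) * Pb := by
      ring
    rw [e2]
    exact Dvd.dvd.mul_left hPb _
  have hchain : (p : ℤ) ∣ b k2 - b k1 := by
    have h7 := hred k0
    have h8 := hred (k0 + La)
    have e : b k2 - b k1 = -(b (k0 + La) - b k2) + (b (k0 + La) - b k0) + (b k0 - b k1) := by ring
    rw [e]
    exact dvd_add (dvd_add (dvd_neg.mpr h8) hcol) h7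
  have hk12 : k2 = k1 := by
    refine hbinj k2 k1 (Nat.mod_lt _ hLb) (Nat.mod_lt _ hLb) hchain
  have hdvd : Lb ∣ La := by
    have hmeq : Nat.ModEq Lb k0 (k0 + La) := by
      show k0 % Lb = (k0 + La) % Lb
      rw [← hk1', ← hk2', hk12]
    have := (Nat.modEq_iff_dvd' (Nat.le_add_right k0 La)).mp hmeq
    simpa using this
  have := Nat.le_of_dvd hLa hdvd
  omega
set_option maxHeartbeats 1000000 in
private lemma cycle_data (p q₁ q₂ : ℕ) (h₁ : 0 < q₁) (h₁₂ : q₁ < q₂) (h₂p : q₂ < p)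
    (σ : Equiv.Perm (Fin p))
    (hσ : ∀ j : Fin p,
      (((σ j : ℕ) : ZMod p) - ((j : ℕ) : ZMod p) = 0) ∨
      (((σ j : ℕ) : ZMod p) - ((j : ℕ) : ZMod p) = (q₁ : ZMod p)) ∨
      (((σ j : ℕ) : ZMod p) - ((j : ℕ) : ZMod p) = (q₂ : ZMod p)))
    (c : Equiv.Perm (Fin p)) (hc : c ∈ σ.cycleFactorsFinset) :
    ∃ (L : ℕ) (a : ℕ → ℤ) (pos : ℕ → Fin p),
      0 < L ∧
      (∀ k, pos k ∈ c.support) ∧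
      (∀ k, (p : ℤ) ∣ a k - ((pos k : ℕ) : ℤ)) ∧
      (∀ k, a (k + 1) = a k + q₁ ∨ a (k + 1) = a k + q₂) ∧
      (∀ k, a (k + L) = a k + (a L - a 0)) ∧
      ((p : ℤ) ∣ (a L - a 0)) ∧
      (∀ k m, k < L → m < L → pos k = pos m → k = m) ∧
      ((c.support.filter fun j : Fin p =>
          ((σ j : ℕ) : ZMod p) - ((j : ℕ) : ZMod p) = (q₁ : ZMod p)).card
        = ((Finset.range L).filter fun k => a (k + 1) = a k + q₁).card) ∧
      ((c.support.filter fun j : Fin p =>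
          ((σ j : ℕ) : ZMod p) - ((j : ℕ) : ZMod p) = (q₂ : ZMod p)).card
        = L - ((Finset.range L).filter fun k => a (k + 1) = a k + q₁).card) := by
  haveI : NeZero p := ⟨by omega⟩
  obtain ⟨hcyc, hcσ⟩ := Equiv.Perm.mem_cycleFactorsFinset_iff.mp hc
  obtain ⟨x, hx, -⟩ := id hcyc
  have hxs : x ∈ c.support := Equiv.Perm.mem_support.mpr hx
  set L := c.support.card with hL
  have hL0 : 0 < L := Finset.card_pos.mpr ⟨x, hxs⟩
  have hord : orderOf c = L := hcyc.orderOf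
  have hc1 : c ^ L = 1 := by rw [← hord]; exact pow_orderOf_eq_one c
  set pos : ℕ → Fin p := fun k => (c ^ k) x with hpos
  have hmem : ∀ k, pos k ∈ c.support := by
    intro k
    induction k with
    | zero => simpa [hpos] using hxs
    | succ n ih =>
      have h' : pos (n + 1) = c (pos n) := by
        show (c ^ (n + 1)) x = c ((c ^ n) x)
        rw [pow_succ']
        rfl
      rw [h']
      exact Equiv.Perm.apply_mem_support.mpr ih
  have hps : ∀ k, pos (k + 1) = σ (pos k) := by
    intro k
    have h' : pos (k + 1) = c (pos k) := by
      show (c ^ (k + 1)) x = c ((c ^ k) x)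
      rw [pow_succ']
      rfl
    rw [h', hcσ _ (hmem k)]
  have hper : ∀ k, pos (k + L) = pos k := by
    intro k
    show (c ^ (k + L)) x = (c ^ k) x
    rw [pow_add, hc1, mul_one]
  -- basic facts about steps
  have hzero : ∀ j : Fin p, (((σ j : ℕ) : ZMod p) - ((j : ℕ) : ZMod p) = 0) → σ j = j := by
    intro j h
    have h2 : ((σ j : ℕ) : ZMod p) = ((j : ℕ) : ZMod p) := by rwa [sub_eq_zero] at h
    have hv : ((σ j : ℕ) : ZMod p).val = (((j : ℕ) : ZMod p)).val := by rw [h2]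
    rw [ZMod.val_natCast_of_lt (σ j).isLt, ZMod.val_natCast_of_lt j.isLt] at hv
    exact Fin.ext hv
  have hq12 : (q₁ : ZMod p) ≠ (q₂ : ZMod p) := by
    intro h
    have hv := congrArg ZMod.val h
    rw [ZMod.val_natCast_of_lt (by omega), ZMod.val_natCast_of_lt (by omega)] at hv
    omega
  have hne : ∀ k, σ (pos k) ≠ pos k := by
    intro k
    have h' := Equiv.Perm.mem_support.mp (hmem k)
    rw [← hcσ _ (hmem k)]
    exact h'
  -- the lifted sequence
  classical
  set P1 : Fin p → Prop := fun j => ((σ j : ℕ) : ZMod p) - ((j : ℕ) : ZMod p) = (q₁ : ZMod p)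
    with hP1
  set a : ℕ → ℤ := fun k => ((x : ℕ) : ℤ)
      + ∑ i ∈ Finset.range k, (if P1 (pos i) then (q₁ : ℤ) else (q₂ : ℤ)) with ha'
  have hstep_a : ∀ k, a (k + 1) = a k + (if P1 (pos k) then (q₁ : ℤ) else (q₂ : ℤ)) := by
    intro k
    rw [ha']
    simp [Finset.sum_range_succ]
    ring
  have hstepdvd : ∀ k, (p : ℤ) ∣ (((pos k : ℕ) : ℤ)
      + (if P1 (pos k) then (q₁ : ℤ) else (q₂ : ℤ)) - ((pos (k + 1) : ℕ) : ℤ)) := by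
    intro k
    rw [hps k]
    rcases hσ (pos k) with h0 | hq1 | hq2
    · exact absurd (hzero _ h0) (hne k)
    · rw [if_pos (by exact hq1)]
      rw [← ZMod.intCast_zmod_eq_zero_iff_dvd]
      push_cast
      linear_combination (-1 : ZMod p) * hq1
    · have hnp : ¬ P1 (pos k) := by
        intro hP
        exact hq12 (by rw [← hP, hq2])
      rw [if_neg hnp]
      rw [← ZMod.intCast_zmod_eq_zero_iff_dvd]
      push_cast
      linear_combination (-1 : ZMod p) * hq2
  have hmod : ∀ k, (p : ℤ) ∣ a k - ((pos k : ℕ) : ℤ) := by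
    intro k
    induction k with
    | zero =>
      have : a 0 = ((x : ℕ) : ℤ) := by rw [ha']; simp
      rw [this]
      show (p : ℤ) ∣ ((x : ℕ) : ℤ) - (((c ^ 0) x : ℕ) : ℤ)
      simp
    | succ n ih =>
      have he : a (n + 1) - ((pos (n + 1) : ℕ) : ℤ)
          = (a n - ((pos n : ℕ) : ℤ))
            + (((pos n : ℕ) : ℤ) + (if P1 (pos n) then (q₁ : ℤ) else (q₂ : ℤ))
              - ((pos (n + 1) : ℕ) : ℤ)) := by
        rw [hstep_a n]; ring
      rw [he]
      exact dvd_add ih (hstepdvd n)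
  have hdich : ∀ k, a (k + 1) = a k + q₁ ∨ a (k + 1) = a k + q₂ := by
    intro k
    by_cases h : P1 (pos k)
    · left; rw [hstep_a k, if_pos h]
    · right; rw [hstep_a k, if_neg h]
  have hword : ∀ k, (if P1 (pos (k + L)) then (q₁ : ℤ) else (q₂ : ℤ))
      = (if P1 (pos k) then (q₁ : ℤ) else (q₂ : ℤ)) := by
    intro k; rw [hper k]
  have hpera : ∀ k, a (k + L) = a k + (a L - a 0) := by
    intro k
    induction k with
    | zero => simp
    | succ n ih =>
      have e1 : n + 1 + L = (n + L) + 1 := by omega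
      rw [e1, hstep_a (n + L), hword n, ih, hstep_a n]
      ring
  have hwind : (p : ℤ) ∣ (a L - a 0) := by
    have h1 := hmod L
    have h2 := hmod 0
    have h3 : pos L = pos 0 := by
      have := hper 0
      simpa using this
    rw [h3] at h1
    have he : a L - a 0 = (a L - ((pos 0 : ℕ) : ℤ)) - (a 0 - ((pos 0 : ℕ) : ℤ)) := by ring
    rw [he]
    exact dvd_sub h1 h2
  -- injectivity on [0, L)
  have hinj : ∀ k m, k < L → m < L → pos k = pos m → k = m := by
    have key : ∀ k m, k < m → m < L → pos k = pos m → False := by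
      intro k m hkm hmL heq
      have h5 : (c ^ (m - k)) ((c ^ k) x) = (c ^ k) x := by
        have : (c ^ (m - k)) ((c ^ k) x) = (c ^ m) x := by
          rw [← Equiv.Perm.mul_apply, ← pow_add, Nat.sub_add_cancel hkm.le]
        rw [this]
        exact heq.symm
      have hy : c ((c ^ k) x) ≠ (c ^ k) x := Equiv.Perm.mem_support.mp (hmem k)
      have h6 : c ^ (m - k) = 1 := (hcyc.pow_eq_one_iff' hy).mpr h5
      have h7 : orderOf c ∣ m - k := orderOf_dvd_of_pow_eq_one h6
      rw [hord] at h7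
      have h8 : m - k ≠ 0 := by omega
      have := Nat.le_of_dvd (by omega) h7
      omega
    intro k m hk hm heq
    rcases lt_trichotomy k m with h | h | h
    · exact absurd heq (fun he => key k m h hm he)
    · exact h
    · exact absurd heq.symm (fun he => key m k h hk he)
  -- surjectivity
  have hsurj : ∀ y ∈ c.support, ∃ k, k < L ∧ pos k = y := by
    intro y hy
    have hyne : c y ≠ y := Equiv.Perm.mem_support.mp hy
    obtain ⟨i, hi⟩ := hcyc.exists_pow_eq hx hyne
    refine ⟨i % L, Nat.mod_lt _ hL0, ?_⟩
    show (c ^ (i % L)) x = y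
    rw [← hi]
    conv_rhs => rw [← Nat.div_add_mod i L]
    rw [pow_add, pow_mul, hc1, one_pow, one_mul]
  -- counting
  have hcard : ∀ (P : Fin p → Prop) (_ : DecidablePred P),
      ((Finset.range L).filter fun k => P (pos k)).card = (c.support.filter P).card := by
    intro P hP
    refine Finset.card_bij (fun k _ => pos k) ?_ ?_ ?_
    · intro k hk
      rw [Finset.mem_filter] at hk ⊢
      exact ⟨hmem k, hk.2⟩
    · intro k hk m hm heq
      rw [Finset.mem_filter, Finset.mem_range] at hk hm
      exact hinj k m hk.1 hm.1 heq
    · intro y hy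
      rw [Finset.mem_filter] at hy
      obtain ⟨k, hkL, hky⟩ := hsurj y hy.1
      refine ⟨k, ?_, hky⟩
      rw [Finset.mem_filter, Finset.mem_range]
      exact ⟨hkL, by rw [hky]; exact hy.2⟩
  have hfilter1 : ((Finset.range L).filter fun k => P1 (pos k))
      = ((Finset.range L).filter fun k => a (k + 1) = a k + q₁) := by
    refine Finset.filter_congr ?_
    intro k _
    constructor
    · intro h
      rw [hstep_a k, if_pos h]
    · intro h
      by_contra hn
      rw [hstep_a k, if_neg hn] at h
      have : (q₁ : ℤ) = (q₂ : ℤ) := by linarith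
      have : q₁ = q₂ := by exact_mod_cast this
      omega
  have hcard1 : (c.support.filter fun j : Fin p =>
        ((σ j : ℕ) : ZMod p) - ((j : ℕ) : ZMod p) = (q₁ : ZMod p)).card
      = ((Finset.range L).filter fun k => a (k + 1) = a k + q₁).card := by
    rw [← hfilter1]
    exact (hcard P1 inferInstance).symm
  -- the q₂ filter
  have hdich2 : ∀ j ∈ c.support,
      ((((σ j : ℕ) : ZMod p) - ((j : ℕ) : ZMod p) = (q₂ : ZMod p)) ↔ ¬ P1 j) := by
    intro j hj
    have hjne : σ j ≠ j := by
      rw [← hcσ _ hj]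
      exact Equiv.Perm.mem_support.mp hj
    constructor
    · intro h2 h1
      exact hq12 (by rw [← h1, h2])
    · intro h1
      rcases hσ j with h0 | hq1 | hq2
      · exact absurd (hzero _ h0) hjne
      · exact absurd hq1 h1
      · exact hq2
  have hcard2 : (c.support.filter fun j : Fin p =>
        ((σ j : ℕ) : ZMod p) - ((j : ℕ) : ZMod p) = (q₂ : ZMod p)).card
      = L - ((Finset.range L).filter fun k => a (k + 1) = a k + q₁).card := by
    have he1 : (c.support.filter fun j : Fin p =>
        ((σ j : ℕ) : ZMod p) - ((j : ℕ) : ZMod p) = (q₂ : ZMod p))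
        = (c.support.filter fun j => ¬ P1 j) := by
      refine Finset.filter_congr ?_
      intro j hj
      exact hdich2 j hj
    have he2 : (c.support.filter P1).card + (c.support.filter fun j => ¬ P1 j).card
        = c.support.card := Finset.card_filter_add_card_filter_not _
    rw [he1, ← hcard1]
    have he2' : (c.support.filter fun j : Fin p =>
        ((σ j : ℕ) : ZMod p) - ((j : ℕ) : ZMod p) = (q₁ : ZMod p)).card
        + (c.support.filter fun j => ¬ P1 j).card = L := by
      rw [hL]
      exact he2
    omega
  exact ⟨L, a, pos, hL0, hmem, hmod, hdich, hpera, hwind, hinj, hcard1, hcard2⟩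
set_option maxHeartbeats 1000000 in
theorem stmt_10 (p q₁ q₂ : ℕ) (h₁ : 0 < q₁) (h₁₂ : q₁ < q₂) (h₂p : q₂ < p)
    (hgcd : Nat.gcd p (Nat.gcd q₁ q₂) = 1)
    (σ : Equiv.Perm (Fin p))
    (hσ : ∀ j : Fin p,
      (((σ j : ℕ) : ZMod p) - ((j : ℕ) : ZMod p) = 0) ∨
      (((σ j : ℕ) : ZMod p) - ((j : ℕ) : ZMod p) = (q₁ : ZMod p)) ∨
      (((σ j : ℕ) : ZMod p) - ((j : ℕ) : ZMod p) = (q₂ : ZMod p)))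
    (c c' : Equiv.Perm (Fin p))
    (hc : c ∈ σ.cycleFactorsFinset) (hc' : c' ∈ σ.cycleFactorsFinset) :
    (c.support.filter fun j : Fin p =>
        ((σ j : ℕ) : ZMod p) - ((j : ℕ) : ZMod p) = (q₁ : ZMod p)).card
      = (c'.support.filter fun j : Fin p =>
        ((σ j : ℕ) : ZMod p) - ((j : ℕ) : ZMod p) = (q₁ : ZMod p)).card ∧
    (c.support.filter fun j : Fin p =>
        ((σ j : ℕ) : ZMod p) - ((j : ℕ) : ZMod p) = (q₂ : ZMod p)).card
      = (c'.support.filter fun j : Fin p =>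
        ((σ j : ℕ) : ZMod p) - ((j : ℕ) : ZMod p) = (q₂ : ZMod p)).card := by
  rcases eq_or_ne c c' with rfl | hne
  · exact ⟨rfl, rfl⟩
  obtain ⟨La, a, posa, hLa, hmema, hmoda, hstepa, hpera, hdvda, hinja, hcarda1, hcarda2⟩ :=
    cycle_data p q₁ q₂ h₁ h₁₂ h₂p σ hσ c hc
  obtain ⟨Lb, b, posb, hLb, hmemb, hmodb, hstepb, hperb, hdvdb, hinjb, hcardb1, hcardb2⟩ :=
    cycle_data p q₁ q₂ h₁ h₁₂ h₂p σ hσ c' hc'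
  -- supports are disjoint
  have hdisjsupp : ∀ y : Fin p, y ∈ c.support → y ∈ c'.support → False := by
    have hd : c.Disjoint c' :=
      Equiv.Perm.cycleFactorsFinset_pairwise_disjoint σ
        (Finset.mem_coe.mpr hc) (Finset.mem_coe.mpr hc') hne
    have hds := Equiv.Perm.Disjoint.disjoint_support hd
    intro y hy hy'
    exact Finset.disjoint_left.mp hds hy hy'
  -- from integer divisibility to Fin equality
  have hsmall : ∀ u v : Fin p, ((p : ℤ) ∣ ((u : ℕ) : ℤ) - ((v : ℕ) : ℤ)) → u = v := by
    intro u v h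
    have h1 : ((u : ℕ) : ℤ) < p := by exact_mod_cast u.isLt
    have h2 : ((v : ℕ) : ℤ) < p := by exact_mod_cast v.isLt
    have h3 : (0 : ℤ) ≤ ((u : ℕ) : ℤ) := by positivity
    have h4 : (0 : ℤ) ≤ ((v : ℕ) : ℤ) := by positivity
    have h5 := small_dvd_zero h (by linarith) (by linarith)
    have : ((u : ℕ) : ℤ) = ((v : ℕ) : ℤ) := by linarith
    exact Fin.ext (by exact_mod_cast this)
  have hdisj : ∀ k m, ¬ ((p : ℤ) ∣ a k - b m) := by
    intro k m hdvd
    have h1 := hmoda k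
    have h2 := hmodb m
    have h3 : (p : ℤ) ∣ ((posa k : ℕ) : ℤ) - ((posb m : ℕ) : ℤ) := by
      have he : ((posa k : ℕ) : ℤ) - ((posb m : ℕ) : ℤ)
          = (a k - b m) - (a k - ((posa k : ℕ) : ℤ)) + (b m - ((posb m : ℕ) : ℤ)) := by ring
      rw [he]
      exact dvd_add (dvd_sub hdvd h1) h2
    exact hdisjsupp _ ((hsmall _ _ h3) ▸ hmema k) (hmemb m)
  have hainjZ : ∀ k m, k < La → m < La → ((p : ℤ) ∣ a k - a m) → k = m := by
    intro k m hk hm h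
    refine hinja k m hk hm (hsmall _ _ ?_)
    have he : ((posa k : ℕ) : ℤ) - ((posa m : ℕ) : ℤ)
        = (a k - a m) - (a k - ((posa k : ℕ) : ℤ)) + (a m - ((posa m : ℕ) : ℤ)) := by ring
    rw [he]
    exact dvd_add (dvd_sub h (hmoda k)) (hmoda m)
  have hbinjZ : ∀ k m, k < Lb → m < Lb → ((p : ℤ) ∣ b k - b m) → k = m := by
    intro k m hk hm h
    refine hinjb k m hk hm (hsmall _ _ ?_)
    have he : ((posb k : ℕ) : ℤ) - ((posb m : ℕ) : ℤ)
        = (b k - b m) - (b k - ((posb k : ℕ) : ℤ)) + (b m - ((posb m : ℕ) : ℤ)) := by ring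
    rw [he]
    exact dvd_add (dvd_sub h (hmodb k)) (hmodb m)
  -- proportionality
  have e1 := core1 p q₁ q₂ h₁ h₁₂ h₂p hgcd a b La Lb hLa hLb hstepa hstepb hpera hperb hdisj
  have e2 := core1 p q₁ q₂ h₁ h₁₂ h₂p hgcd b a Lb La hLb hLa hstepb hstepa hperb hpera
    (fun k m h => hdisj m k (by
      have : a m - b k = -(b k - a m) := by ring
      rw [this]
      exact dvd_neg.mpr h))
  have hprop : (a La - a 0) * Lb = (b Lb - b 0) * La := le_antisymm e1 e2
  -- step-sum congruences
  have hamod : ((q₂ : ℤ) - q₁) ∣ ((a La - a 0) - (q₁ : ℤ) * La) := by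
    have := steps_sub q₁ q₂ a hstepa 0 La
    simp only [Nat.zero_add] at this
    have he : (a La - a 0) - (q₁ : ℤ) * La = a La - a 0 - (La : ℤ) * q₁ := by ring
    rw [he]
    exact this
  have hbmod : ((q₂ : ℤ) - q₁) ∣ ((b Lb - b 0) - (q₁ : ℤ) * Lb) := by
    have := steps_sub q₁ q₂ b hstepb 0 Lb
    simp only [Nat.zero_add] at this
    have he : (b Lb - b 0) - (q₁ : ℤ) * Lb = b Lb - b 0 - (Lb : ℤ) * q₁ := by ring
    rw [he]
    exact this
  -- equal lengths
  have hba : Lb ≤ La := core2 p q₁ q₂ h₁ h₁₂ h₂p b La Lb hLa hLb hstepb hperb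
    (a La - a 0) hprop hdvda hdvdb hamod hbinjZ
  have hab : La ≤ Lb := core2 p q₁ q₂ h₁ h₁₂ h₂p a Lb La hLb hLa hstepa hpera
    (b Lb - b 0) hprop.symm hdvdb hdvda hbmod hainjZ
  have hLL : La = Lb := le_antisymm hab hba
  have hLz : (La : ℤ) = (Lb : ℤ) := by exact_mod_cast hLL
  have hPP : (a La - a 0) = (b Lb - b 0) := by
    have h6 : (a La - a 0) * (Lb : ℤ) = (b Lb - b 0) * (Lb : ℤ) := by
      rw [hprop, hLz]
    have h7 : ((Lb : ℤ)) ≠ 0 := by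
      have : (0 : ℤ) < (Lb : ℤ) := by exact_mod_cast hLb
      omega
    exact mul_right_cancel₀ h7 h6
  -- conclude equality of counts
  have hq12 : q₁ ≠ q₂ := by omega
  have hsa := sum_steps q₁ q₂ hq12 a hstepa La
  have hsb := sum_steps q₁ q₂ hq12 b hstepb Lb
  set ra : ℕ := ((Finset.range La).filter fun k => a (k + 1) = a k + q₁).card with hra
  set rb : ℕ := ((Finset.range Lb).filter fun k => b (k + 1) = b k + q₁).card with hrb
  have heq : (q₁ : ℤ) * ra + q₂ * ((La : ℤ) - ra) = (q₁ : ℤ) * rb + q₂ * ((Lb : ℤ) - rb) := by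
    rw [← hsa, ← hsb, hPP]
  have hfac : ((q₁ : ℤ) - q₂) * ((ra : ℤ) - (rb : ℤ)) = 0 := by
    linear_combination heq - (q₂ : ℤ) * hLz
  have hrr : (ra : ℤ) = (rb : ℤ) := by
    rcases mul_eq_zero.mp hfac with h | h
    · exfalso
      have : (q₁ : ℤ) = q₂ := by linarith
      have : q₁ = q₂ := by exact_mod_cast this
      omega
    · linarith
  have hrrn : ra = rb := by exact_mod_cast hrr
  constructor
  · rw [hcarda1, hcardb1, hrrn]
  · rw [hcarda2, hcardb2, hrrn, hLL]
end

section
/- Let r, s ≥ 1 and define the lattice path ν_0 = (0,0), ν_{i+1} = ν_i + (1,0) if s·x_i ≤ r·y_i and ν_{i+1} = ν_i + (0,1) otherwise, where ν_i = (x_i, y_i). Then for all 0 ≤ i, j ≤ r+s, writing a = x_j - x_i and b = y_j - y_i, one has |a·s - b·r| ≤ r + s - 1. -/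
theorem stmt_12 (r s : ℤ) (hr : 1 ≤ r) (hs : 1 ≤ s)
    (ν : ℕ → ℤ × ℤ) (h0 : ν 0 = (0, 0))
    (hstep : ∀ i : ℕ,
      ν (i + 1) = if s * (ν i).1 ≤ r * (ν i).2 then ν i + (1, 0) else ν i + (0, 1)) :
    ∀ i j : ℕ, (i : ℤ) ≤ r + s → (j : ℤ) ≤ r + s →
      |((ν j).1 - (ν i).1) * s - ((ν j).2 - (ν i).2) * r| ≤ r + s - 1 := by
  have key : ∀ i : ℕ, 1 - r ≤ s * (ν i).1 - r * (ν i).2 ∧ s * (ν i).1 - r * (ν i).2 ≤ s := by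
    intro i
    induction i with
    | zero => rw [h0]; simp; omega
    | succ n ih =>
      rw [hstep n]
      by_cases h : s * (ν n).1 ≤ r * (ν n).2
      · simp [h, Prod.fst_add, Prod.snd_add]
        constructor <;> nlinarith [ih.1, ih.2]
      · simp [h, Prod.fst_add, Prod.snd_add]
        constructor <;> nlinarith [ih.1, ih.2]
  intro i j _ _
  have hi := key i
  have hj := key j
  rw [abs_le]
  constructor <;> nlinarith [hi.1, hi.2, hj.1, hj.2]
end

section
/- Fix integers 0 < q_1 < q_2 < p with gcd(q_1, q_2) = 1, and let 1 ≤ l ≤ q_2. Let N_l denote the number of pairs (r,s) of nonnegative integers with r q_1 + s q_2 = l p and r + s ≤ p. Then |N_l - l p/(q_1 q_2)| ≤ 1 if 1 ≤ l ≤ q_1, and |N_l - (q_2 - l) p/(q_2 (q_2 - q_1))| ≤ 1 if q_1 + 1 ≤ l ≤ q_2. -/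
/-!
By coprimality the integer solutions of `r q₁ + s q₂ = n` are `(r₀ + q₂ t, s₀ - q₁ t)`, `t ∈ ℤ`.
The constraints `r ≥ 0`, `s ≥ 0`, `r + s ≤ p` confine `t` to a real interval of length
`min (n / (q₁ q₂)) ((p q₂ - n) / (q₂ (q₂ - q₁)))`, and an interval of length `L ≥ 0` contains
between `L - 1` and `L + 1` integers. For `n = l p` the first term is the minimum iff `l ≤ q₁`.
-/

open Finset

theorem Int.abs_card_Icc_ceil_floor_sub_le {u v : ℝ} (huv : u ≤ v) :
    |(#(Icc ⌈u⌉ ⌊v⌋) : ℝ) - (v - u)| ≤ 1 := by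
  have hceil : ⌈u⌉ ≤ ⌊v⌋ + 1 :=
    (Int.ceil_mono huv).trans (Int.ceil_le_floor_add_one v)
  have hcard : (#(Icc ⌈u⌉ ⌊v⌋) : ℤ) = ⌊v⌋ + 1 - ⌈u⌉ := by
    rw [Int.card_Icc, Int.toNat_of_nonneg (by omega)]
  have hcard' : (#(Icc ⌈u⌉ ⌊v⌋) : ℝ) = ⌊v⌋ + 1 - ⌈u⌉ := by exact_mod_cast hcard
  rw [hcard', abs_le]
  constructor <;> linarith [Int.floor_le v, Int.lt_floor_add_one v, Int.le_ceil u,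
    Int.ceil_lt_add_one u]

theorem IsCoprime.exists_eq_add_mul_of_add_mul_eq {R : Type*} [CommRing R] [IsDomain R]
    {a b x₀ y₀ x y : R} (hab : IsCoprime a b) (hb : b ≠ 0)
    (h : a * x + b * y = a * x₀ + b * y₀) : ∃ t, x = x₀ + b * t ∧ y = y₀ - a * t := by
  obtain ⟨t, ht⟩ : b ∣ x - x₀ := hab.symm.dvd_of_dvd_mul_left ⟨y₀ - y, by linear_combination h⟩
  refine ⟨t, by linear_combination ht, ?_⟩
  have : b * (y - (y₀ - a * t)) = 0 := by linear_combination h - a * ht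
  linear_combination (mul_eq_zero.mp this).resolve_left hb

section LatticeLine

variable {p q₁ q₂ : ℕ} {r₀ s₀ : ℤ}

theorem mem_Icc_ceil_floor_iff (hq₁ : 0 < q₁) (h₁₂ : q₁ < q₂) (t : ℤ) :
    t ∈ Icc ⌈(-r₀ / q₂ : ℝ)⌉ ⌊min ((s₀ : ℝ) / q₁) ((p - r₀ - s₀) / (q₂ - q₁))⌋ ↔
      0 ≤ r₀ + q₂ * t ∧ 0 ≤ s₀ - q₁ * t ∧ r₀ + q₂ * t + (s₀ - q₁ * t) ≤ p := by
  have hq₁' : (0 : ℝ) < q₁ := by exact_mod_cast hq₁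
  have hq₂' : (0 : ℝ) < q₂ := by exact_mod_cast hq₁.trans h₁₂
  have hd : (0 : ℝ) < q₂ - q₁ := by rw [sub_pos]; exact_mod_cast h₁₂
  rw [mem_Icc, Int.ceil_le, Int.le_floor, le_min_iff, div_le_iff₀ hq₂', le_div_iff₀ hq₁',
    le_div_iff₀ hd]
  have hcast : (0 ≤ r₀ + q₂ * t ∧ 0 ≤ s₀ - q₁ * t ∧ r₀ + q₂ * t + (s₀ - q₁ * t) ≤ p) ↔
      ((0 : ℝ) ≤ r₀ + q₂ * t ∧ (0 : ℝ) ≤ s₀ - q₁ * t ∧ (r₀ + q₂ * t + (s₀ - q₁ * t) : ℝ) ≤ p) := by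
    norm_cast
  rw [hcast]
  constructor <;> rintro ⟨h1, h2, h3⟩ <;> refine ⟨?_, ?_, ?_⟩ <;> linarith

theorem card_solutions_eq_card_Icc (hq₁ : 0 < q₁) (h₁₂ : q₁ < q₂) (hcop : Nat.Coprime q₁ q₂)
    {n : ℕ} (h₀ : r₀ * q₁ + s₀ * q₂ = n) :
    #((range (p + 1) ×ˢ range (p + 1)).filter fun rs =>
        rs.1 * q₁ + rs.2 * q₂ = n ∧ rs.1 + rs.2 ≤ p) =
      #(Icc ⌈(-r₀ / q₂ : ℝ)⌉ ⌊min ((s₀ : ℝ) / q₁) ((p - r₀ - s₀) / (q₂ - q₁))⌋) := by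
  symm
  refine card_bij (fun t _ => ((r₀ + q₂ * t).toNat, (s₀ - q₁ * t).toNat)) ?_ ?_ ?_
  · intro t ht
    obtain ⟨h1, h2, h3⟩ := (mem_Icc_ceil_floor_iff hq₁ h₁₂ t).mp ht
    simp only [mem_filter, mem_product, mem_range]
    refine ⟨⟨by omega, by omega⟩, ?_, by omega⟩
    zify
    rw [Int.toNat_of_nonneg h1, Int.toNat_of_nonneg h2]
    linear_combination h₀
  · intro t₁ ht₁ t₂ ht₂ h
    obtain ⟨h₁, -, -⟩ := (mem_Icc_ceil_floor_iff hq₁ h₁₂ t₁).mp ht₁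
    obtain ⟨h₂, -, -⟩ := (mem_Icc_ceil_floor_iff hq₁ h₁₂ t₂).mp ht₂
    have : (q₂ : ℤ) * t₁ = q₂ * t₂ := by have := (Prod.ext_iff.mp h).1; omega
    exact mul_left_cancel₀ (by omega) this
  · rintro ⟨r, s⟩ hrs
    simp only [mem_filter, mem_product, mem_range] at hrs
    obtain ⟨-, heq, hsum⟩ := hrs
    have heq' : (r * q₁ + s * q₂ : ℤ) = n := by exact_mod_cast heq
    obtain ⟨t, hr, hs⟩ := (Nat.isCoprime_iff_coprime.mpr hcop).exists_eq_add_mul_of_add_mul_eq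
      (x := (r : ℤ)) (y := (s : ℤ)) (x₀ := r₀) (y₀ := s₀) (by omega)
      (by linear_combination heq' - h₀)
    refine ⟨t, (mem_Icc_ceil_floor_iff hq₁ h₁₂ t).mpr ⟨by omega, by omega, by omega⟩, ?_⟩
    rw [← hr, ← hs, Int.toNat_natCast, Int.toNat_natCast]

theorem abs_card_solutions_sub_min_le (hq₁ : 0 < q₁) (h₁₂ : q₁ < q₂) (hcop : Nat.Coprime q₁ q₂)
    {n : ℕ} (hn : n ≤ p * q₂) :
    |(#((range (p + 1) ×ˢ range (p + 1)).filter fun rs =>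
        rs.1 * q₁ + rs.2 * q₂ = n ∧ rs.1 + rs.2 ≤ p) : ℝ) -
      min ((n : ℝ) / (q₁ * q₂)) ((p * q₂ - n) / (q₂ * (q₂ - q₁)))| ≤ 1 := by
  obtain ⟨r₀, s₀, h₀⟩ : ∃ r₀ s₀ : ℤ, r₀ * q₁ + s₀ * q₂ = n := by
    obtain ⟨u, v, huv⟩ := Nat.isCoprime_iff_coprime.mpr hcop
    exact ⟨n * u, n * v, by linear_combination (n : ℤ) * huv⟩
  have hq₁' : (q₁ : ℝ) ≠ 0 := by exact_mod_cast hq₁.ne'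
  have hq₂' : (q₂ : ℝ) ≠ 0 := by exact_mod_cast (hq₁.trans h₁₂).ne'
  have hd : (q₂ - q₁ : ℝ) ≠ 0 := sub_ne_zero.mpr (by exact_mod_cast h₁₂.ne')
  have hlen : min (s₀ / (q₁ : ℝ)) ((p - r₀ - s₀) / (q₂ - q₁)) -
      (-r₀ / q₂) = min ((n : ℝ) / (q₁ * q₂)) ((p * q₂ - n) / (q₂ * (q₂ - q₁))) := by
    have h₀' : (r₀ * q₁ + s₀ * q₂ : ℝ) = n := by exact_mod_cast h₀
    rw [sub_eq_add_neg, neg_div, neg_neg, ← min_add_add_right]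
    congr 1 <;> field_simp
    · linear_combination h₀'
    · linear_combination -h₀'
  rw [card_solutions_eq_card_Icc hq₁ h₁₂ hcop h₀, ← hlen]
  refine Int.abs_card_Icc_ceil_floor_sub_le (sub_nonneg.mp ?_)
  rw [hlen]
  have hn' : (n : ℝ) ≤ p * q₂ := by exact_mod_cast hn
  have hd' : (0 : ℝ) < q₂ - q₁ := sub_pos.mpr (by exact_mod_cast h₁₂)
  exact le_min (by positivity) (div_nonneg (by linarith) (by positivity))

end LatticeLine

theorem stmt_15_general (p q₁ q₂ l : ℕ) (h₁ : 0 < q₁) (h₁₂ : q₁ < q₂)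
    (hcop : Nat.Coprime q₁ q₂) (hlq₂ : l ≤ q₂)
    (N : ℕ)
    (hN : N = ((Finset.range (p + 1) ×ˢ Finset.range (p + 1)).filter fun rs =>
        rs.1 * q₁ + rs.2 * q₂ = l * p ∧ rs.1 + rs.2 ≤ p).card) :
    (l ≤ q₁ → |(N : ℝ) - l * p / (q₁ * q₂)| ≤ 1) ∧
    (q₁ + 1 ≤ l → |(N : ℝ) - (q₂ - l : ℝ) * p / (q₂ * (q₂ - q₁ : ℝ))| ≤ 1) := by
  have hcount := abs_card_solutions_sub_min_le (p := p) h₁ h₁₂ hcop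
    (Nat.mul_comm l p ▸ Nat.mul_le_mul_left p hlq₂)
  rw [← hN] at hcount
  push_cast at hcount
  have hq₁ : (q₁ : ℝ) ≠ 0 := by exact_mod_cast h₁.ne'
  have hq₂ : (q₂ : ℝ) ≠ 0 := by exact_mod_cast (h₁.trans h₁₂).ne'
  have hd : (0 : ℝ) < q₂ - q₁ := sub_pos.mpr (by exact_mod_cast h₁₂)
  have hdiff : (p * q₂ - l * p : ℝ) / (q₂ * (q₂ - q₁)) - l * p / (q₁ * q₂) =
      p * (q₁ - l) / (q₁ * (q₂ - q₁)) := by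
    field_simp
    ring
  constructor
  · intro hlq₁
    have hlq₁' : (l : ℝ) ≤ q₁ := by exact_mod_cast hlq₁
    have hmin : (l * p : ℝ) / (q₁ * q₂) ≤ (p * q₂ - l * p) / (q₂ * (q₂ - q₁)) := by
      rw [← sub_nonneg, hdiff]
      exact div_nonneg (mul_nonneg (by positivity) (by linarith)) (by positivity)
    rwa [min_eq_left hmin] at hcount
  · intro hlq₁
    have hlq₁' : (q₁ : ℝ) ≤ l := by exact_mod_cast (by omega : q₁ ≤ l)
    have hmin : (p * q₂ - l * p : ℝ) / (q₂ * (q₂ - q₁)) ≤ l * p / (q₁ * q₂) := by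
      rw [← sub_nonpos, hdiff]
      exact div_nonpos_of_nonpos_of_nonneg
        (mul_nonpos_of_nonneg_of_nonpos (by positivity) (by linarith)) (by positivity)
    rw [min_eq_right hmin] at hcount
    convert hcount using 4
    ring

theorem stmt_15 (p q₁ q₂ l : ℕ) (h₁ : 0 < q₁) (h₁₂ : q₁ < q₂) (h₂p : q₂ < p)
    (hcop : Nat.Coprime q₁ q₂) (hl : 1 ≤ l) (hlq₂ : l ≤ q₂)
    (N : ℕ)
    (hN : N = ((Finset.range (p + 1) ×ˢ Finset.range (p + 1)).filter fun rs =>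
        rs.1 * q₁ + rs.2 * q₂ = l * p ∧ rs.1 + rs.2 ≤ p).card) :
    (l ≤ q₁ → |(N : ℝ) - l * p / (q₁ * q₂)| ≤ 1) ∧
    (q₁ + 1 ≤ l → |(N : ℝ) - (q₂ - l : ℝ) * p / (q₂ * (q₂ - q₁ : ℝ))| ≤ 1) :=
  stmt_15_general p q₁ q₂ l h₁ h₁₂ hcop hlq₂ N hN
end

section
/- Fix coprime integers 0 < q_1 < q_2 and let N(p) be the number of pairs (r,s) of nonnegative integers with r + s ≤ p, r q_1 + s q_2 > 0, and p | (r q_1 + s q_2). Then N(p)/p → 1/2 as p → ∞. -/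
/-!
Sort the pairs by the multiple `k * p` (`1 ≤ k ≤ q₂`) that `r * q₁ + s * q₂` equals. On the line
`r * q₁ + s * q₂ = k * p`, the lattice points of the triangle `r + s ≤ p` are determined by `s`,
which runs through one residue class modulo `q₁` (by coprimality) in a real interval of length
`p * (k / q₂ - max 0 ((k - q₁) / (q₂ - q₁)))`. Hence the line carries this length divided by `q₁`
points, up to an error of at most `1`. These main terms sum to exactly `p / 2`, so
`|N p - p / 2| ≤ q₂`.
-/

open Finset Filter

theorem Int.abs_card_Icc_ceil_floor_sub_le_s16 {x y : ℝ} (hxy : x ≤ y) :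
    |(#(Icc ⌈x⌉ ⌊y⌋) : ℝ) - (y - x)| ≤ 1 := by
  have hle : ⌈x⌉ ≤ ⌊y⌋ + 1 := by
    rw [Int.ceil_le]; push_cast; linarith [Int.lt_floor_add_one y]
  rw [Int.card_Icc, ← Int.cast_natCast, Int.toNat_of_nonneg (by omega)]
  push_cast
  rw [abs_le]
  constructor <;> linarith [Int.floor_le y, Int.lt_floor_add_one y, Int.le_ceil x,
    Int.ceil_lt_add_one x]

theorem Int.filter_modEq_Icc_ceil_floor_eq_image {m : ℤ} (hm : 0 < m) (v : ℤ) (x y : ℝ) :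
    {s ∈ Icc ⌈x⌉ ⌊y⌋ | s ≡ v [ZMOD m]} =
      (Icc ⌈(x - v) / m⌉ ⌊(y - v) / m⌋).image (m * · + v) := by
  have hm' : (0 : ℝ) < m := by exact_mod_cast hm
  ext s
  simp only [mem_filter, mem_Icc, mem_image, Int.ceil_le, Int.le_floor, div_le_iff₀ hm',
    le_div_iff₀ hm']
  constructor
  · rintro ⟨⟨hx, hy⟩, hs⟩
    obtain ⟨t, ht⟩ := Int.modEq_iff_dvd.mp hs.symm
    refine ⟨t, ⟨?_, ?_⟩, by linarith⟩ <;>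
    · have : (s : ℝ) = v + m * t := by exact_mod_cast (by linarith : s = v + m * t)
      linarith
  · rintro ⟨t, ⟨hx, hy⟩, rfl⟩
    refine ⟨⟨?_, ?_⟩, (Int.modEq_iff_dvd.mpr ⟨t, by ring⟩).symm⟩ <;>
    · push_cast; linarith

theorem Int.abs_card_filter_modEq_Icc_sub_le {m : ℤ} (hm : 0 < m) (v : ℤ) {x y : ℝ}
    (hxy : x ≤ y) : |(#{s ∈ Icc ⌈x⌉ ⌊y⌋ | s ≡ v [ZMOD m]} : ℝ) - (y - x) / m| ≤ 1 := by
  have hm' : (0 : ℝ) < m := by exact_mod_cast hm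
  rw [Int.filter_modEq_Icc_ceil_floor_eq_image hm,
    card_image_of_injective _ fun a b h => by simpa [hm.ne'] using h,
    show (y - x) / m = (y - v) / m - (x - v) / m by ring]
  exact Int.abs_card_Icc_ceil_floor_sub_le_s16 (by gcongr)

theorem Int.mul_modEq_iff_modEq_mul {a b m u : ℤ} (hab : a * m + b * u = 1) (s n : ℤ) :
    s * u ≡ n [ZMOD m] ↔ s ≡ b * n [ZMOD m] := by
  simp only [Int.modEq_iff_dvd]
  constructor
  · rintro ⟨c, hc⟩
    exact ⟨b * c - s * a, by linear_combination b * hc + s * hab⟩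
  · rintro ⟨c, hc⟩
    exact ⟨a * n + u * c, by linear_combination u * hc - n * hab⟩

def triangleLinePoints (q₁ q₂ p n : ℕ) : Finset (ℕ × ℕ) :=
  {rs ∈ range (p + 1) ×ˢ range (p + 1) | rs.1 + rs.2 ≤ p ∧ rs.1 * q₁ + rs.2 * q₂ = n}

theorem card_triangleLinePoints {q₁ q₂ : ℕ} (h₁ : 0 < q₁) (h₁₂ : q₁ < q₂) (p n : ℕ) :
    #(triangleLinePoints q₁ q₂ p n) =
      #{s ∈ Icc ⌈max 0 ((n : ℝ) - p * q₁) / (q₂ - q₁)⌉ ⌊(n : ℝ) / q₂⌋ |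
        s * q₂ ≡ n [ZMOD q₁]} := by
  have hq₂ : (0 : ℝ) < q₂ := by exact_mod_cast h₁.trans h₁₂
  have hd : (0 : ℝ) < q₂ - q₁ := sub_pos.mpr (by exact_mod_cast h₁₂)
  -- `r = (n - s * q₂) / q₁`, and `0 ≤ r`, `r + s ≤ p` become the two bounds on `s`.
  have hmem : ∀ s : ℤ, s ∈ Icc ⌈max 0 ((n : ℝ) - p * q₁) / (q₂ - q₁)⌉ ⌊(n : ℝ) / q₂⌋ ↔
      0 ≤ s ∧ (n : ℤ) - p * q₁ ≤ s * (q₂ - q₁) ∧ s * q₂ ≤ n := by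
    intro s
    simp only [mem_Icc, Int.ceil_le, Int.le_floor, div_le_iff₀ hd, le_div_iff₀ hq₂,
      max_le_iff]
    have hd' : (0 : ℤ) < q₂ - q₁ := by omega
    constructor
    · rintro ⟨⟨h0, hlo⟩, hhi⟩
      exact ⟨nonneg_of_mul_nonneg_left (by exact_mod_cast h0) hd', by exact_mod_cast hlo,
        by exact_mod_cast hhi⟩
    · rintro ⟨h0, hlo, hhi⟩
      refine ⟨⟨?_, ?_⟩, ?_⟩
      · exact_mod_cast mul_nonneg h0 hd'.le
      · exact_mod_cast hlo
      · exact_mod_cast hhi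
  have hmem' : ∀ r s : ℕ, (r, s) ∈ triangleLinePoints q₁ q₂ p n ↔
      r + s ≤ p ∧ r * q₁ + s * q₂ = n := by
    intro r s
    simp only [triangleLinePoints, mem_filter, mem_product, mem_range]
    omega
  apply card_bij (fun rs _ => (rs.2 : ℤ))
  · rintro ⟨r, s⟩ hrs
    obtain ⟨hsum, hval⟩ := (hmem' r s).mp hrs
    have hsumZ : ((r + s : ℕ) : ℤ) * q₁ ≤ p * q₁ := by gcongr
    have hvalZ : ((r * q₁ + s * q₂ : ℕ) : ℤ) = n := congrArg _ hval
    push_cast at hsumZ hvalZ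
    exact mem_filter.mpr ⟨(hmem s).mpr ⟨by positivity, by linarith, by nlinarith⟩,
      Int.modEq_iff_dvd.mpr ⟨r, by push_cast [← hval]; ring⟩⟩
  · rintro ⟨r, s⟩ hrs ⟨r', s'⟩ hrs' hss
    obtain rfl : s = s' := by exact_mod_cast hss
    have := ((hmem' r s).mp hrs).2
    have := ((hmem' r' s).mp hrs').2
    simpa [h₁.ne'] using (by omega : r * q₁ = r' * q₁)
  · intro s hs
    obtain ⟨hs, hmod⟩ := mem_filter.mp hs
    obtain ⟨h0, hlo, hhi⟩ := (hmem s).mp hs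
    obtain ⟨r, hr⟩ := Int.modEq_iff_dvd.mp hmod
    lift s to ℕ using h0
    have hr0 : 0 ≤ r :=
      nonneg_of_mul_nonneg_right (a := (q₁ : ℤ)) (by linarith) (by exact_mod_cast h₁)
    lift r to ℕ using hr0
    have hsum : ((r + s : ℕ) : ℤ) * q₁ ≤ p * q₁ := by push_cast; linarith
    refine ⟨(r, s), (hmem' r s).mpr ⟨?_, ?_⟩, rfl⟩
    · exact_mod_cast le_of_mul_le_mul_right hsum (by exact_mod_cast h₁)
    · exact_mod_cast (by linarith : (r : ℤ) * q₁ + s * q₂ = n)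

theorem abs_card_triangleLinePoints_sub_le {q₁ q₂ : ℕ} (hcop : IsCoprime (q₁ : ℤ) q₂)
    (h₁ : 0 < q₁) (h₁₂ : q₁ < q₂) {p n : ℕ} (hn : n ≤ p * q₂) :
    |(#(triangleLinePoints q₁ q₂ p n) : ℝ) -
      ((n : ℝ) / q₂ - max 0 ((n : ℝ) - p * q₁) / (q₂ - q₁)) / q₁| ≤ 1 := by
  obtain ⟨a, b, hab⟩ := hcop
  have hq₂ : (0 : ℝ) < q₂ := by exact_mod_cast h₁.trans h₁₂
  have hd : (0 : ℝ) < q₂ - q₁ := sub_pos.mpr (by exact_mod_cast h₁₂)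
  have hlo : max 0 ((n : ℝ) - p * q₁) / (q₂ - q₁) ≤ n / q₂ := by
    rw [div_le_div_iff₀ hd hq₂, max_mul_of_nonneg _ _ hq₂.le, zero_mul, max_le_iff]
    have : (n : ℝ) ≤ p * q₂ := by exact_mod_cast hn
    constructor
    · positivity
    · nlinarith
  rw [card_triangleLinePoints h₁ h₁₂,
    filter_congr fun s _ => Int.mul_modEq_iff_modEq_mul hab s n]
  simpa using Int.abs_card_filter_modEq_Icc_sub_le (m := q₁) (by exact_mod_cast h₁) (b * n) hlo

theorem card_filter_dvd_eq_sum_card_triangleLinePoints {q₁ q₂ p : ℕ} (h₁₂ : q₁ ≤ q₂)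
    (hp : 0 < p) :
    #{rs ∈ range (p + 1) ×ˢ range (p + 1) | rs.1 + rs.2 ≤ p ∧ 0 < rs.1 * q₁ + rs.2 * q₂ ∧
        p ∣ rs.1 * q₁ + rs.2 * q₂} = ∑ k ∈ Icc 1 q₂, #(triangleLinePoints q₁ q₂ p (k * p)) := by
  rw [← card_biUnion]
  · congr 1
    ext ⟨r, s⟩
    simp only [triangleLinePoints, mem_filter, mem_biUnion, mem_Icc, mem_product, mem_range]
    constructor
    · rintro ⟨hrs, hsum, hpos, k, hk⟩
      have hle : p * k ≤ p * q₂ := calc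
        p * k = r * q₁ + s * q₂ := hk.symm
        _ ≤ (r + s) * q₂ := by nlinarith
        _ ≤ p * q₂ := by gcongr
      refine ⟨k, ⟨?_, le_of_mul_le_mul_left hle hp⟩, hrs, hsum, by rw [hk, mul_comm]⟩
      exact Nat.pos_of_ne_zero fun hk0 => by rw [hk0, mul_zero] at hk; omega
    · rintro ⟨k, ⟨hk1, -⟩, hrs, hsum, hval⟩
      exact ⟨hrs, hsum, hval ▸ by positivity, hval ▸ dvd_mul_left _ _⟩
  · intro k _ l _ hkl
    refine disjoint_left.mpr fun rs hk hl => hkl ?_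
    have := (mem_filter.mp hk).2.2
    exact Nat.eq_of_mul_eq_mul_right hp (this ▸ (mem_filter.mp hl).2.2)

theorem sum_Icc_max_zero_sub {m n : ℕ} (hmn : m ≤ n) :
    ∑ k ∈ Icc 1 n, max 0 ((k : ℝ) - m) = (n - m) * (n - m + 1) / 2 := by
  induction n, hmn using Nat.le_induction with
  | base =>
    rw [sum_eq_zero fun k hk =>
      max_eq_left (sub_nonpos.mpr (by exact_mod_cast (mem_Icc.mp hk).2))]
    ring
  | succ n hmn ih =>
    rw [sum_Icc_succ_top (by omega), ih,
      max_eq_right (sub_nonneg.mpr (by exact_mod_cast hmn.trans n.le_succ))]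
    push_cast
    ring

theorem sum_triangleLine_lengths_eq_half {q₁ q₂ : ℕ} (h₁ : 0 < q₁) (h₁₂ : q₁ < q₂) (p : ℕ) :
    ∑ k ∈ Icc 1 q₂,
        (((k * p : ℕ) : ℝ) / q₂ - max 0 (((k * p : ℕ) : ℝ) - p * q₁) / (q₂ - q₁)) / q₁ = p / 2 := by
  have hq₁ : (0 : ℝ) < q₁ := by exact_mod_cast h₁
  have hq₂ : (0 : ℝ) < q₂ := by exact_mod_cast h₁.trans h₁₂
  have hd : (0 : ℝ) < q₂ - q₁ := sub_pos.mpr (by exact_mod_cast h₁₂)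
  have hterm : ∀ k : ℕ,
      (((k * p : ℕ) : ℝ) / q₂ - max 0 (((k * p : ℕ) : ℝ) - p * q₁) / (q₂ - q₁)) / q₁ =
        p / (q₁ * q₂) * k - p / (q₁ * (q₂ - q₁)) * max 0 ((k : ℝ) - q₁) := by
    intro k
    rw [Nat.cast_mul, show (k : ℝ) * p - p * q₁ = p * (k - q₁) by ring, ← mul_zero (p : ℝ),
      ← mul_max_of_nonneg _ _ p.cast_nonneg, mul_zero]
    field_simp
  have hgauss : ∑ k ∈ Icc 1 q₂, (k : ℝ) = q₂ * (q₂ + 1) / 2 := by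
    simpa using sum_Icc_max_zero_sub (Nat.zero_le q₂)
  simp only [hterm, sum_sub_distrib, ← mul_sum, hgauss, sum_Icc_max_zero_sub h₁₂.le]
  field_simp
  ring

theorem abs_card_filter_dvd_sub_half_le {q₁ q₂ : ℕ} (hcop : IsCoprime (q₁ : ℤ) q₂)
    (h₁ : 0 < q₁) (h₁₂ : q₁ < q₂) {p : ℕ} (hp : 0 < p) :
    |(#{rs ∈ range (p + 1) ×ˢ range (p + 1) | rs.1 + rs.2 ≤ p ∧ 0 < rs.1 * q₁ + rs.2 * q₂ ∧
        p ∣ rs.1 * q₁ + rs.2 * q₂} : ℝ) - p / 2| ≤ q₂ := by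
  rw [card_filter_dvd_eq_sum_card_triangleLinePoints h₁₂.le hp, Nat.cast_sum,
    ← sum_triangleLine_lengths_eq_half h₁ h₁₂ p, ← sum_sub_distrib]
  calc _ ≤ ∑ k ∈ Icc 1 q₂, (1 : ℝ) := by
        refine (abs_sum_le_sum_abs _ _).trans (sum_le_sum fun k hk => ?_)
        refine abs_card_triangleLinePoints_sub_le hcop h₁ h₁₂ ?_
        rw [mul_comm]
        exact Nat.mul_le_mul_left p (mem_Icc.mp hk).2
    _ = q₂ := by simp

theorem stmt_16 (q₁ q₂ : ℕ) (h₁ : 0 < q₁) (h₁₂ : q₁ < q₂) (hcop : Nat.Coprime q₁ q₂)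
    (N : ℕ → ℕ)
    (hN : ∀ p, N p = ((Finset.range (p + 1) ×ˢ Finset.range (p + 1)).filter fun rs =>
        rs.1 + rs.2 ≤ p ∧ 0 < rs.1 * q₁ + rs.2 * q₂ ∧
          p ∣ rs.1 * q₁ + rs.2 * q₂).card) :
    Tendsto (fun p : ℕ => (N p : ℝ) / p) atTop (nhds (1 / 2)) := by
  rw [tendsto_iff_norm_sub_tendsto_zero]
  refine squeeze_zero' (Eventually.of_forall fun _ => norm_nonneg _) ?_
    (tendsto_const_div_atTop_nhds_zero_nat (q₂ : ℝ))
  filter_upwards [eventually_gt_atTop 0] with p hp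
  rw [Real.norm_eq_abs, show (N p : ℝ) / p - 1 / 2 = ((N p : ℝ) - p / 2) / p by field_simp,
    abs_div, Nat.abs_cast, hN p]
  exact div_le_div_of_nonneg_right
    (abs_card_filter_dvd_sub_half_le (Nat.isCoprime_iff_coprime.mpr hcop) h₁ h₁₂ hp) p.cast_nonneg
end

section
/- Fix odd coprime integers 0 < q_1 < q_2. For each p, let N⁺(p) be the number of pairs (r,s) of nonnegative integers with r + s ≤ p, p | (r q_1 + s q_2), l := (r q_1 + s q_2)/p > 0, and s + gcd(r, s, l) odd, and let N(p) be the total number of such pairs with l > 0 (without the parity condition). Then N⁺(p)/N(p) → (q_1 q_2 + 1)/(4 q_1 q_2) as p → ∞. -/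
open Finset Filter

section Aux

lemma gcd_even_iff (a b : ℕ) : 2 ∣ Nat.gcd a b ↔ 2 ∣ a ∧ 2 ∣ b :=
  ⟨fun h => ⟨h.trans (Nat.gcd_dvd_left _ _), h.trans (Nat.gcd_dvd_right _ _)⟩,
   fun ⟨h1, h2⟩ => Nat.dvd_gcd h1 h2⟩

lemma parity_iff (r s l : ℕ) :
    Odd (s + Nat.gcd r (Nat.gcd s l)) ↔ (Even s ∧ (Odd r ∨ Odd l)) := by
  have h1 := gcd_even_iff r (Nat.gcd s l)
  have h2 := gcd_even_iff s l
  simp only [Nat.odd_add, Nat.odd_iff, Nat.even_iff, Nat.dvd_iff_mod_eq_zero] at *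
  omega

/-- points on the line r*q₁+s*q₂ = l*p inside the triangle, with d ∣ s -/
def lineD (q₁ q₂ p l d : ℕ) : Finset (ℕ × ℕ) :=
  (Finset.range (p + 1) ×ˢ Finset.range (p + 1)).filter fun rs =>
    rs.1 + rs.2 ≤ p ∧ rs.1 * q₁ + rs.2 * q₂ = l * p ∧ d ∣ rs.2

lemma decompGen (q₁ q₂ p : ℕ) (h₁₂ : q₁ < q₂) (hp : 0 < p)
    (P : ℕ × ℕ → ℕ → Prop) [∀ rs l, Decidable (P rs l)] :
    ((Finset.range (p + 1) ×ˢ Finset.range (p + 1)).filter fun rs =>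
        rs.1 + rs.2 ≤ p ∧ 0 < rs.1 * q₁ + rs.2 * q₂ ∧ p ∣ rs.1 * q₁ + rs.2 * q₂ ∧
          P rs ((rs.1 * q₁ + rs.2 * q₂) / p)).card
      = ∑ l ∈ Icc 1 q₂,
          ((Finset.range (p + 1) ×ˢ Finset.range (p + 1)).filter fun rs =>
            rs.1 + rs.2 ≤ p ∧ rs.1 * q₁ + rs.2 * q₂ = l * p ∧ P rs l).card := by
  rw [Finset.card_eq_sum_card_fiberwise
    (f := fun rs => (rs.1 * q₁ + rs.2 * q₂) / p) (t := Icc 1 q₂)]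
  · apply Finset.sum_congr rfl
    intro l hl
    rw [Finset.filter_filter]
    congr 1
    apply Finset.filter_congr
    intro rs hrs
    simp only [Finset.mem_product, Finset.mem_range] at hrs
    obtain ⟨hr, hs⟩ := hrs
    simp only [Finset.mem_Icc] at hl
    constructor
    · rintro ⟨⟨hle, hpos, hdvd, hP⟩, heq⟩
      obtain ⟨c, hc⟩ := hdvd
      rw [hc, Nat.mul_div_cancel_left _ hp] at heq hP
      subst heq
      exact ⟨hle, by rw [hc]; ring, hP⟩
    · rintro ⟨hle, heq, hP⟩
      have hdvd : p ∣ rs.1 * q₁ + rs.2 * q₂ := ⟨l, by linarith⟩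
      have hdiv : (rs.1 * q₁ + rs.2 * q₂) / p = l := by
        rw [heq, Nat.mul_div_cancel _ hp]
      refine ⟨⟨hle, ?_, hdvd, by rw [hdiv]; exact hP⟩, hdiv⟩
      have : 1 * p ≤ l * p := Nat.mul_le_mul_right p hl.1
      omega
  · intro rs hrs
    simp only [Finset.mem_coe, Finset.mem_filter, Finset.mem_product, Finset.mem_range] at hrs
    obtain ⟨⟨hr, hs⟩, hle, hpos, hdvd, _⟩ := hrs
    simp only [Finset.mem_coe, Finset.mem_Icc]
    obtain ⟨c, hc⟩ := hdvd
    rw [hc, Nat.mul_div_cancel_left _ hp]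
    constructor
    · rcases Nat.eq_zero_or_pos c with h | h
      · subst h; rw [hc] at hpos; simp at hpos
      · exact h
    · by_contra hgt
      push_neg at hgt
      have h1 : rs.1 * q₁ + rs.2 * q₂ ≤ (rs.1 + rs.2) * q₂ := by
        nlinarith [Nat.mul_le_mul_left rs.1 (le_of_lt h₁₂)]
      have h2 : (rs.1 + rs.2) * q₂ ≤ p * q₂ := Nat.mul_le_mul_right _ hle
      have h3 : p * (q₂ + 1) ≤ p * c := Nat.mul_le_mul_left _ hgt
      nlinarith

lemma lineCardEq (q₁ q₂ p l d : ℕ) (h₁ : 0 < q₁) (h₁₂ : q₁ < q₂) (hl2 : l ≤ q₂) :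
    (lineD q₁ q₂ p l d).card =
      ((Finset.range (min (l * p / q₁) ((q₂ - l) * p / (q₂ - q₁)) + 1)).filter
        (fun r => r * q₁ ≡ l * p [MOD d * q₂])).card := by
  have hq₂ : 0 < q₂ := h₁.trans h₁₂
  have hdq : 0 < q₂ - q₁ := by omega
  apply Finset.card_bij' (fun rs _ => rs.1)
    (fun r _ => (r, (l * p - r * q₁) / q₂))
  · intro rs hrs
    simp only [lineD, Finset.mem_filter, Finset.mem_product, Finset.mem_range] at hrs
    obtain ⟨⟨hr, hs⟩, hle, heq, hd⟩ := hrs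
    have hrq : rs.1 * q₁ ≤ l * p := by
      calc rs.1 * q₁ ≤ rs.1 * q₁ + rs.2 * q₂ := Nat.le_add_right _ _
      _ = l * p := heq
    have hsub : l * p - rs.1 * q₁ = rs.2 * q₂ := by
      apply Nat.sub_eq_of_eq_add
      rw [← heq]; ring
    simp only [Finset.mem_filter, Finset.mem_range, Nat.lt_succ_iff]
    constructor
    · apply le_min
      · exact (Nat.le_div_iff_mul_le h₁).mpr hrq
      · apply (Nat.le_div_iff_mul_le hdq).mpr
        zify [le_of_lt h₁₂, hl2]
        have h1 : ((rs.1 : ℤ) + rs.2) * q₂ ≤ (p : ℤ) * q₂ := by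
          have : ((rs.1 + rs.2 : ℕ) : ℤ) ≤ (p : ℤ) := by exact_mod_cast hle
          nlinarith [this]
        have h2 : (rs.1 : ℤ) * q₁ + rs.2 * q₂ = l * p := by exact_mod_cast heq
        nlinarith
    · apply (Nat.modEq_iff_dvd' hrq).mpr
      rw [hsub]
      obtain ⟨e, he⟩ := hd
      exact ⟨e, by rw [he]; ring⟩
  · intro r hr
    simp only [Finset.mem_filter, Finset.mem_range, Nat.lt_succ_iff] at hr
    obtain ⟨hrA, hcong⟩ := hr
    have hrq : r * q₁ ≤ l * p := by
      have := le_trans hrA (min_le_left _ _)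
      exact (Nat.le_div_iff_mul_le h₁).mp this
    have hdvd2 : d * q₂ ∣ l * p - r * q₁ := (Nat.modEq_iff_dvd' hrq).mp hcong
    have hdvd : q₂ ∣ l * p - r * q₁ := dvd_trans (dvd_mul_left q₂ d) hdvd2
    set s := (l * p - r * q₁) / q₂ with hs
    have hsq : s * q₂ = l * p - r * q₁ := Nat.div_mul_cancel hdvd
    have heq : r * q₁ + s * q₂ = l * p := by
      rw [hsq]; omega
    have hds : d ∣ s := by
      obtain ⟨e, he⟩ := hdvd2
      have : s * q₂ = (d * e) * q₂ := by rw [hsq, he]; ring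
      exact ⟨e, Nat.eq_of_mul_eq_mul_right hq₂ this⟩
    have hsum : r + s ≤ p := by
      have hrB := le_trans hrA (min_le_right _ _)
      have hrB' : r * (q₂ - q₁) ≤ (q₂ - l) * p := (Nat.le_div_iff_mul_le hdq).mp hrB
      have h2 : (r : ℤ) * q₁ + s * q₂ = l * p := by exact_mod_cast heq
      have h3 : (r : ℤ) * (q₂ - q₁) ≤ ((q₂ : ℤ) - l) * p := by
        have := hrB'
        zify [le_of_lt h₁₂, hl2] at this
        exact this
      have : ((r : ℤ) + s) * q₂ ≤ (p : ℤ) * q₂ := by nlinarith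
      have hfin : (r : ℤ) + s ≤ p := by
        have hq2 : (0 : ℤ) < q₂ := by exact_mod_cast hq₂
        exact le_of_mul_le_mul_right this hq2
      exact_mod_cast hfin
    simp only [lineD, Finset.mem_filter, Finset.mem_product, Finset.mem_range, Nat.lt_succ_iff]
    refine ⟨⟨?_, ?_⟩, hsum, heq, hds⟩
    · exact le_trans (Nat.le_add_right r s) hsum
    · exact le_trans (Nat.le_add_left s r) hsum
  · intro rs hrs
    simp only [lineD, Finset.mem_filter, Finset.mem_product, Finset.mem_range] at hrs
    obtain ⟨⟨hr, hs⟩, hle, heq, hd⟩ := hrs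
    have hsub : l * p - rs.1 * q₁ = rs.2 * q₂ := by
      apply Nat.sub_eq_of_eq_add
      rw [← heq]; ring
    have : (l * p - rs.1 * q₁) / q₂ = rs.2 := by
      rw [hsub, Nat.mul_div_cancel _ hq₂]
    rw [this]
  · intro r hr
    rfl

lemma apCount (q M c n : ℕ) (hM : 0 < M) (hcop : Nat.Coprime q M) :
    ∃ ε ≤ 1, ((Finset.range n).filter (fun r => r * q ≡ c [MOD M])).card = n / M + ε := by
  haveI : NeZero M := ⟨hM.ne'⟩
  set u : (ZMod M)ˣ := ZMod.unitOfCoprime q hcop with hu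
  set v : ZMod M := (c : ZMod M) * ↑u⁻¹ with hv
  have hchar : ∀ r : ℕ, (r * q ≡ c [MOD M]) ↔ (r ≡ v.val [MOD M]) := by
    intro r
    rw [← ZMod.natCast_eq_natCast_iff, ← ZMod.natCast_eq_natCast_iff]
    push_cast
    rw [ZMod.natCast_rightInverse v]
    have hq : ((q : ZMod M)) = (u : ZMod M) := (ZMod.coe_unitOfCoprime q hcop).symm
    rw [hq, hv]
    exact ⟨fun h => by rw [Units.eq_mul_inv_iff_mul_eq]; exact h,
           fun h => by rwa [Units.eq_mul_inv_iff_mul_eq] at h⟩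
  have hfe : ((Finset.range n).filter (fun r => r * q ≡ c [MOD M])) =
      ((Finset.range n).filter (fun r => r ≡ v.val [MOD M])) := by
    apply Finset.filter_congr
    intro x _
    simp [hchar x]
  rw [hfe, ← Nat.count_eq_card_filter_range, Nat.count_modEq_card n hM]
  refine ⟨if v.val % M < n % M then 1 else 0, ?_, rfl⟩
  split <;> omega

noncomputable def wfun (q₁ q₂ l : ℕ) : ℝ :=
  min ((l : ℝ) / q₁) (((q₂ - l : ℕ) : ℝ) / ((q₂ - q₁ : ℕ) : ℝ))

lemma natdiv_le (a b : ℕ) (hb : 0 < b) : ((a / b : ℕ) : ℝ) ≤ (a : ℝ) / b := by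
  rw [le_div_iff₀ (by exact_mod_cast hb)]
  exact_mod_cast Nat.div_mul_le_self a b

lemma natdiv_ge (a b : ℕ) (hb : 0 < b) : (a : ℝ) / b - 1 ≤ ((a / b : ℕ) : ℝ) := by
  rw [sub_le_iff_le_add, div_le_iff₀ (by exact_mod_cast hb : (0:ℝ) < b)]
  have h3 : a < (a / b + 1) * b := (Nat.div_lt_iff_lt_mul hb).mp (Nat.lt_succ_self _)
  have : (a : ℝ) < ((a / b : ℕ) + 1) * b := by exact_mod_cast h3
  linarith

lemma Abd_bounds (q₁ q₂ p l : ℕ) (h₁ : 0 < q₁) (h₁₂ : q₁ < q₂) :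
    (p : ℝ) * wfun q₁ q₂ l - 1 ≤ ((min (l * p / q₁) ((q₂ - l) * p / (q₂ - q₁)) : ℕ) : ℝ) ∧
    ((min (l * p / q₁) ((q₂ - l) * p / (q₂ - q₁)) : ℕ) : ℝ) ≤ (p : ℝ) * wfun q₁ q₂ l := by
  have hdq : 0 < q₂ - q₁ := by omega
  have e1 : (p : ℝ) * ((l : ℝ) / q₁) = ((l * p : ℕ) : ℝ) / q₁ := by push_cast; ring
  have e2 : (p : ℝ) * (((q₂ - l : ℕ) : ℝ) / ((q₂ - q₁ : ℕ) : ℝ))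
      = (((q₂ - l) * p : ℕ) : ℝ) / ((q₂ - q₁ : ℕ) : ℝ) := by push_cast; ring
  rw [wfun, mul_min_of_nonneg _ _ (by positivity), e1, e2, Nat.cast_min]
  constructor
  · rw [← min_sub_sub_right]
    exact min_le_min (natdiv_ge _ _ h₁) (natdiv_ge _ _ hdq)
  · exact min_le_min (natdiv_le _ _ h₁) (natdiv_le _ _ hdq)

lemma lineEst (q₁ q₂ p l d : ℕ) (h₁ : 0 < q₁) (h₁₂ : q₁ < q₂) (hl2 : l ≤ q₂)
    (hd : 0 < d) (hcop : Nat.Coprime q₁ (d * q₂)) :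
    |((lineD q₁ q₂ p l d).card : ℝ) - (p : ℝ) * wfun q₁ q₂ l / (d * q₂)| ≤ 2 := by
  have hq₂ : 0 < q₂ := h₁.trans h₁₂
  have hM : 0 < d * q₂ := Nat.mul_pos hd hq₂
  set A := min (l * p / q₁) ((q₂ - l) * p / (q₂ - q₁)) with hA
  obtain ⟨ε, hε, hcard⟩ := apCount q₁ (d * q₂) (l * p) (A + 1) hM hcop
  rw [lineCardEq q₁ q₂ p l d h₁ h₁₂ hl2, hcard]
  obtain ⟨hA1, hA2⟩ := Abd_bounds q₁ q₂ p l h₁ h₁₂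
  have hD1 : (1 : ℝ) ≤ (d * q₂ : ℕ) := by exact_mod_cast hM
  have hD0 : (0 : ℝ) < (d * q₂ : ℕ) := by exact_mod_cast hM
  have hX1 : (((A + 1) / (d * q₂) : ℕ) : ℝ) ≤ ((A : ℝ) + 1) / (d * q₂ : ℕ) := by
    have := natdiv_le (A + 1) (d * q₂) hM
    push_cast at this ⊢
    convert this using 2
  have hX2 : ((A : ℝ) + 1) / ((d * q₂ : ℕ) : ℝ) - 1 ≤ (((A + 1) / (d * q₂) : ℕ) : ℝ) := by
    have := natdiv_ge (A + 1) (d * q₂) hM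
    push_cast at this ⊢
    convert this using 2
  have hεR : (0 : ℝ) ≤ (ε : ℝ) ∧ (ε : ℝ) ≤ 1 := ⟨by positivity, by exact_mod_cast hε⟩
  have hcast : ((d : ℝ) * q₂) = ((d * q₂ : ℕ) : ℝ) := by push_cast; ring
  rw [abs_le]
  push_cast
  rw [hcast]
  set X := (((A + 1) / (d * q₂) : ℕ) : ℝ) with hXdef
  set W := (p : ℝ) * wfun q₁ q₂ l with hWdef
  set D := ((d * q₂ : ℕ) : ℝ) with hDdef
  have k1 : W / D ≤ ((A : ℝ) + 1) / D :=
    div_le_div_of_nonneg_right (by linarith) hD0.le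
  have k2 : ((A : ℝ) + 1) / D ≤ (W + 1) / D :=
    div_le_div_of_nonneg_right (by linarith) hD0.le
  have k3 : (W + 1) / D = W / D + 1 / D := by ring
  have k4 : 1 / D ≤ 1 := by
    rw [div_le_one hD0]; exact hD1
  constructor <;> linarith [hεR.1, hεR.2]

lemma sum_range_real (m : ℕ) : ∑ j ∈ range m, (j : ℝ) = m * ((m : ℝ) - 1) / 2 := by
  induction m with
  | zero => simp
  | succ n ih => rw [Finset.sum_range_succ, ih]; push_cast; ring

lemma sum_Icc_id_real (n : ℕ) : ∑ l ∈ Icc 1 n, (l : ℝ) = n * ((n : ℝ) + 1) / 2 := by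
  induction n with
  | zero => simp
  | succ n ih => rw [Finset.sum_Icc_succ_top (by omega), ih]; push_cast; ring

lemma sum_Icc_rev_real (a b : ℕ) (h : a ≤ b) :
    ∑ l ∈ Icc (a + 1) b, ((b - l : ℕ) : ℝ) = ((b : ℝ) - a) * ((b : ℝ) - a - 1) / 2 := by
  rw [Finset.sum_nbij' (i := fun l => b - l) (j := fun j => b - j)
    (t := range (b - a)) (g := fun j => (j : ℝ))]
  · rw [sum_range_real]
    have : ((b - a : ℕ) : ℝ) = (b : ℝ) - a := by
      push_cast [h]; ring
    rw [this]
  · intro x hx; simp only [mem_Icc] at hx; simp only [mem_range]; omega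
  · intro x hx; simp only [mem_range] at hx; simp only [mem_Icc]; omega
  · intro x hx; simp only [mem_Icc] at hx; omega
  · intro x hx; simp only [mem_range] at hx; omega
  · intro x hx; rfl

lemma sum_odd_Icc1 (a : ℕ) :
    ∑ l ∈ (Icc 1 (2 * a + 1)).filter (fun l => Odd l), (l : ℝ) = ((a : ℝ) + 1) ^ 2 := by
  rw [Finset.sum_nbij' (i := fun l => l / 2) (j := fun i => 2 * i + 1)
    (t := range (a + 1)) (g := fun i => 2 * (i : ℝ) + 1)]
  · rw [Finset.sum_add_distrib, ← Finset.mul_sum, sum_range_real]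
    simp only [Finset.sum_const, card_range, nsmul_eq_mul, mul_one]
    push_cast; ring
  · intro x hx; simp only [mem_filter, mem_Icc, Nat.odd_iff] at hx
    simp only [mem_range]; omega
  · intro x hx; simp only [mem_range] at hx
    simp only [mem_filter, mem_Icc, Nat.odd_iff]; omega
  · intro x hx; simp only [mem_filter, mem_Icc, Nat.odd_iff] at hx; omega
  · intro x hx; simp only [mem_range] at hx; omega
  · intro x hx; simp only [mem_filter, mem_Icc, Nat.odd_iff] at hx
    have h2 : x = 2 * (x / 2) + 1 := by omega
    conv_lhs => rw [h2]
    push_cast; ring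

lemma sum_odd_rev (a k : ℕ) :
    ∑ l ∈ (Icc (2 * a + 2) (2 * a + 1 + 2 * k)).filter (fun l => Odd l),
      ((2 * a + 1 + 2 * k - l : ℕ) : ℝ) = (k : ℝ) * ((k : ℝ) - 1) := by
  rw [Finset.sum_nbij' (i := fun l => (2 * a + 1 + 2 * k - l) / 2)
    (j := fun j => 2 * a + 1 + 2 * (k - j)) (t := range k) (g := fun j => 2 * (j : ℝ))]
  · rw [← Finset.mul_sum, sum_range_real]; ring
  · intro x hx; simp only [mem_filter, mem_Icc, Nat.odd_iff] at hx
    simp only [mem_range]; omega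
  · intro x hx; simp only [mem_range] at hx
    simp only [mem_filter, mem_Icc, Nat.odd_iff]; omega
  · intro x hx; simp only [mem_filter, mem_Icc, Nat.odd_iff] at hx; omega
  · intro x hx; simp only [mem_range] at hx; omega
  · intro x hx; simp only [mem_filter, mem_Icc, Nat.odd_iff] at hx
    have h2 : (2 * a + 1 + 2 * k - x) = 2 * ((2 * a + 1 + 2 * k - x) / 2) := by omega
    conv_lhs => rw [h2]
    push_cast; ring

lemma wfun_left (q₁ q₂ l : ℕ) (h₁ : 0 < q₁) (h₁₂ : q₁ < q₂) (hl : l ≤ q₁) :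
    wfun q₁ q₂ l = (l : ℝ) / q₁ := by
  have h2 : ((q₂ - l : ℕ) : ℝ) = (q₂ : ℝ) - l := by push_cast [le_trans hl h₁₂.le]; ring
  have h3 : ((q₂ - q₁ : ℕ) : ℝ) = (q₂ : ℝ) - q₁ := by push_cast [h₁₂.le]; ring
  rw [wfun, h2, h3, min_eq_left]
  rw [div_le_div_iff₀ (by exact_mod_cast h₁) (by
    have : (q₁:ℝ) < q₂ := by exact_mod_cast h₁₂
    linarith)]
  have hc1 : (l : ℝ) ≤ q₁ := by exact_mod_cast hl
  have hc2 : (0 : ℝ) ≤ q₂ := by positivity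
  nlinarith

lemma wfun_right (q₁ q₂ l : ℕ) (h₁ : 0 < q₁) (h₁₂ : q₁ < q₂) (hl : q₁ ≤ l) (hl2 : l ≤ q₂) :
    wfun q₁ q₂ l = ((q₂ - l : ℕ) : ℝ) / ((q₂ - q₁ : ℕ) : ℝ) := by
  have h2 : ((q₂ - l : ℕ) : ℝ) = (q₂ : ℝ) - l := by push_cast [hl2]; ring
  have h3 : ((q₂ - q₁ : ℕ) : ℝ) = (q₂ : ℝ) - q₁ := by push_cast [h₁₂.le]; ring
  rw [wfun, h2, h3, min_eq_right]
  rw [div_le_div_iff₀ (by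
    have : (q₁:ℝ) < q₂ := by exact_mod_cast h₁₂
    linarith) (by exact_mod_cast h₁)]
  have hc1 : (q₁ : ℝ) ≤ l := by exact_mod_cast hl
  have hc2 : (l : ℝ) ≤ q₂ := by exact_mod_cast hl2
  nlinarith

lemma Wsum (a k : ℕ) (hk : 0 < k) :
    ∑ l ∈ Icc 1 (2 * a + 1 + 2 * k), wfun (2 * a + 1) (2 * a + 1 + 2 * k) l
      = ((2 * a + 1 + 2 * k : ℕ) : ℝ) / 2 := by
  set q₁ := 2 * a + 1
  set q₂ := 2 * a + 1 + 2 * k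
  have h₁ : 0 < q₁ := by omega
  have h₁₂ : q₁ < q₂ := by omega
  have hsplit : ∑ l ∈ Icc 1 q₂, wfun q₁ q₂ l
      = ∑ l ∈ Icc 1 q₁, wfun q₁ q₂ l + ∑ l ∈ Icc (q₁+1) q₂, wfun q₁ q₂ l := by
    have g1 : Icc 1 q₂ = Ioc 0 q₂ := by ext x; simp [mem_Icc, mem_Ioc]; omega
    have g2 : Icc 1 q₁ = Ioc 0 q₁ := by ext x; simp [mem_Icc, mem_Ioc]; omega
    have g3 : Icc (q₁+1) q₂ = Ioc q₁ q₂ := by ext x; simp [mem_Icc, mem_Ioc]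
    rw [g1, g2, g3]
    exact (Finset.sum_Ioc_consecutive _ (by omega) (by omega)).symm
  rw [hsplit]
  have e1 : ∑ l ∈ Icc 1 q₁, wfun q₁ q₂ l = ∑ l ∈ Icc 1 q₁, (l : ℝ) / q₁ := by
    apply Finset.sum_congr rfl
    intro l hl
    simp only [mem_Icc] at hl
    exact wfun_left q₁ q₂ l h₁ h₁₂ hl.2
  have e2 : ∑ l ∈ Icc (q₁+1) q₂, wfun q₁ q₂ l
      = ∑ l ∈ Icc (q₁+1) q₂, ((q₂ - l : ℕ) : ℝ) / ((q₂ - q₁ : ℕ) : ℝ) := by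
    apply Finset.sum_congr rfl
    intro l hl
    simp only [mem_Icc] at hl
    exact wfun_right q₁ q₂ l h₁ h₁₂ (by omega) hl.2
  rw [e1, e2]
  rw [← Finset.sum_div, ← Finset.sum_div, sum_Icc_id_real, sum_Icc_rev_real q₁ q₂ h₁₂.le]
  have hc : ((q₂ - q₁ : ℕ) : ℝ) = (q₂ : ℝ) - q₁ := by push_cast [h₁₂.le]; ring
  rw [hc]
  have hq2 : ((q₁ : ℕ) : ℝ) = 2 * a + 1 := by push_cast [q₁]; ring
  have hq3 : ((q₂ : ℕ) : ℝ) = 2 * a + 1 + 2 * k := by push_cast [q₂]; ring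
  rw [hq2, hq3]
  have hkR : (0:ℝ) < k := by exact_mod_cast hk
  field_simp
  ring

lemma Wsum' (a k : ℕ) (hk : 0 < k) :
    ∑ l ∈ (Icc 1 (2 * a + 1 + 2 * k)).filter (fun l => Odd l),
        wfun (2 * a + 1) (2 * a + 1 + 2 * k) l
      = ((a : ℝ) + 1) ^ 2 / (2 * (a:ℝ) + 1) + ((k : ℝ) - 1) / 2 := by
  set q₁ := 2 * a + 1 with hq₁def
  set q₂ := 2 * a + 1 + 2 * k with hq₂def
  have h₁ : 0 < q₁ := by omega
  have h₁₂ : q₁ < q₂ := by omega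
  have hsplit : (Icc 1 q₂).filter (fun l => Odd l)
      = (Icc 1 q₁).filter (fun l => Odd l) ∪ (Icc (q₁+1) q₂).filter (fun l => Odd l) := by
    ext x
    simp only [mem_filter, mem_Icc, mem_union, Nat.odd_iff]
    omega
  rw [hsplit, Finset.sum_union (by
    rw [Finset.disjoint_left]
    intro x hx hy
    simp only [mem_filter, mem_Icc] at hx hy
    omega)]
  have e1 : ∑ l ∈ (Icc 1 q₁).filter (fun l => Odd l), wfun q₁ q₂ l
      = ∑ l ∈ (Icc 1 q₁).filter (fun l => Odd l), (l : ℝ) / q₁ := by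
    apply Finset.sum_congr rfl
    intro l hl
    simp only [mem_filter, mem_Icc] at hl
    exact wfun_left q₁ q₂ l h₁ h₁₂ hl.1.2
  have e2 : ∑ l ∈ (Icc (q₁+1) q₂).filter (fun l => Odd l), wfun q₁ q₂ l
      = ∑ l ∈ (Icc (q₁+1) q₂).filter (fun l => Odd l),
          ((q₂ - l : ℕ) : ℝ) / ((q₂ - q₁ : ℕ) : ℝ) := by
    apply Finset.sum_congr rfl
    intro l hl
    simp only [mem_filter, mem_Icc] at hl
    exact wfun_right q₁ q₂ l h₁ h₁₂ (by omega) hl.1.2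
  rw [e1, e2, ← Finset.sum_div, ← Finset.sum_div]
  have g1 : ∑ l ∈ (Icc 1 q₁).filter (fun l => Odd l), (l : ℝ) = ((a : ℝ) + 1) ^ 2 :=
    sum_odd_Icc1 a
  have g2 : ∑ l ∈ (Icc (q₁+1) q₂).filter (fun l => Odd l), ((q₂ - l : ℕ) : ℝ)
      = (k : ℝ) * ((k : ℝ) - 1) := by
    have : Icc (q₁ + 1) q₂ = Icc (2 * a + 2) (2 * a + 1 + 2 * k) := by
      rw [hq₁def, hq₂def]
    rw [this]
    exact sum_odd_rev a k
  rw [g1, g2]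
  have hc : ((q₂ - q₁ : ℕ) : ℝ) = 2 * (k : ℝ) := by
    have : q₂ - q₁ = 2 * k := by omega
    rw [this]; push_cast; ring
  have hq2 : ((q₁ : ℕ) : ℝ) = 2 * (a:ℝ) + 1 := by rw [hq₁def]; push_cast; ring
  rw [hc, hq2]
  have hkR : (0:ℝ) < k := by exact_mod_cast hk
  field_simp

end Aux

theorem stmt_17 (q₁ q₂ : ℕ) (h₁ : 0 < q₁) (h₁₂ : q₁ < q₂)
    (hcop : Nat.Coprime q₁ q₂) (hodd₁ : Odd q₁) (hodd₂ : Odd q₂)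
    (Npos N : ℕ → ℕ)
    (hNpos : ∀ p, Npos p =
      ((Finset.range (p + 1) ×ˢ Finset.range (p + 1)).filter fun rs =>
        rs.1 + rs.2 ≤ p ∧ 0 < rs.1 * q₁ + rs.2 * q₂ ∧ p ∣ rs.1 * q₁ + rs.2 * q₂ ∧
          Odd (rs.2 + Nat.gcd rs.1 (Nat.gcd rs.2 ((rs.1 * q₁ + rs.2 * q₂) / p)))).card)
    (hN : ∀ p, N p =
      ((Finset.range (p + 1) ×ˢ Finset.range (p + 1)).filter fun rs =>
        rs.1 + rs.2 ≤ p ∧ 0 < rs.1 * q₁ + rs.2 * q₂ ∧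
          p ∣ rs.1 * q₁ + rs.2 * q₂).card) :
    Tendsto (fun p : ℕ => (Npos p : ℝ) / (N p : ℝ)) atTop
      (nhds ((q₁ * q₂ + 1) / (4 * q₁ * q₂))) := by
  have hq₂ : 0 < q₂ := h₁.trans h₁₂
  have hq₂R : (0:ℝ) < q₂ := by exact_mod_cast hq₂
  have hq₁R : (0:ℝ) < q₁ := by exact_mod_cast h₁
  obtain ⟨aa, haa⟩ : ∃ aa, q₁ = 2 * aa + 1 :=
    ⟨q₁ / 2, by have := Nat.odd_iff.mp hodd₁; omega⟩
  obtain ⟨k, hk, hq2⟩ : ∃ k, 0 < k ∧ q₂ = 2 * aa + 1 + 2 * k :=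
    ⟨(q₂ - q₁) / 2, by have h2 := Nat.odd_iff.mp hodd₂; omega⟩
  set β : ℝ := (((aa : ℝ) + 1) ^ 2 / (2 * (aa:ℝ) + 1) + ((k : ℝ) - 1) / 2) / (2 * (q₂:ℝ))
    with hβdef
  have hcop1 : Nat.Coprime q₁ (1 * q₂) := by rwa [one_mul]
  have hcop2 : Nat.Coprime q₁ (2 * q₂) := by
    refine Nat.Coprime.mul_right ?_ hcop
    rw [Nat.coprime_comm, Nat.Prime.coprime_iff_not_dvd Nat.prime_two]
    have := Nat.odd_iff.mp hodd₁
    omega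
  -- Step 1 : N p as a sum over lines
  have hNline : ∀ p, 0 < p → N p = ∑ l ∈ Icc 1 q₂, (lineD q₁ q₂ p l 1).card := by
    intro p hp
    rw [hN p]
    have hdec : ((Finset.range (p + 1) ×ˢ Finset.range (p + 1)).filter fun rs =>
        rs.1 + rs.2 ≤ p ∧ 0 < rs.1 * q₁ + rs.2 * q₂ ∧ p ∣ rs.1 * q₁ + rs.2 * q₂ ∧ True).card
      = ∑ l ∈ Icc 1 q₂,
          ((Finset.range (p + 1) ×ˢ Finset.range (p + 1)).filter fun rs =>
            rs.1 + rs.2 ≤ p ∧ rs.1 * q₁ + rs.2 * q₂ = l * p ∧ True).card :=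
      decompGen q₁ q₂ p h₁₂ hp (fun _ _ => True)
    have e1 : ((Finset.range (p + 1) ×ˢ Finset.range (p + 1)).filter fun rs =>
        rs.1 + rs.2 ≤ p ∧ 0 < rs.1 * q₁ + rs.2 * q₂ ∧ p ∣ rs.1 * q₁ + rs.2 * q₂)
        = ((Finset.range (p + 1) ×ˢ Finset.range (p + 1)).filter fun rs =>
        rs.1 + rs.2 ≤ p ∧ 0 < rs.1 * q₁ + rs.2 * q₂ ∧ p ∣ rs.1 * q₁ + rs.2 * q₂ ∧ True) := by
      apply Finset.filter_congr
      intro x _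
      simp
    rw [e1, hdec]
    apply Finset.sum_congr rfl
    intro l _
    congr 1
    apply Finset.filter_congr
    intro x _
    simp [lineD]
  -- Step 2 : Npos p as a sum over odd lines
  have hNposline : ∀ p, 0 < p →
      Npos p = ∑ l ∈ (Icc 1 q₂).filter (fun l => Odd l), (lineD q₁ q₂ p l 2).card := by
    intro p hp
    have hdec : ((Finset.range (p + 1) ×ˢ Finset.range (p + 1)).filter fun rs =>
        rs.1 + rs.2 ≤ p ∧ 0 < rs.1 * q₁ + rs.2 * q₂ ∧ p ∣ rs.1 * q₁ + rs.2 * q₂ ∧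
          Odd (rs.2 + Nat.gcd rs.1 (Nat.gcd rs.2 ((rs.1 * q₁ + rs.2 * q₂) / p)))).card
      = ∑ l ∈ Icc 1 q₂,
          ((Finset.range (p + 1) ×ˢ Finset.range (p + 1)).filter fun rs =>
            rs.1 + rs.2 ≤ p ∧ rs.1 * q₁ + rs.2 * q₂ = l * p ∧
              Odd (rs.2 + Nat.gcd rs.1 (Nat.gcd rs.2 l))).card :=
      decompGen q₁ q₂ p h₁₂ hp (fun rs l => Odd (rs.2 + Nat.gcd rs.1 (Nat.gcd rs.2 l)))
    rw [hNpos p, hdec, Finset.sum_filter]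
    apply Finset.sum_congr rfl
    intro l _
    by_cases hOl : Odd l
    · rw [if_pos hOl]
      congr 1
      apply Finset.filter_congr
      intro x hx
      simp only [lineD, parity_iff]
      constructor
      · rintro ⟨h1, h2, h3, _⟩
        exact ⟨h1, h2, (even_iff_two_dvd).mp h3⟩
      · rintro ⟨h1, h2, h3⟩
        exact ⟨h1, h2, (even_iff_two_dvd).mpr h3, Or.inr hOl⟩
    · rw [if_neg hOl]
      rw [Finset.card_eq_zero, Finset.filter_eq_empty_iff]
      rintro x hx ⟨hle, heq, hP⟩
      rw [parity_iff] at hP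
      obtain ⟨hEs, hOr⟩ := hP
      rcases hOr with hOr | hOl' 
      · have hodd : Odd (x.1 * q₁ + x.2 * q₂) := (hOr.mul hodd₁).add_even (hEs.mul_right q₂)
        have heven : Even (l * p) := by
          have : Even l := Nat.not_odd_iff_even.mp hOl
          exact this.mul_right p
        rw [heq] at hodd
        exact (Nat.not_odd_iff_even.mpr heven) hodd
      · exact hOl hOl'
  -- Step 3 : estimates
  have estN : ∀ p : ℕ, 0 < p → |(N p : ℝ) - p * (1/2)| ≤ 2 * q₂ + 1 := by
    intro p hp
    rw [hNline p hp]
    have hsumval : ∑ l ∈ Icc 1 q₂, (p : ℝ) * wfun q₁ q₂ l / ((1:ℕ) * q₂) = p * (1/2) := by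
      rw [← Finset.sum_div, ← Finset.mul_sum]
      have : ∑ l ∈ Icc 1 q₂, wfun q₁ q₂ l = (q₂ : ℝ) / 2 := by
        rw [haa, hq2, Wsum aa k hk, ← hq2]
      rw [this]
      push_cast
      field_simp
    have key : |∑ l ∈ Icc 1 q₂, ((lineD q₁ q₂ p l 1).card : ℝ)
        - ∑ l ∈ Icc 1 q₂, (p : ℝ) * wfun q₁ q₂ l / ((1:ℕ) * q₂)| ≤ 2 * q₂ := by
      rw [← Finset.sum_sub_distrib]
      calc |∑ l ∈ Icc 1 q₂, (((lineD q₁ q₂ p l 1).card : ℝ)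
            - (p : ℝ) * wfun q₁ q₂ l / ((1:ℕ) * q₂))|
          ≤ ∑ l ∈ Icc 1 q₂, |((lineD q₁ q₂ p l 1).card : ℝ)
            - (p : ℝ) * wfun q₁ q₂ l / ((1:ℕ) * q₂)| := Finset.abs_sum_le_sum_abs _ _
        _ ≤ ∑ l ∈ Icc 1 q₂, 2 := by
            apply Finset.sum_le_sum
            intro l hl
            simp only [mem_Icc] at hl
            exact lineEst q₁ q₂ p l 1 h₁ h₁₂ hl.2 one_pos hcop1
        _ = 2 * q₂ := by
            rw [Finset.sum_const, Nat.card_Icc]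
            simp [mul_comm]
    rw [← hsumval]
    push_cast at key ⊢
    linarith [key]
  have estNpos : ∀ p : ℕ, 0 < p → |(Npos p : ℝ) - p * β| ≤ 2 * q₂ + 1 := by
    intro p hp
    rw [hNposline p hp]
    set F := (Icc 1 q₂).filter (fun l => Odd l) with hF
    have hFsub : F.card ≤ q₂ := by
      calc F.card ≤ (Icc 1 q₂).card := Finset.card_filter_le _ _
        _ = q₂ := by rw [Nat.card_Icc]; omega
    have hsumval : ∑ l ∈ F, (p : ℝ) * wfun q₁ q₂ l / ((2:ℕ) * q₂) = p * β := by
      rw [← Finset.sum_div, ← Finset.mul_sum]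
      have : ∑ l ∈ F, wfun q₁ q₂ l
          = ((aa : ℝ) + 1) ^ 2 / (2 * (aa:ℝ) + 1) + ((k : ℝ) - 1) / 2 := by
        rw [hF, haa, hq2]
        exact Wsum' aa k hk
      rw [this, hβdef]
      push_cast
      field_simp
    have key : |∑ l ∈ F, ((lineD q₁ q₂ p l 2).card : ℝ)
        - ∑ l ∈ F, (p : ℝ) * wfun q₁ q₂ l / ((2:ℕ) * q₂)| ≤ 2 * q₂ := by
      rw [← Finset.sum_sub_distrib]
      calc |∑ l ∈ F, (((lineD q₁ q₂ p l 2).card : ℝ)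
            - (p : ℝ) * wfun q₁ q₂ l / ((2:ℕ) * q₂))|
          ≤ ∑ l ∈ F, |((lineD q₁ q₂ p l 2).card : ℝ)
            - (p : ℝ) * wfun q₁ q₂ l / ((2:ℕ) * q₂)| := Finset.abs_sum_le_sum_abs _ _
        _ ≤ ∑ l ∈ F, 2 := by
            apply Finset.sum_le_sum
            intro l hl
            simp only [hF, mem_filter, mem_Icc] at hl
            exact lineEst q₁ q₂ p l 2 h₁ h₁₂ hl.1.2 two_pos hcop2
        _ = 2 * F.card := by rw [Finset.sum_const]; simp [mul_comm]
        _ ≤ 2 * q₂ := by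
            have := hFsub
            push_cast
            exact_mod_cast Nat.mul_le_mul_left 2 this
    rw [← hsumval]
    push_cast at key ⊢
    linarith [key]
  -- Step 4 : limits
  have tend1 : Tendsto (fun p : ℕ => (N p : ℝ) / p) atTop (nhds (1/2)) := by
    rw [← tendsto_sub_nhds_zero_iff]
    apply squeeze_zero_norm' (a := fun p : ℕ => (2 * (q₂:ℝ) + 1) / (p:ℝ))
    · filter_upwards [eventually_ge_atTop 1] with p hp
      have hpR : (0:ℝ) < p := by exact_mod_cast hp
      have : (N p : ℝ) / p - 1/2 = ((N p : ℝ) - p * (1/2)) / p := by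
        rw [eq_div_iff hpR.ne', sub_mul, div_mul_cancel₀ _ hpR.ne']; ring
      rw [Real.norm_eq_abs, this, abs_div, abs_of_pos hpR]
      apply div_le_div_of_nonneg_right (estN p hp) hpR.le
    · exact tendsto_const_div_atTop_nhds_zero_nat _
  have tend2 : Tendsto (fun p : ℕ => (Npos p : ℝ) / p) atTop (nhds β) := by
    rw [← tendsto_sub_nhds_zero_iff]
    apply squeeze_zero_norm' (a := fun p : ℕ => (2 * (q₂:ℝ) + 1) / (p:ℝ))
    · filter_upwards [eventually_ge_atTop 1] with p hp
      have hpR : (0:ℝ) < p := by exact_mod_cast hp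
      have : (Npos p : ℝ) / p - β = ((Npos p : ℝ) - p * β) / p := by
        rw [eq_div_iff hpR.ne', sub_mul, div_mul_cancel₀ _ hpR.ne']; ring
      rw [Real.norm_eq_abs, this, abs_div, abs_of_pos hpR]
      apply div_le_div_of_nonneg_right (estNpos p hp) hpR.le
    · exact tendsto_const_div_atTop_nhds_zero_nat _
  have tend3 : Tendsto (fun p : ℕ => ((Npos p : ℝ) / p) / ((N p : ℝ) / p)) atTop
      (nhds (β / (1/2))) := tend2.div tend1 (by norm_num)
  have heq : (fun p : ℕ => ((Npos p : ℝ) / p) / ((N p : ℝ) / p))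
      =ᶠ[atTop] (fun p : ℕ => (Npos p : ℝ) / (N p : ℝ)) := by
    filter_upwards [eventually_ge_atTop 1] with p hp
    have hpR : (p:ℝ) ≠ 0 := by positivity
    exact div_div_div_cancel_right₀ hpR _ _
  have tend4 := tend3.congr' heq
  have hval : β / (1/2) = ((q₁:ℝ) * q₂ + 1) / (4 * q₁ * q₂) := by
    rw [hβdef]
    have c1 : (q₁ : ℝ) = 2 * (aa:ℝ) + 1 := by rw [haa]; push_cast; ring
    have c2 : (q₂ : ℝ) = 2 * (aa:ℝ) + 1 + 2 * k := by rw [hq2]; push_cast; ring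
    rw [c1, c2]
    have h1 : (2 * (aa:ℝ) + 1) ≠ 0 := by positivity
    have h2 : (2 * (aa:ℝ) + 1 + 2 * k) ≠ 0 := by positivity
    field_simp
    ring
  rwa [hval] at tend4
end

section
/- Fix coprime integers 0 < q_1 < q_2 with q_1 odd and q_2 even. For each p, let N⁺(p) be the number of pairs (r,s) of nonnegative integers with r + s ≤ p, p | (r q_1 + s q_2), l := (r q_1 + s q_2)/p > 0, and gcd(r, s, l) odd, and let N(p) be the total number of such pairs with l > 0. Then N⁺(p)/N(p) → (3 q_1 (q_2 - q_1) + 1)/(4 q_1 (q_2 - q_1)) as p → ∞. -/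
/-!
Write `r q₁ + s q₂ = l p`. The pairs with `gcd (r, s, l)` even are exactly the doubles of the pairs
counted in the smaller triangle `r + s ≤ ⌊p / 2⌋`, so `N⁺(p) = N(p) - E(p)`. Both counts are
estimated line by line: on the line `r q₁ + s q₂ = l p` the admissible `r` form one residue class
modulo `q₂` (as `q₁` is invertible mod `q₂`) in an interval of length
`min (l p / q₁) ((n q₂ - l p) / (q₂ - q₁))`. Up to `O(1)` errors, `N(p)` and `E(p)` are therefore
`p / q₂` times sums of a tent function over `l`, giving `N(p) ~ p / 2` and, since `q₁` is odd and
`q₂ = 2 t` is even so that the peak of the tent over `1, …, t` falls halfway between two integers,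
`E(p) ~ p (q₁ (q₂ - q₁) - 1) / (8 q₁ (q₂ - q₁))`.
-/

open Finset Filter Topology

section

variable (q₁ q₂ : ℕ)

def divisiblePairs (p n : ℕ) : Finset (ℕ × ℕ) :=
  (range (n + 1) ×ˢ range (n + 1)).filter fun rs =>
    rs.1 + rs.2 ≤ n ∧ 0 < rs.1 * q₁ + rs.2 * q₂ ∧ p ∣ rs.1 * q₁ + rs.2 * q₂

def linePairs (n m : ℕ) : Finset (ℕ × ℕ) :=
  (range (n + 1) ×ˢ range (n + 1)).filter fun rs => rs.1 + rs.2 ≤ n ∧ rs.1 * q₁ + rs.2 * q₂ = m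

variable {q₁ q₂}

@[simp]
lemma mem_divisiblePairs {p n r s : ℕ} :
    (r, s) ∈ divisiblePairs q₁ q₂ p n ↔
      r + s ≤ n ∧ 0 < r * q₁ + s * q₂ ∧ p ∣ r * q₁ + s * q₂ := by
  simp only [divisiblePairs, mem_filter, mem_product, mem_range, and_iff_right_iff_imp]
  intro h; omega

@[simp]
lemma mem_linePairs {n m r s : ℕ} :
    (r, s) ∈ linePairs q₁ q₂ n m ↔ r + s ≤ n ∧ r * q₁ + s * q₂ = m := by
  simp only [linePairs, mem_filter, mem_product, mem_range, and_iff_right_iff_imp]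
  intro h; omega

lemma dvd_two_mul_and_two_dvd_div_iff {p X : ℕ} : p ∣ 2 * X ∧ 2 ∣ 2 * X / p ↔ p ∣ X := by
  have key (h : p ∣ 2 * X) : 2 ∣ 2 * X / p ↔ p ∣ X := by
    rw [Nat.dvd_div_iff_mul_dvd h, mul_comm, Nat.mul_dvd_mul_iff_left two_pos]
  exact ⟨fun ⟨h, h2⟩ => (key h).1 h2, fun h => ⟨h.mul_left 2, (key (h.mul_left 2)).2 h⟩⟩

lemma double_mem_divisiblePairs_and_even_iff {p n r s : ℕ} :
    (2 * r, 2 * s) ∈ divisiblePairs q₁ q₂ p n ∧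
        Even (Nat.gcd (2 * r) (Nat.gcd (2 * s) ((2 * r * q₁ + 2 * s * q₂) / p))) ↔
      (r, s) ∈ divisiblePairs q₁ q₂ p (n / 2) := by
  have hX : 2 * r * q₁ + 2 * s * q₂ = 2 * (r * q₁ + s * q₂) := by ring
  have hn : 2 * r + 2 * s ≤ n ↔ r + s ≤ n / 2 := by omega
  simp only [mem_divisiblePairs, hX, hn, even_iff_two_dvd, Nat.dvd_gcd_iff, dvd_mul_right,
    true_and, Nat.ofNat_pos, mul_pos_iff_of_pos_left]
  rw [← dvd_two_mul_and_two_dvd_div_iff (X := r * q₁ + s * q₂)]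
  tauto

lemma card_filter_odd_add_card_half (p n : ℕ) :
    #{rs ∈ divisiblePairs q₁ q₂ p n |
        Odd (Nat.gcd rs.1 (Nat.gcd rs.2 ((rs.1 * q₁ + rs.2 * q₂) / p)))} +
      #(divisiblePairs q₁ q₂ p (n / 2)) = #(divisiblePairs q₁ q₂ p n) := by
  rw [← card_filter_add_card_filter_not (s := divisiblePairs q₁ q₂ p n)
    (fun rs => Odd (Nat.gcd rs.1 (Nat.gcd rs.2 ((rs.1 * q₁ + rs.2 * q₂) / p))))]
  congr 1
  have hdouble : {rs ∈ divisiblePairs q₁ q₂ p n |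
      ¬Odd (Nat.gcd rs.1 (Nat.gcd rs.2 ((rs.1 * q₁ + rs.2 * q₂) / p)))} =
      (divisiblePairs q₁ q₂ p (n / 2)).image fun rs => (2 * rs.1, 2 * rs.2) := by
    ext ⟨r, s⟩
    simp only [mem_filter, mem_image, Nat.not_odd_iff_even, Prod.exists, Prod.mk.injEq]
    constructor
    · rintro ⟨h, heven⟩
      have h2 := even_iff_two_dvd.1 heven
      obtain ⟨a, rfl⟩ := h2.trans (Nat.gcd_dvd_left _ _)
      obtain ⟨b, rfl⟩ := (h2.trans (Nat.gcd_dvd_right _ _)).trans (Nat.gcd_dvd_left _ _)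
      exact ⟨a, b, double_mem_divisiblePairs_and_even_iff.1 ⟨h, heven⟩, rfl, rfl⟩
    · rintro ⟨a, b, h, rfl, rfl⟩
      exact double_mem_divisiblePairs_and_even_iff.2 h
  rw [hdouble, card_image_of_injective]
  intro x y h
  simp only [Prod.mk.injEq] at h
  exact Prod.ext (by omega) (by omega)

lemma divisiblePairs_eq_biUnion {p n L : ℕ} (hq : q₁ ≤ q₂) (hp : 0 < p)
    (hL : n * q₂ < (L + 1) * p) :
    divisiblePairs q₁ q₂ p n = (Ioc 0 L).biUnion fun l => linePairs q₁ q₂ n (l * p) := by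
  ext ⟨r, s⟩
  simp only [mem_divisiblePairs, mem_biUnion, mem_Ioc, mem_linePairs]
  constructor
  · rintro ⟨hn, hpos, l, hl⟩
    have hle : r * q₁ + s * q₂ ≤ n * q₂ := by
      nlinarith [Nat.mul_le_mul_left r hq, Nat.mul_le_mul_right q₂ hn]
    refine ⟨l, ⟨Nat.pos_of_ne_zero ?_, ?_⟩, hn, by rw [hl, mul_comm]⟩
    · rintro rfl; omega
    · exact Nat.lt_succ_iff.1 (Nat.lt_of_mul_lt_mul_right (a := p) (by nlinarith))
  · rintro ⟨l, ⟨hl, -⟩, hn, hX⟩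
    exact ⟨hn, hX ▸ Nat.mul_pos hl hp, l, by rw [hX, mul_comm]⟩

lemma card_divisiblePairs_eq_sum {p n L : ℕ} (hq : q₁ ≤ q₂) (hp : 0 < p)
    (hL : n * q₂ < (L + 1) * p) :
    #(divisiblePairs q₁ q₂ p n) = ∑ l ∈ Ioc 0 L, #(linePairs q₁ q₂ n (l * p)) := by
  rw [divisiblePairs_eq_biUnion hq hp hL, card_biUnion]
  intro l _ l' _ hne
  refine disjoint_left.2 fun ⟨r, s⟩ h h' => hne ?_
  rw [mem_coe, mem_linePairs] at *
  exact Nat.eq_of_mul_eq_mul_right hp (h.2.symm.trans h'.2)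


lemma abs_card_filter_modEq_sub_le {q : ℕ} (hq : 0 < q) (v B : ℕ) :
    |(#{r ∈ range B | r ≡ v [MOD q]} : ℝ) - B / q| ≤ 1 := by
  rw [← Nat.count_eq_card_filter_range, Nat.count_modEq_card B hq]
  have h₁ : ((B / q : ℕ) : ℝ) ≤ B / q := Nat.cast_div_le
  have h₂ : (B : ℝ) / q < (B / q : ℕ) + 1 := by
    rw [← Nat.floor_div_eq_div (K := ℝ)]; exact Nat.lt_floor_add_one _
  rw [abs_le]
  split_ifs <;> push_cast <;> constructor <;> linarith

lemma abs_card_filter_mul_modEq_sub_le (hcop : q₁.Coprime q₂) (hq₂ : 0 < q₂) (m B : ℕ) :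
    |(#{r ∈ range B | r * q₁ ≡ m [MOD q₂]} : ℝ) - B / q₂| ≤ 1 := by
  obtain ⟨v, -, hv⟩ := Nat.exists_mul_mod_eq_of_coprime m hcop hq₂.ne'
  have hv : v * q₁ ≡ m [MOD q₂] := by rw [mul_comm]; exact hv
  have hcongr (r : ℕ) : r * q₁ ≡ m [MOD q₂] ↔ r ≡ v [MOD q₂] :=
    ⟨fun h => Nat.ModEq.cancel_right_of_coprime hcop.symm (h.trans hv.symm),
      fun h => (h.mul_right q₁).trans hv⟩
  simp_rw [hcongr]
  exact abs_card_filter_modEq_sub_le hq₂ v B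

variable (q₁ q₂) in
/-- `tent q₁ q₂ (n * q₂) m` is the largest real `r` such that `(r, (m - r q₁) / q₂)` lies in the
triangle `r, s ≥ 0, r + s ≤ n`. -/
noncomputable def tent (c x : ℝ) : ℝ := min (x / q₁) ((c - x) / (q₂ - q₁))

lemma tent_nonneg (hq : q₁ ≤ q₂) {c x : ℝ} (hx : 0 ≤ x) (hxc : x ≤ c) : 0 ≤ tent q₁ q₂ c x :=
  le_min (div_nonneg hx q₁.cast_nonneg)
    (div_nonneg (sub_nonneg.2 hxc) (sub_nonneg.2 (by exact_mod_cast hq)))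

lemma tent_mul_mul {a : ℝ} (ha : 0 ≤ a) (c x : ℝ) :
    tent q₁ q₂ (a * c) (a * x) = a * tent q₁ q₂ c x := by
  rw [tent, tent, ← mul_sub, mul_div_assoc, mul_div_assoc, mul_min_of_nonneg _ _ ha]

lemma tent_of_mul_le (hq₁ : 0 < q₁) (hq : q₁ < q₂) {c x : ℝ} (h : x * q₂ ≤ c * q₁) :
    tent q₁ q₂ c x = x / q₁ := by
  refine min_eq_left ?_
  rw [div_le_div_iff₀ (by exact_mod_cast hq₁) (sub_pos.2 (by exact_mod_cast hq))]
  linarith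

lemma tent_of_le_mul (hq₁ : 0 < q₁) (hq : q₁ < q₂) {c x : ℝ} (h : c * q₁ ≤ x * q₂) :
    tent q₁ q₂ c x = (c - x) / (q₂ - q₁) := by
  refine min_eq_right ?_
  rw [div_le_div_iff₀ (sub_pos.2 (by exact_mod_cast hq)) (by exact_mod_cast hq₁)]
  linarith

lemma abs_max_zero_tent_sub_tent_le (hq : q₁ < q₂) {c c' x : ℝ} (h : 0 ≤ tent q₁ q₂ c' x) :
    |max 0 (tent q₁ q₂ c x) - tent q₁ q₂ c' x| ≤ |c - c'| / (q₂ - q₁) := by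
  have hb : (0 : ℝ) < q₂ - q₁ := sub_pos.2 (by exact_mod_cast hq)
  calc |max 0 (tent q₁ q₂ c x) - tent q₁ q₂ c' x|
      = |max (tent q₁ q₂ c x) 0 - max (tent q₁ q₂ c' x) 0| := by
        rw [max_comm, max_eq_left h]
    _ ≤ |tent q₁ q₂ c x - tent q₁ q₂ c' x| := abs_max_sub_max_le_abs _ _ _
    _ ≤ max |x / q₁ - x / q₁| |(c - x) / (q₂ - q₁) - (c' - x) / (q₂ - q₁)| :=
        abs_min_sub_min_le_max _ _ _ _
    _ = |c - c'| / (q₂ - q₁) := by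
        rw [sub_self, abs_zero, ← sub_div, sub_sub_sub_cancel_right, abs_div, abs_of_pos hb,
          max_eq_right (by positivity)]

lemma natCast_le_tent_iff (hq₁ : 0 < q₁) (hq : q₁ < q₂) {n m r : ℕ} :
    (r : ℝ) ≤ tent q₁ q₂ (n * q₂) m ↔ r * q₁ ≤ m ∧ r * q₂ + m ≤ n * q₂ + r * q₁ := by
  have hb : (0 : ℝ) < q₂ - q₁ := sub_pos.2 (by exact_mod_cast hq)
  rw [tent, le_min_iff, le_div_iff₀ (by exact_mod_cast hq₁), le_div_iff₀ hb]
  refine and_congr (by norm_cast) ?_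
  rw [← @Nat.cast_le ℝ]
  push_cast
  constructor <;> intro h <;> linarith

lemma card_linePairs_eq (hq₁ : 0 < q₁) (hq : q₁ < q₂) {n m : ℕ} (hm : m ≤ n * q₂) :
    #(linePairs q₁ q₂ n m) =
      #{r ∈ range (⌊tent q₁ q₂ (n * q₂) m⌋₊ + 1) | r * q₁ ≡ m [MOD q₂]} := by
  have hq₂ : 0 < q₂ := hq₁.trans hq
  have hT : 0 ≤ tent q₁ q₂ (n * q₂) m :=
    tent_nonneg hq.le m.cast_nonneg (by exact_mod_cast hm)
  have hrange (r : ℕ) :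
      r < ⌊tent q₁ q₂ (n * q₂) m⌋₊ + 1 ↔ r * q₁ ≤ m ∧ r * q₂ + m ≤ n * q₂ + r * q₁ := by
    rw [Nat.lt_succ_iff, Nat.le_floor_iff hT, natCast_le_tent_iff hq₁ hq]
  refine card_nbij' Prod.fst (fun r => (r, (m - r * q₁) / q₂)) ?_ ?_ ?_ ?_
  · rintro ⟨r, s⟩ h
    rw [mem_coe, mem_linePairs] at h
    obtain ⟨hn, rfl⟩ := h
    simp only [mem_coe, mem_filter, mem_range, hrange]
    have := Nat.mul_le_mul_right q₂ hn
    rw [add_mul] at this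
    refine ⟨⟨by omega, by omega⟩, ?_⟩
    show r * q₁ % q₂ = (r * q₁ + s * q₂) % q₂
    rw [Nat.add_mul_mod_self_right]
  · intro r h
    simp only [mem_coe, mem_filter, mem_range, hrange] at h
    obtain ⟨⟨h₁, h₂⟩, hmod⟩ := h
    have hs : (m - r * q₁) / q₂ * q₂ = m - r * q₁ :=
      Nat.div_mul_cancel ((Nat.modEq_iff_dvd' h₁).1 hmod)
    rw [mem_coe, mem_linePairs]
    refine ⟨Nat.le_of_mul_le_mul_right ?_ hq₂, by omega⟩
    rw [add_mul]; omega
  · rintro ⟨r, s⟩ h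
    rw [mem_coe, mem_linePairs] at h
    obtain ⟨-, rfl⟩ := h
    simp [Nat.mul_div_cancel _ hq₂]
  · intro r _
    rfl

lemma abs_card_linePairs_sub_le (hq₁ : 0 < q₁) (hq : q₁ < q₂) (hcop : q₁.Coprime q₂) (n m : ℕ) :
    |(#(linePairs q₁ q₂ n m) : ℝ) - max 0 (tent q₁ q₂ (n * q₂) m) / q₂| ≤ 2 := by
  have hq₂ : (1 : ℝ) ≤ q₂ := by exact_mod_cast hq₁.trans hq
  rcases le_or_gt m (n * q₂) with hm | hm
  · set T := tent q₁ q₂ (n * q₂) m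
    have hT : 0 ≤ T := tent_nonneg hq.le m.cast_nonneg (by exact_mod_cast hm)
    have hfloor : |((⌊T⌋₊ + 1 : ℕ) : ℝ) / q₂ - T / q₂| ≤ 1 := by
      have hq₂' : (0 : ℝ) < q₂ := by linarith
      rw [← sub_div, abs_div, abs_of_pos hq₂', div_le_one hq₂']
      refine (abs_le.2 ⟨?_, ?_⟩).trans hq₂ <;>
        push_cast <;> linarith [Nat.floor_le hT, Nat.lt_floor_add_one T]
    rw [card_linePairs_eq hq₁ hq hm, max_eq_right hT]
    calc _ ≤ _ := abs_sub_le _ (((⌊T⌋₊ + 1 : ℕ) : ℝ) / q₂) _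
      _ ≤ 1 + 1 := add_le_add (abs_card_filter_mul_modEq_sub_le hcop (hq₁.trans hq) m _) hfloor
      _ = 2 := by norm_num
  · have hempty : linePairs q₁ q₂ n m = ∅ := by
      refine eq_empty_iff_forall_notMem.2 fun ⟨r, s⟩ h => ?_
      rw [mem_linePairs] at h
      nlinarith [Nat.mul_le_mul_left r hq.le, Nat.mul_le_mul_right q₂ h.1]
    have hT : tent q₁ q₂ (n * q₂) m ≤ 0 :=
      (min_le_right _ _).trans (div_nonpos_of_nonpos_of_nonneg
        (sub_nonpos.2 (by exact_mod_cast hm.le)) (sub_nonneg.2 (by exact_mod_cast hq.le)))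
    simp [hempty, max_eq_left hT]

lemma abs_card_divisiblePairs_sub_le (hq₁ : 0 < q₁) (hq : q₁ < q₂) (hcop : q₁.Coprime q₂)
    {p n L : ℕ} {K : ℝ} (hp : 0 < p) (hL : n * q₂ < (L + 1) * p)
    (hK : |(n * q₂ : ℝ) - p * L| ≤ K) :
    |(#(divisiblePairs q₁ q₂ p n) : ℝ) - p * ((∑ l ∈ Ioc 0 L, tent q₁ q₂ L l) / q₂)| ≤
      L * (2 + K) := by
  have hq₂ : (0 : ℝ) < q₂ := by exact_mod_cast hq₁.trans hq
  have hb : (1 : ℝ) ≤ q₂ - q₁ := by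
    have : (q₁ : ℝ) + 1 ≤ q₂ := by exact_mod_cast hq
    linarith
  rw [card_divisiblePairs_eq_sum hq.le hp hL, Nat.cast_sum, sum_div, mul_sum, ← sum_sub_distrib]
  refine (abs_sum_le_sum_abs _ _).trans ?_
  rw [show (L : ℝ) * (2 + K) = ∑ _l ∈ Ioc 0 L, (2 + K) by simp [mul_add]]
  refine sum_le_sum fun l hl => ?_
  have hlL : (l : ℝ) ≤ L := by exact_mod_cast (mem_Ioc.1 hl).2
  have htent : 0 ≤ tent q₁ q₂ (p * L) (p * l) := by
    rw [tent_mul_mul p.cast_nonneg]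
    exact mul_nonneg p.cast_nonneg (tent_nonneg hq.le l.cast_nonneg hlL)
  have hscale : (p : ℝ) * (tent q₁ q₂ L l / q₂) = tent q₁ q₂ (p * L) (p * l) / q₂ := by
    rw [tent_mul_mul p.cast_nonneg, mul_div_assoc]
  calc _ ≤ |(#(linePairs q₁ q₂ n (l * p)) : ℝ) - max 0 (tent q₁ q₂ (n * q₂) (l * p : ℕ)) / q₂| +
        |max 0 (tent q₁ q₂ (n * q₂) (l * p : ℕ)) / q₂ - p * (tent q₁ q₂ L l / q₂)| :=
        abs_sub_le _ _ _
    _ ≤ 2 + K := by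
      refine add_le_add (abs_card_linePairs_sub_le hq₁ hq hcop n (l * p)) ?_
      rw [hscale, Nat.cast_mul, mul_comm (l : ℝ), ← sub_div, abs_div, abs_of_pos hq₂]
      calc _ ≤ |(n * q₂ : ℝ) - p * L| / (q₂ - q₁) / q₂ := by
            gcongr
            exact abs_max_zero_tent_sub_tent_le hq htent
        _ ≤ |(n * q₂ : ℝ) - p * L| := by
            rw [div_div]
            exact div_le_self (abs_nonneg _) (one_le_mul_of_one_le_of_one_le hb (by linarith))
        _ ≤ K := hK

lemma tendsto_div_natCast_of_abs_sub_le {x : ℕ → ℝ} {C K : ℝ}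
    (h : ∀ᶠ p in atTop, |x p - p * C| ≤ K) :
    Tendsto (fun p : ℕ => x p / p) atTop (𝓝 C) := by
  rw [← tendsto_sub_nhds_zero_iff]
  refine squeeze_zero_norm' ?_ (tendsto_const_div_atTop_nhds_zero_nat K)
  filter_upwards [h, eventually_gt_atTop 0] with p hK hp
  have hp' : (0 : ℝ) < p := by exact_mod_cast hp
  rw [Real.norm_eq_abs, show x p / p - C = (x p - p * C) / p by field_simp, abs_div,
    abs_of_pos hp']
  gcongr

lemma tendsto_card_divisiblePairs_div (hq₁ : 0 < q₁) (hq : q₁ < q₂) (hcop : q₁.Coprime q₂)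
    {n : ℕ → ℕ} {L : ℕ} {K : ℝ}
    (h : ∀ᶠ p in atTop, n p * q₂ < (L + 1) * p ∧ |(n p * q₂ : ℝ) - p * L| ≤ K) :
    Tendsto (fun p : ℕ => (#(divisiblePairs q₁ q₂ p (n p)) : ℝ) / p) atTop
      (𝓝 ((∑ l ∈ Ioc 0 L, tent q₁ q₂ L l) / q₂)) := by
  refine tendsto_div_natCast_of_abs_sub_le (K := L * (2 + K)) ?_
  filter_upwards [h, eventually_gt_atTop 0] with p ⟨hL, hK⟩ hp
  exact abs_card_divisiblePairs_sub_le hq₁ hq hcop hp hL hK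

lemma sum_Ioc_natCast (n : ℕ) : ∑ l ∈ Ioc 0 n, (l : ℝ) = n * (n + 1) / 2 := by
  induction n with
  | zero => simp
  | succ n ih => rw [sum_Ioc_succ_top n.zero_le, ih]; push_cast; ring

lemma sum_Ioc_tent (hq₁ : 0 < q₁) (hq : q₁ < q₂) {a d c : ℕ} (hc : a + d = c)
    (hsplit : ∀ l : ℕ, l * q₂ ≤ c * q₁ ↔ l ≤ a) :
    ∑ l ∈ Ioc 0 c, tent q₁ q₂ c l = a * (a + 1) / (2 * q₁) + d * (d - 1) / (2 * (q₂ - q₁)) := by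
  have hsplitR (l : ℕ) : (l : ℝ) * q₂ ≤ c * q₁ ↔ l ≤ a := by norm_cast; exact hsplit l
  have hleft : ∑ l ∈ Ioc 0 a, tent q₁ q₂ c l = ∑ l ∈ Ioc 0 a, (l : ℝ) / q₁ :=
    sum_congr rfl fun l hl => tent_of_mul_le hq₁ hq ((hsplitR l).2 (mem_Ioc.1 hl).2)
  have hright : ∑ l ∈ Ioc a c, tent q₁ q₂ c l = ∑ l ∈ Ioc a c, ((c : ℝ) - l) / (q₂ - q₁) :=
    sum_congr rfl fun l hl => tent_of_le_mul hq₁ hq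
      (le_of_not_ge fun h => by have := (hsplitR l).1 h; have := (mem_Ioc.1 hl).1; omega)
  have hgauss : ∑ l ∈ Ioc a c, (l : ℝ) = c * (c + 1) / 2 - a * (a + 1) / 2 := by
    rw [← sum_Ioc_natCast, ← sum_Ioc_natCast, ← sum_Ioc_consecutive _ a.zero_le (by omega),
      add_sub_cancel_left]
  have hb : (q₂ : ℝ) - q₁ ≠ 0 := (sub_pos.2 (by exact_mod_cast hq)).ne'
  have hq₁' : (q₁ : ℝ) ≠ 0 := by exact_mod_cast hq₁.ne'
  rw [← sum_Ioc_consecutive _ a.zero_le (by omega), hleft, hright, ← sum_div, ← sum_div,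
    sum_sub_distrib, sum_const, Nat.card_Ioc, sum_Ioc_natCast, hgauss, ← hc]
  field_simp
  push_cast [Nat.add_sub_cancel_left]
  ring

lemma tendsto_card_divisiblePairs_self_div (hq₁ : 0 < q₁) (hq : q₁ < q₂) (hcop : q₁.Coprime q₂) :
    Tendsto (fun p : ℕ => (#(divisiblePairs q₁ q₂ p p) : ℝ) / p) atTop (𝓝 (1 / 2)) := by
  have hq₂ : 0 < q₂ := hq₁.trans hq
  have hsplit (l : ℕ) : l * q₂ ≤ q₂ * q₁ ↔ l ≤ q₁ := by
    rw [mul_comm q₂]; exact Nat.mul_le_mul_right_iff hq₂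
  have hsum : (∑ l ∈ Ioc 0 q₂, tent q₁ q₂ q₂ l) / q₂ = 1 / 2 := by
    rw [sum_Ioc_tent hq₁ hq (Nat.add_sub_of_le hq.le) hsplit, Nat.cast_sub hq.le]
    have hb : (q₂ : ℝ) - q₁ ≠ 0 := (sub_pos.2 (by exact_mod_cast hq)).ne'
    have hq₁' : (q₁ : ℝ) ≠ 0 := by exact_mod_cast hq₁.ne'
    have hq₂' : (q₂ : ℝ) ≠ 0 := by exact_mod_cast hq₂.ne'
    field_simp
    ring
  rw [← hsum]
  refine tendsto_card_divisiblePairs_div hq₁ hq hcop (K := 0) ?_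
  filter_upwards [eventually_gt_atTop 0] with p hp
  exact ⟨by nlinarith, by simp [mul_comm]⟩

lemma tendsto_card_divisiblePairs_half_div (hq₁ : 0 < q₁) (hq : q₁ < q₂) (hcop : q₁.Coprime q₂)
    (hodd : Odd q₁) (heven : Even q₂) :
    Tendsto (fun p : ℕ => (#(divisiblePairs q₁ q₂ p (p / 2)) : ℝ) / p) atTop
      (𝓝 ((q₁ * ((q₂ : ℝ) - q₁) - 1) / (8 * q₁ * ((q₂ : ℝ) - q₁)))) := by
  obtain ⟨k, hk⟩ := hodd
  obtain ⟨t, ht⟩ := heven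
  obtain ⟨d, hd⟩ : ∃ d, t = k + d := ⟨t - k, by omega⟩
  have hsplit (l : ℕ) : l * q₂ ≤ t * q₁ ↔ l ≤ k := by
    rw [ht, hk, show l * (t + t) = t * (2 * l) by ring, Nat.mul_le_mul_left_iff (by omega)]
    omega
  have hsum : (∑ l ∈ Ioc 0 t, tent q₁ q₂ t l) / q₂ =
      (q₁ * ((q₂ : ℝ) - q₁) - 1) / (8 * q₁ * ((q₂ : ℝ) - q₁)) := by
    rw [sum_Ioc_tent hq₁ hq hd.symm hsplit]
    have hd1 : (1 : ℝ) ≤ d := by exact_mod_cast (show 1 ≤ d by omega)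
    have hq₁' : (q₁ : ℝ) = 2 * k + 1 := by exact_mod_cast hk
    have hq₂' : (q₂ : ℝ) = 2 * (k + d) := by rw [ht, hd]; push_cast; ring
    rw [hq₁', hq₂', show 2 * ((k : ℝ) + d) - (2 * k + 1) = 2 * d - 1 by ring]
    have h₁ : (2 * k + 1 : ℝ) ≠ 0 := by positivity
    have h₂ : (2 * d - 1 : ℝ) ≠ 0 := by linarith
    have h₃ : ((k : ℝ) + d) ≠ 0 := by positivity
    field_simp
    ring
  rw [← hsum]
  refine tendsto_card_divisiblePairs_div hq₁ hq hcop (K := t) ?_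
  filter_upwards [eventually_gt_atTop 0] with p hp
  have h₁ : (2 * (p / 2 : ℕ) : ℝ) ≤ p := by exact_mod_cast Nat.mul_div_le p 2
  have h₂ : (p : ℝ) ≤ 2 * (p / 2 : ℕ) + 1 := by exact_mod_cast (by omega : p ≤ 2 * (p / 2) + 1)
  have ht' : (q₂ : ℝ) = t + t := by exact_mod_cast ht
  refine ⟨by rw [ht]; nlinarith [Nat.mul_div_le p 2], ?_⟩
  rw [ht', abs_le]
  constructor <;> nlinarith [t.cast_nonneg (α := ℝ)]

end

theorem stmt_18 (q₁ q₂ : ℕ) (h₁ : 0 < q₁) (h₁₂ : q₁ < q₂)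
    (hcop : Nat.Coprime q₁ q₂) (hodd₁ : Odd q₁) (heven₂ : Even q₂)
    (Npos N : ℕ → ℕ)
    (hNpos : ∀ p, Npos p =
      ((Finset.range (p + 1) ×ˢ Finset.range (p + 1)).filter fun rs =>
        rs.1 + rs.2 ≤ p ∧ 0 < rs.1 * q₁ + rs.2 * q₂ ∧ p ∣ rs.1 * q₁ + rs.2 * q₂ ∧
          Odd (Nat.gcd rs.1 (Nat.gcd rs.2 ((rs.1 * q₁ + rs.2 * q₂) / p)))).card)
    (hN : ∀ p, N p =
      ((Finset.range (p + 1) ×ˢ Finset.range (p + 1)).filter fun rs =>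
        rs.1 + rs.2 ≤ p ∧ 0 < rs.1 * q₁ + rs.2 * q₂ ∧
          p ∣ rs.1 * q₁ + rs.2 * q₂).card) :
    Tendsto (fun p : ℕ => (Npos p : ℝ) / (N p : ℝ)) atTop
      (nhds ((3 * q₁ * ((q₂ : ℝ) - q₁) + 1) / (4 * q₁ * ((q₂ : ℝ) - q₁)))) := by
  have hN' (p : ℕ) : N p = #(divisiblePairs q₁ q₂ p p) := hN p
  have hNpos' (p : ℕ) : (Npos p : ℝ) = N p - #(divisiblePairs q₁ q₂ p (p / 2)) := by
    rw [hNpos, hN', ← card_filter_odd_add_card_half p p, divisiblePairs, filter_filter]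
    simp only [and_assoc, Nat.cast_add, add_sub_cancel_right]
  have hlim := ((tendsto_card_divisiblePairs_self_div h₁ h₁₂ hcop).sub
    (tendsto_card_divisiblePairs_half_div h₁ h₁₂ hcop hodd₁ heven₂)).div
    (tendsto_card_divisiblePairs_self_div h₁ h₁₂ hcop) (by norm_num)
  have hb : (q₂ : ℝ) - q₁ ≠ 0 := (sub_pos.2 (by exact_mod_cast h₁₂)).ne'
  have hq₁ : (q₁ : ℝ) ≠ 0 := by exact_mod_cast h₁.ne'
  convert hlim.congr' ?_ using 2
  · field_simp
    ring
  · filter_upwards [eventually_ne_atTop 0] with p hp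
    simp only [Pi.div_apply]
    rw [← sub_div, div_div_div_cancel_right₀ (by exact_mod_cast hp), hNpos', hN']
end
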